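/- arXiv:2507.05080 — 12 statements merged into one kernel-verified Lean document; each statement's English description precedes it below -/
import Mathlib

section
/- Let g:[a,b]→ℝ be a derivator. Every g-continuous function h:[a,b]→ℝ can be written as h = f∘g, where f:g([a,b])→ℝ is continuous (with respect to the standard topology on g([a,b])⊆ℝ). Moreover, if h is uniformly g-continuous then f may be taken uniformly continuous. -/
open MeasureTheory Set Filter

/-- Uniform `g`-continuity of `f` on `[a,b]`. -/
def UnifGCont (g : ℝ → ℝ) (a b : ℝ) (f : ℝ → ℝ) : Prop :=
  ∀ ε > 0, ∃ δ > 0, ∀ x ∈ Set.Icc a b, ∀ y ∈ Set.Icc a b,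
    |g x - g y| < δ → |f x - f y| < ε

/-- Every `g`-continuous function `h : [a,b] → ℝ` factors as `h = f ∘ g` with `f`
continuous on `g([a,b])`; if moreover `h` is uniformly `g`-continuous, `f` can be
taken uniformly continuous on `g([a,b])`. -/
theorem gContinuous_factors_through_g
    (a b : ℝ) (hab : a ≤ b) (g : ℝ → ℝ)
    (hmono : MonotoneOn g (Set.Icc a b))
    (hlc : ∀ x ∈ Set.Ioc a b, ContinuousWithinAt g (Set.Iio x) x)
    (h : ℝ → ℝ)
    (hgc : ∀ x ∈ Set.Icc a b, ∀ ε > 0, ∃ δ > 0, ∀ y ∈ Set.Icc a b,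
      |g x - g y| < δ → |h x - h y| < ε) :
    (∃ f : ℝ → ℝ, ContinuousOn f (g '' Set.Icc a b) ∧
      ∀ x ∈ Set.Icc a b, h x = f (g x)) ∧
    (UnifGCont g a b h → ∃ f : ℝ → ℝ, UniformContinuousOn f (g '' Set.Icc a b) ∧
      ∀ x ∈ Set.Icc a b, h x = f (g x)) := by
  classical
  -- well-definedness: g x = g y → h x = h y
  have hwd : ∀ x ∈ Set.Icc a b, ∀ y ∈ Set.Icc a b, g x = g y → h x = h y := by
    intro x hx y hy hxy
    by_contra hne
    have hpos : 0 < |h x - h y| := abs_pos.mpr (sub_ne_zero.mpr fun e => hne e)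
    obtain ⟨δ, hδ, hδ'⟩ := hgc x hx _ hpos
    have : |h x - h y| < |h x - h y| := hδ' y hy (by rw [hxy]; simpa using hδ)
    exact lt_irrefl _ this
  set f : ℝ → ℝ := fun t =>
    if ht : ∃ x, x ∈ Set.Icc a b ∧ g x = t then h ht.choose else 0 with hf
  have hfval : ∀ x ∈ Set.Icc a b, f (g x) = h x := by
    intro x hx
    have hex : ∃ y, y ∈ Set.Icc a b ∧ g y = g x := ⟨x, hx, rfl⟩
    simp only [hf, dif_pos hex]
    exact hwd _ hex.choose_spec.1 x hx hex.choose_spec.2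
  refine ⟨⟨f, ?_, fun x hx => (hfval x hx).symm⟩,
    fun hu => ⟨f, ?_, fun x hx => (hfval x hx).symm⟩⟩
  · rw [Metric.continuousOn_iff]
    rintro t ⟨x, hx, rfl⟩ ε hε
    obtain ⟨δ, hδ, hδ'⟩ := hgc x hx ε hε
    refine ⟨δ, hδ, ?_⟩
    rintro s ⟨y, hy, rfl⟩ hdist
    rw [hfval x hx, hfval y hy, Real.dist_eq]
    rw [Real.dist_eq] at hdist
    have := hδ' y hy (by rw [abs_sub_comm]; exact hdist)
    rwa [abs_sub_comm]
  · rw [Metric.uniformContinuousOn_iff]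
    intro ε hε
    obtain ⟨δ, hδ, hδ'⟩ := hu ε hε
    refine ⟨δ, hδ, ?_⟩
    rintro s ⟨x, hx, rfl⟩ t ⟨y, hy, rfl⟩ hdist
    rw [hfval x hx, hfval y hy, Real.dist_eq]
    rw [Real.dist_eq] at hdist
    exact hδ' x hx y hy hdist
end

section
/- Let g:[a,b]→ℝ be a derivator. The map sending f to f∘g is an isometric linear isomorphism from the space of uniformly continuous bounded functions on g([a,b]) (with the sup norm) onto the space of uniformly g-continuous functions on [a,b] (with the sup norm). -/
open MeasureTheory Set Filter

/-- If `h` is uniformly `g`-continuous, `h` factors through `g` pointwise: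
equal `g`-values give equal `h`-values. -/
lemma unifGCont_eq_of_eq {g : ℝ → ℝ} {a b : ℝ} {h : ℝ → ℝ}
    (hh : UnifGCont g a b h) {x y : ℝ} (hx : x ∈ Set.Icc a b) (hy : y ∈ Set.Icc a b)
    (hxy : g x = g y) : h x = h y := by
  have : ∀ ε > 0, |h x - h y| < ε := by
    intro ε hε
    obtain ⟨δ, hδ, H⟩ := hh ε hε
    exact H x hx y hy (by simp [hxy, hδ])
  have h0 : |h x - h y| ≤ 0 := by
    by_contra hc
    push_neg at hc
    exact absurd (this _ hc) (lt_irrefl _)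
  have := abs_eq_zero.mp (le_antisymm h0 (abs_nonneg _))
  linarith

/-- The (linear) map `f ↦ f ∘ g` is an isometric isomorphism from the space of
uniformly continuous bounded functions on `g([a,b])` (sup norm) onto the space of
uniformly `g`-continuous functions on `[a,b]` (sup norm): it is well defined,
norm-preserving (bounds correspond), injective, and surjective. -/
theorem comp_with_g_isometric_isomorphism
    (a b : ℝ) (hab : a ≤ b) (g : ℝ → ℝ)
    (hmono : MonotoneOn g (Set.Icc a b))
    (hlc : ∀ x ∈ Set.Ioc a b, ContinuousWithinAt g (Set.Iio x) x) :
    -- well defined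
    (∀ f : ℝ → ℝ, UniformContinuousOn f (g '' Set.Icc a b) →
      UnifGCont g a b (f ∘ g)) ∧
    -- isometric: sup-norm bounds correspond
    (∀ f : ℝ → ℝ, ∀ C : ℝ,
      (∀ y ∈ g '' Set.Icc a b, |f y| ≤ C) ↔ (∀ x ∈ Set.Icc a b, |(f ∘ g) x| ≤ C)) ∧
    -- injective
    (∀ f₁ f₂ : ℝ → ℝ, (∀ x ∈ Set.Icc a b, f₁ (g x) = f₂ (g x)) →
      Set.EqOn f₁ f₂ (g '' Set.Icc a b)) ∧
    -- surjective
    (∀ h : ℝ → ℝ, UnifGCont g a b h →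
      ∃ f : ℝ → ℝ, UniformContinuousOn f (g '' Set.Icc a b) ∧
        (∃ C : ℝ, ∀ y ∈ g '' Set.Icc a b, |f y| ≤ C) ∧
        ∀ x ∈ Set.Icc a b, h x = f (g x)) := by
  refine ⟨?_, ?_, ?_, ?_⟩
  · -- well defined
    intro f hf ε hε
    rw [Metric.uniformContinuousOn_iff] at hf
    obtain ⟨δ, hδ, H⟩ := hf ε hε
    refine ⟨δ, hδ, fun x hx y hy hxy => ?_⟩
    have := H (g x) ⟨x, hx, rfl⟩ (g y) ⟨y, hy, rfl⟩ (by rwa [Real.dist_eq])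
    rwa [Real.dist_eq] at this
  · -- isometric
    intro f C
    constructor
    · intro H x hx
      exact H (g x) ⟨x, hx, rfl⟩
    · rintro H y ⟨x, hx, rfl⟩
      exact H x hx
  · -- injective
    rintro f₁ f₂ H y ⟨x, hx, rfl⟩
    exact H x hx
  · -- surjective
    intro h hh
    classical
    set S := g '' Set.Icc a b with hS
    set f : ℝ → ℝ := fun y => if hy : y ∈ S then h hy.choose else 0 with hfdef
    have key : ∀ x ∈ Set.Icc a b, f (g x) = h x := by
      intro x hx
      have hmem : g x ∈ S := ⟨x, hx, rfl⟩
      have := hmem.choose_spec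
      simp only [hfdef, dif_pos hmem]
      exact unifGCont_eq_of_eq hh this.1 hx this.2
    have hfS : ∀ y (hy : y ∈ S), f y = h hy.choose := by
      intro y hy; simp [hfdef, dif_pos hy]
    have hUC : UniformContinuousOn f S := by
      rw [Metric.uniformContinuousOn_iff]
      intro ε hε
      obtain ⟨δ, hδ, H⟩ := hh ε hε
      refine ⟨δ, hδ, fun u hu v hv huv => ?_⟩
      obtain ⟨hx1, hx2⟩ := hu.choose_spec
      obtain ⟨hy1, hy2⟩ := hv.choose_spec
      rw [hfS u hu, hfS v hv, Real.dist_eq]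
      exact H _ hx1 _ hy1 (by rw [hx2, hy2, ← Real.dist_eq]; exact huv)
    refine ⟨f, hUC, ?_, fun x hx => (key x hx).symm⟩
    -- boundedness
    have hStb : TotallyBounded S := by
      have : S ⊆ Set.Icc (g a) (g b) := by
        rintro y ⟨x, hx, rfl⟩
        exact ⟨hmono (left_mem_Icc.mpr hab) hx hx.1, hmono hx (right_mem_Icc.mpr hab) hx.2⟩
      exact (isCompact_Icc.totallyBounded).subset this
    have hrestrict : UniformContinuous (S.restrict f) :=
      uniformContinuousOn_iff_restrict.mp hUC
    have hsub : TotallyBounded (univ : Set S) := by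
      have : TotallyBounded ((Subtype.val : S → ℝ) '' univ) := by
        rwa [Set.image_univ, Subtype.range_coe]
      exact (totallyBounded_image_iff
        isUniformEmbedding_subtype_val.isUniformInducing).mp this
    have himg : TotallyBounded (f '' S) := by
      have : TotallyBounded ((S.restrict f) '' univ) := hsub.image hrestrict
      rw [Set.image_univ] at this; rw [← Set.range_domRestrict]; exact this
    have hbdd : Bornology.IsBounded (f '' S) := himg.isBounded
    obtain ⟨C, hC⟩ := isBounded_iff_forall_norm_le.mp hbdd
    exact ⟨C, fun y hy => by simpa [Real.norm_eq_abs] using hC (f y) ⟨y, hy, rfl⟩⟩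
end

section
/- Let g:[a,b]→ℝ be a derivator and δ>0. Then there exists a finite partition a = x₀ < x₁ < ⋯ < x_m = b such that g(x_i) − g(x_{i−1}⁺) ≤ δ for every i = 1,…,m, where g(x⁺) denotes the right-hand limit of g at x. -/
open MeasureTheory Set Filter

/-- Basic facts about the right limit of a function monotone on `Icc a b`,
at a point of `Ico a b`. -/
lemma rightLim_facts {a b : ℝ} {g : ℝ → ℝ} (hmono : MonotoneOn g (Set.Icc a b))
    {c : ℝ} (hc : c ∈ Set.Ico a b) :
    Filter.Tendsto g (nhdsWithin c (Set.Ioi c)) (nhds (Function.rightLim g c)) ∧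
      g c ≤ Function.rightLim g c ∧
      ∀ z ∈ Set.Ioo c b, Function.rightLim g c ≤ g z := by
  have hne : (Set.Ioo c b).Nonempty := Set.nonempty_Ioo.2 hc.2
  have hsub : Set.Ioo c b ⊆ Set.Icc a b := fun z hz => ⟨hc.1.trans hz.1.le, hz.2.le⟩
  have mono' : MonotoneOn g (Set.Ioo c b) := hmono.mono hsub
  have hcmem : c ∈ Set.Icc a b := ⟨hc.1, hc.2.le⟩
  have bdd : BddBelow (g '' Set.Ioo c b) := by
    refine ⟨g c, ?_⟩
    rintro w ⟨z, hz, rfl⟩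
    exact hmono hcmem (hsub hz) hz.1.le
  have htend : Filter.Tendsto g (nhdsWithin c (Set.Ioi c)) (nhds (sInf (g '' Set.Ioo c b))) :=
    MonotoneOn.tendsto_nhdsWithin_Ioo_right hne mono' bdd
  have hrl : Function.rightLim g c = sInf (g '' Set.Ioo c b) :=
    rightLim_eq_of_tendsto (h := nhdsGT_neBot c) htend
  refine ⟨hrl ▸ htend, ?_, ?_⟩
  · rw [hrl]
    refine le_csInf (hne.image _) ?_
    rintro w ⟨z, hz, rfl⟩
    exact hmono hcmem (hsub hz) hz.1.le
  · intro z hz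
    rw [hrl]
    exact csInf_le bdd (Set.mem_image_of_mem _ hz)

lemma partition_aux (a b : ℝ) (hab : a < b) (g : ℝ → ℝ)
    (hmono : MonotoneOn g (Set.Icc a b))
    (hlc : ∀ x ∈ Set.Ioc a b, ContinuousWithinAt g (Set.Iio x) x)
    (δ : ℝ) (hδ : 0 < δ) :
    ∀ n : ℕ, ∀ c ∈ Set.Ico a b, g b - Function.rightLim g c ≤ n * δ →
      ∃ m : ℕ, ∃ x : ℕ → ℝ, x 0 = c ∧ x m = b ∧
        (∀ i < m, x i < x (i + 1)) ∧
        (∀ i < m, g (x (i + 1)) - Function.rightLim g (x i) ≤ δ) := by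
  -- helper: one-step partition when the gap is already ≤ δ
  have onestep : ∀ c ∈ Set.Ico a b, g b - Function.rightLim g c ≤ δ →
      ∃ m : ℕ, ∃ x : ℕ → ℝ, x 0 = c ∧ x m = b ∧
        (∀ i < m, x i < x (i + 1)) ∧
        (∀ i < m, g (x (i + 1)) - Function.rightLim g (x i) ≤ δ) := by
    intro c hc h
    refine ⟨1, fun i => if i = 0 then c else b, by simp, by simp, ?_, ?_⟩
    · intro i hi
      interval_cases i
      simpa using hc.2
    · intro i hi
      interval_cases i
      simpa using h
  intro n
  induction n with
  | zero =>
    intro c hc h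
    exact onestep c hc (h.trans (by simpa using hδ.le))
  | succ n ih =>
    intro c hc h
    by_cases hone : g b - Function.rightLim g c ≤ δ
    · exact onestep c hc hone
    push_neg at hone
    obtain ⟨htend, hle, hlb⟩ := rightLim_facts hmono hc
    set L := Function.rightLim g c with hL
    set S : Set ℝ := {z ∈ Set.Icc c b | g z ≤ L + δ} with hS
    -- S is nonempty with a point > c
    have hev : ∀ᶠ z in nhdsWithin c (Set.Ioi c), g z < L + δ :=
      htend (Iio_mem_nhds (by linarith))
    have hev2 : Set.Ioo c b ∈ nhdsWithin c (Set.Ioi c) := Ioo_mem_nhdsGT hc.2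
    obtain ⟨z, hz1, hz2⟩ := (hev.and (Filter.eventually_of_mem hev2 fun _ h => h)).exists
    have hzS : z ∈ S := ⟨⟨hz2.1.le, hz2.2.le⟩, hz1.le⟩
    have hSne : S.Nonempty := ⟨z, hzS⟩
    have hSbdd : BddAbove S := ⟨b, fun w hw => hw.1.2⟩
    set t := sSup S with ht
    have hct : c < z := hz2.1
    have hzt : z ≤ t := le_csSup hSbdd hzS
    have hct' : c < t := hct.trans_le hzt
    have htb : t ≤ b := csSup_le hSne fun w hw => hw.1.2
    have htIcc : t ∈ Set.Icc a b := ⟨hc.1.trans hct'.le, htb⟩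
    -- g t ≤ L + δ
    have hgt : g t ≤ L + δ := by
      by_cases htS : t ∈ S
      · exact htS.2
      · have hcl : t ∈ closure (S ∩ Set.Iio t) := by
          rw [Metric.mem_closure_iff]
          intro ε hε
          obtain ⟨s, hsS, hst⟩ := exists_lt_of_lt_csSup hSne (show t - ε < t by linarith)
          have hstl : s < t := lt_of_le_of_ne (le_csSup hSbdd hsS) (fun hst' => htS (hst' ▸ hsS))
          exact ⟨s, ⟨hsS, hstl⟩, by rw [Real.dist_eq]; rw [abs_lt]; constructor <;> linarith⟩
        have hnb : (nhdsWithin t (S ∩ Set.Iio t)).NeBot :=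
          mem_closure_iff_nhdsWithin_neBot.1 hcl
        have hcont : ContinuousWithinAt g (Set.Iio t) t :=
          hlc t ⟨hc.1.trans_lt hct', htb⟩
        have htend2 : Filter.Tendsto g (nhdsWithin t (S ∩ Set.Iio t)) (nhds (g t)) :=
          hcont.mono Set.inter_subset_right
        refine le_of_tendsto htend2 ?_
        filter_upwards [self_mem_nhdsWithin] with w hw
        exact hw.1.2
    rcases eq_or_lt_of_le htb with htb' | htb'
    · -- t = b : one step suffices
      refine onestep c hc ?_
      rw [← htb']
      linarith
    · -- t < b : recurse
      have htIco : t ∈ Set.Ico a b := ⟨htIcc.1, htb'⟩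
      obtain ⟨_, _, hlb2⟩ := rightLim_facts hmono htIco
      have hLt : L + δ ≤ Function.rightLim g t := by
        -- rightLim g t = sInf over Ioo t b; every z there has g z > L + δ
        obtain ⟨htend3, _, _⟩ := rightLim_facts hmono htIco
        refine ge_of_tendsto htend3 ?_
        have hmem : Set.Ioo t b ∈ nhdsWithin t (Set.Ioi t) := Ioo_mem_nhdsGT htb'
        filter_upwards [hmem] with w hw
        by_contra hcon
        push_neg at hcon
        have hwS : w ∈ S := ⟨⟨hct'.le.trans hw.1.le, hw.2.le⟩, hcon.le⟩
        exact absurd (le_csSup hSbdd hwS) (not_le.2 hw.1)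
      have hrec : g b - Function.rightLim g t ≤ n * δ := by
        have : (↑(n + 1) : ℝ) * δ = n * δ + δ := by push_cast; ring
        linarith [h, this ▸ h]
      obtain ⟨m, y, hy0, hym, hylt, hygap⟩ := ih t htIco hrec
      refine ⟨m + 1, fun i => if i = 0 then c else y (i - 1), by simp, by simp [hym], ?_, ?_⟩
      · intro i hi
        match i with
        | 0 => simpa [hy0] using hct'
        | (j+1) =>
          simp only [Nat.succ_ne_zero, if_false, Nat.add_sub_cancel]
          exact hylt j (by omega)
      · intro i hi
        match i with
        | 0 =>
          norm_num [hy0, ← hL]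
          linarith
        | (j+1) =>
          simp only [Nat.succ_ne_zero, if_false, Nat.add_sub_cancel]
          exact hygap j (by omega)

/-- For any derivator `g` on `[a,b]` and any `δ > 0` there is a finite partition
`a = x₀ < x₁ < ⋯ < x_m = b` with `g(xᵢ) − g(xᵢ₋₁⁺) ≤ δ` for every `i`. -/
theorem derivator_partition_exists
    (a b : ℝ) (hab : a ≤ b) (g : ℝ → ℝ)
    (hmono : MonotoneOn g (Set.Icc a b))
    (hlc : ∀ x ∈ Set.Ioc a b, ContinuousWithinAt g (Set.Iio x) x)
    (δ : ℝ) (hδ : 0 < δ) :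
    ∃ m : ℕ, ∃ x : ℕ → ℝ, x 0 = a ∧ x m = b ∧
      (∀ i < m, x i < x (i + 1)) ∧
      (∀ i < m, g (x (i + 1)) - Function.rightLim g (x i) ≤ δ) := by
  rcases eq_or_lt_of_le hab with rfl | hab'
  · exact ⟨0, fun _ => a, rfl, rfl, by omega, by omega⟩
  · obtain ⟨n, hn⟩ := exists_nat_ge ((g b - Function.rightLim g a) / δ)
    have hn' : g b - Function.rightLim g a ≤ n * δ := by
      rw [div_le_iff₀ hδ] at hn
      linarith
    exact partition_aux a b hab' g hmono hlc δ hδ n a ⟨le_refl a, hab'⟩ hn'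
end

section
/- Let g:[a,b]→ℝ be a continuous derivator with g(a)=0. Then the g-monomials satisfy g_{x₀,n}(x) = (g(x) − g(x₀))ⁿ for all x₀,x ∈ [a,b] and n ∈ ℕ, where g_{x₀,n} is defined by iterated Stieltjes integration: g_{x₀,0}≡1 and g_{x₀,n}(x) = n∫_{[x₀,x)} g_{x₀,n−1} dμ_g for x ≥ x₀. -/
open MeasureTheory Set Filter Topology

/-- The `g`-monomial of degree `n` centered at `x₀`, defined by iterated
Lebesgue–Stieltjes integration against `μ = μ_g`. -/
noncomputable def gMon (μ : Measure ℝ) (x₀ : ℝ) : ℕ → ℝ → ℝ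
  | 0 => fun _ => 1
  | n + 1 => fun x =>
      if x₀ ≤ x then ((n : ℝ) + 1) * ∫ t in Set.Ico x₀ x, gMon μ x₀ n t ∂μ
      else -(((n : ℝ) + 1) * ∫ t in Set.Ico x x₀, gMon μ x₀ n t ∂μ)

lemma crossing_aux {g : ℝ → ℝ} (hmono : Monotone g) (hcont : Continuous g) {c d : ℝ}
    (hcd : c ≤ d) :
    ∃ s : ℝ → ℝ, Monotone s ∧ ∀ w : ℝ, c ≤ s w ∧ s w ≤ d ∧
      g (s w) = max (min w (g d)) (g c) ∧ ∀ t ∈ Set.Ico c d, (w ≤ g t ↔ s w ≤ t) := by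
  set U : ℝ → Set ℝ := fun w => {t ∈ Set.Icc c d | w ≤ g t} ∪ {d} with hU
  have hdU : ∀ w, d ∈ U w := fun w => Or.inr rfl
  have hne : ∀ w, (U w).Nonempty := fun w => ⟨d, hdU w⟩
  have hlb : ∀ w, c ∈ lowerBounds (U w) := by
    rintro w t (⟨⟨h1, _⟩, _⟩ | rfl)
    · exact h1
    · exact hcd
  have hbdd : ∀ w, BddBelow (U w) := fun w => ⟨c, hlb w⟩
  have hclosed : ∀ w, IsClosed (U w) := by
    intro w
    have h1 : {t ∈ Set.Icc c d | w ≤ g t} = Set.Icc c d ∩ g ⁻¹' (Set.Ici w) := rfl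
    have : IsClosed ({t ∈ Set.Icc c d | w ≤ g t}) := by
      rw [h1]; exact isClosed_Icc.inter (isClosed_Ici.preimage hcont)
    exact this.union isClosed_singleton
  refine ⟨fun w => sInf (U w), ?_, ?_⟩
  · intro u v huv
    refine csInf_le_csInf (hbdd u) (hne v) ?_
    rintro t (⟨ht1, ht2⟩ | rfl)
    · exact Or.inl ⟨ht1, huv.trans ht2⟩
    · exact Or.inr rfl
  · intro w
    have hsmem : sInf (U w) ∈ U w := (hclosed w).csInf_mem (hne w) (hbdd w)
    have hcs : c ≤ sInf (U w) := le_csInf (hne w) fun t ht => hlb w ht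
    have hsd : sInf (U w) ≤ d := csInf_le (hbdd w) (hdU w)
    refine ⟨hcs, hsd, ?_, ?_⟩
    · -- value of g at the crossing point
      show g (sInf (U w)) = max (min w (g d)) (g c)
      rcases le_or_gt w (g c) with hwc | hwc
      · have hc : c ∈ U w := Or.inl ⟨⟨le_refl c, hcd⟩, hwc⟩
        have : sInf (U w) = c := le_antisymm (csInf_le (hbdd w) hc) hcs
        rw [this, max_eq_right ((min_le_left w (g d)).trans hwc)]
      · rcases le_or_gt w (g d) with hwd | hwd
        · -- middle case : g (s w) = w
          have hsS : w ≤ g (sInf (U w)) := by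
            rcases hsmem with ⟨_, h2⟩ | h2
            · exact h2
            · rw [h2]; exact hwd
          have hcls : c < sInf (U w) := by
            rcases eq_or_lt_of_le hcs with h | h
            · exfalso; rw [← h] at hsS; exact absurd hsS (not_le.2 hwc)
            · exact h
          have hglim : g (sInf (U w)) ≤ w := by
            have hmem : sInf (U w) ∈ closure (Set.Ioo c (sInf (U w))) := by
              rw [closure_Ioo (ne_of_lt hcls)]
              exact ⟨hcls.le, le_refl _⟩
            haveI : (𝓝[Set.Ioo c (sInf (U w))] (sInf (U w))).NeBot :=
              mem_closure_iff_nhdsWithin_neBot.mp hmem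
            have htend : Tendsto g (𝓝[Set.Ioo c (sInf (U w))] (sInf (U w)))
                (𝓝 (g (sInf (U w)))) := (hcont.continuousWithinAt).tendsto
            refine le_of_tendsto htend ?_
            filter_upwards [self_mem_nhdsWithin] with t ht
            by_contra hcon
            have : t ∈ U w := Or.inl ⟨⟨ht.1.le, ht.2.le.trans hsd⟩, (not_le.1 hcon).le⟩
            exact absurd (csInf_le (hbdd w) this) (not_le.2 ht.2)
          have : g (sInf (U w)) = w := le_antisymm hglim hsS
          rw [this, min_eq_left hwd, max_eq_left hwc.le]
        · -- w > g d : crossing point is d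
          have hUd : U w = {d} := by
            apply Subset.antisymm
            · rintro t (⟨ht1, ht2⟩ | rfl)
              · exact absurd (ht2.trans (hmono ht1.2)) (not_le.2 hwd)
              · rfl
            · rintro t rfl; exact hdU w
          rw [hUd, csInf_singleton, min_eq_right hwd.le, max_eq_left (hmono hcd)]
    · -- the iff
      show ∀ _ ∈ Set.Ico c d, _ ↔ sInf (U w) ≤ _
      intro t ht
      constructor
      · intro hwt
        exact csInf_le (hbdd w) (Or.inl ⟨⟨ht.1, ht.2.le⟩, hwt⟩)
      · intro hst
        rcases le_or_gt w (g c) with hwc | hwc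
        · exact hwc.trans (hmono ht.1)
        · rcases le_or_gt w (g d) with hwd | hwd
          · -- g (s w) = w as above ; reprove quickly using value
            have hsS : w ≤ g (sInf (U w)) := by
              rcases hsmem with ⟨_, h2⟩ | h2
              · exact h2
              · rw [h2]; exact hwd
            exact hsS.trans (hmono hst)
          · exfalso
            have hUd : U w = {d} := by
              apply Subset.antisymm
              · rintro t' (⟨ht1, ht2⟩ | rfl)
                · exact absurd (ht2.trans (hmono ht1.2)) (not_le.2 hwd)
                · rfl
              · rintro t' rfl; exact hdU w
            rw [hUd, csInf_singleton] at hst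
            exact absurd (hst.trans_lt ht.2) (lt_irrefl d)

lemma map_measure_eq {g : ℝ → ℝ} (hmono : Monotone g) (hcont : Continuous g)
    {a b : ℝ} (μ : Measure ℝ)
    (hμ : ∀ c d, a ≤ c → c ≤ d → d ≤ b → μ (Set.Ico c d) = ENNReal.ofReal (g d - g c))
    {c d : ℝ} (hac : a ≤ c) (hcd : c ≤ d) (hdb : d ≤ b) :
    Measure.map g (μ.restrict (Set.Ico c d)) = volume.restrict (Set.Ico (g c) (g d)) := by
  obtain ⟨s, smono, hs⟩ := crossing_aux hmono hcont hcd
  have key : ∀ u v : ℝ, u ≤ v → Measure.map g (μ.restrict (Set.Ico c d)) (Set.Ico u v)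
      = ENNReal.ofReal (min v (g d) - max u (g c)) := by
    intro u v huv
    obtain ⟨hcu, hud, hgu, hiffu⟩ := hs u
    obtain ⟨hcv, hvd, hgv, hiffv⟩ := hs v
    rw [Measure.map_apply hcont.measurable measurableSet_Ico,
        Measure.restrict_apply' measurableSet_Ico]
    have hset : g ⁻¹' (Set.Ico u v) ∩ Set.Ico c d = Set.Ico (s u) (s v) := by
      ext t
      constructor
      · rintro ⟨⟨h1, h2⟩, ht⟩
        refine ⟨(hiffu t ht).1 h1, ?_⟩
        by_contra hle
        exact absurd ((hiffv t ht).2 (not_lt.1 hle)) (not_le.2 h2)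
      · rintro ⟨h1, h2⟩
        have ht : t ∈ Set.Ico c d := ⟨hcu.trans h1, lt_of_lt_of_le h2 hvd⟩
        refine ⟨⟨(hiffu t ht).2 h1, ?_⟩, ht⟩
        by_contra hge
        exact absurd ((hiffv t ht).1 (not_lt.1 hge)) (not_le.2 h2)
    rw [hset, hμ (s u) (s v) (hac.trans hcu) (smono huv) (hvd.trans hdb), hgu, hgv]
    have hgcd : g c ≤ g d := hmono hcd
    rcases le_total u (g d) with h1 | h1
    · rcases le_total (g c) v with h2 | h2
      · rw [min_eq_left h1, max_eq_left (le_min h2 hgcd)]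
      · have e1 : min v (g d) = v := min_eq_left (h2.trans hgcd)
        have e2 : max (min u (g d)) (g c) = g c :=
          max_eq_right ((min_le_left _ _).trans (huv.trans h2))
        have e3 : max (min v (g d)) (g c) = g c := by rw [e1]; exact max_eq_right h2
        rw [e2, e3, e1, sub_self, ENNReal.ofReal_zero]
        symm; rw [ENNReal.ofReal_eq_zero]
        have := le_max_right u (g c)
        linarith
    · have e1 : min u (g d) = g d := min_eq_right h1
      have e2 : min v (g d) = g d := min_eq_right (h1.trans huv)
      rw [e1, e2, max_eq_left hgcd, sub_self, ENNReal.ofReal_zero]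
      symm; rw [ENNReal.ofReal_eq_zero]
      have := le_max_left u (g c)
      linarith
  refine Measure.ext_of_Ico' _ _ (fun u v huv => ?_) (fun u v huv => ?_)
  · rw [key u v huv.le]; exact ENNReal.ofReal_ne_top
  · rw [key u v huv.le, Measure.restrict_apply' measurableSet_Ico, Set.Ico_inter_Ico,
      Real.volume_Ico]

lemma integral_Ico_comp {g : ℝ → ℝ} (hmono : Monotone g) (hcont : Continuous g)
    {a b : ℝ} (μ : Measure ℝ)
    (hμ : ∀ c d, a ≤ c → c ≤ d → d ≤ b → μ (Set.Ico c d) = ENNReal.ofReal (g d - g c))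
    {c d : ℝ} (hac : a ≤ c) (hcd : c ≤ d) (hdb : d ≤ b) (K : ℝ) (n : ℕ) :
    ∫ t in Set.Ico c d, (g t - K) ^ n ∂μ
      = ((g d - K) ^ (n + 1) - (g c - K) ^ (n + 1)) / ((n : ℝ) + 1) := by
  have hmap := map_measure_eq hmono hcont μ hμ hac hcd hdb
  have hmeas : AEStronglyMeasurable (fun u : ℝ => (u - K) ^ n)
      (Measure.map g (μ.restrict (Set.Ico c d))) :=
    Continuous.aestronglyMeasurable (by continuity)
  have h1 : ∫ t in Set.Ico c d, (g t - K) ^ n ∂μ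
      = ∫ u, (u - K) ^ n ∂(Measure.map g (μ.restrict (Set.Ico c d))) :=
    (integral_map hcont.measurable.aemeasurable hmeas).symm
  have hgcd : g c ≤ g d := hmono hcd
  rw [h1, hmap]
  have h2 : (∫ u in Set.Ico (g c) (g d), (u - K) ^ n)
      = ∫ u in (g c)..(g d), (u - K) ^ n := by
    rw [integral_Ico_eq_integral_Ioo, ← integral_Ioc_eq_integral_Ioo,
      ← intervalIntegral.integral_of_le hgcd]
  rw [h2, intervalIntegral.integral_comp_sub_right (fun u => u ^ n) K, integral_pow]

/-- For a continuous derivator `g` on `[a,b]` with `g a = 0`, the `g`-monomials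
satisfy `g_{x₀,n}(x) = (g x − g x₀)^n`. -/
theorem gMonomial_eq_pow_of_continuous
    (a b : ℝ) (hab : a ≤ b) (g : ℝ → ℝ)
    (hmono : MonotoneOn g (Set.Icc a b))
    (hcont : ContinuousOn g (Set.Icc a b))
    (hga : g a = 0)
    (μ : Measure ℝ)
    (hμ : ∀ c d, a ≤ c → c ≤ d → d ≤ b →
      μ (Set.Ico c d) = ENNReal.ofReal (g d - g c)) :
    ∀ x₀ ∈ Set.Icc a b, ∀ x ∈ Set.Icc a b, ∀ n : ℕ,
      gMon μ x₀ n x = (g x - g x₀) ^ n := by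
  intro x₀ hx₀
  set p : ℝ → ℝ := fun t => max a (min b t) with hp
  have hpmem : ∀ t, p t ∈ Set.Icc a b := fun t => ⟨le_max_left _ _, max_le hab (min_le_left _ _)⟩
  have hpid : ∀ t ∈ Set.Icc a b, p t = t := by
    intro t ht
    show max a (min b t) = t
    rw [min_eq_right ht.2, max_eq_right ht.1]
  set G : ℝ → ℝ := fun t => g (p t) with hG
  have hGeq : ∀ t ∈ Set.Icc a b, G t = g t := by
    intro t ht
    show g (p t) = g t
    rw [hpid t ht]
  have hGmono : Monotone G := fun s t hst =>
    hmono (hpmem s) (hpmem t) (max_le_max le_rfl (min_le_min le_rfl hst))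
  have hGcont : Continuous G :=
    hcont.comp_continuous (continuous_const.max (continuous_const.min continuous_id)) hpmem
  have hμ' : ∀ c d, a ≤ c → c ≤ d → d ≤ b →
      μ (Set.Ico c d) = ENNReal.ofReal (G d - G c) := by
    intro c d h1 h2 h3
    rw [hGeq c ⟨h1, h2.trans h3⟩, hGeq d ⟨h1.trans h2, h3⟩]
    exact hμ c d h1 h2 h3
  suffices h : ∀ n : ℕ, ∀ x ∈ Set.Icc a b, gMon μ x₀ n x = (G x - G x₀) ^ n by
    intro x hx n
    rw [h n x hx, hGeq x hx, hGeq x₀ hx₀]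
  intro n
  induction n with
  | zero => intro x hx; simp [gMon]
  | succ n ih =>
    intro x hx
    have hne : ((n : ℝ) + 1) ≠ 0 := by positivity
    rcases le_or_gt x₀ x with hxx | hxx
    · simp only [gMon]
      rw [if_pos hxx]
      have hsub : Set.Ico x₀ x ⊆ Set.Icc a b := fun t ht =>
        ⟨hx₀.1.trans ht.1, ht.2.le.trans hx.2⟩
      have h1 : ∫ t in Set.Ico x₀ x, gMon μ x₀ n t ∂μ
          = ∫ t in Set.Ico x₀ x, (G t - G x₀) ^ n ∂μ :=
        setIntegral_congr_fun measurableSet_Ico (fun t ht => ih t (hsub ht))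
      rw [h1, integral_Ico_comp hGmono hGcont μ hμ' hx₀.1 hxx hx.2 (G x₀) n]
      rw [sub_self, zero_pow (Nat.succ_ne_zero n), sub_zero]
      field_simp
    · simp only [gMon]
      rw [if_neg (not_le.2 hxx)]
      have hsub : Set.Ico x x₀ ⊆ Set.Icc a b := fun t ht =>
        ⟨hx.1.trans ht.1, ht.2.le.trans hx₀.2⟩
      have h1 : ∫ t in Set.Ico x x₀, gMon μ x₀ n t ∂μ
          = ∫ t in Set.Ico x x₀, (G t - G x₀) ^ n ∂μ :=
        setIntegral_congr_fun measurableSet_Ico (fun t ht => ih t (hsub ht))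
      rw [h1, integral_Ico_comp hGmono hGcont μ hμ' hx.1 hxx.le hx₀.2 (G x₀) n]
      rw [sub_self, zero_pow (Nat.succ_ne_zero n), zero_sub]
      field_simp
end

section
/- Let g:[a,b]→ℝ be a derivator which is a pure jump function (g = g^B, i.e., its continuous part is zero), and suppose x > x₀ with [x₀,x) ∩ D_g containing exactly m points, where D_g is the set of discontinuities of g. Then the g-monomial g_{x₀,n}(y) = 0 for all n ≥ m+1 and all y ∈ [x₀,x]. -/
open MeasureTheory Set Filter

/-- If `g` is a pure jump derivator (its continuous part vanishes: `g` equals `g a`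
plus the sum of its jumps) and `[x₀,x) ∩ D_g` has exactly `m` points, then the
`g`-monomials of degree `≥ m+1` vanish identically on `[x₀,x]`. -/
theorem gMonomial_vanishes_pure_jump
    (a b : ℝ) (hab : a ≤ b) (g : ℝ → ℝ)
    (hmono : MonotoneOn g (Set.Icc a b))
    (hlc : ∀ x ∈ Set.Ioc a b, ContinuousWithinAt g (Set.Iio x) x)
    (μ : Measure ℝ)
    (hμ : ∀ c d, a ≤ c → c ≤ d → d ≤ b →
      μ (Set.Ico c d) = ENNReal.ofReal (g d - g c))
    (hpure : ∀ x ∈ Set.Icc a b, g x = g a +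
      ∑' t : ({t ∈ Set.Ico a b | g t < Function.rightLim g t} ∩ Set.Ico a x : Set ℝ),
        (Function.rightLim g t - g t))
    (x₀ x : ℝ) (hx₀ : x₀ ∈ Set.Icc a b) (hx : x ∈ Set.Icc a b) (hlt : x₀ < x)
    (m : ℕ)
    (hfin : (Set.Ico x₀ x ∩ {t ∈ Set.Ico a b | g t < Function.rightLim g t}).Finite)
    (hcard : (Set.Ico x₀ x ∩ {t ∈ Set.Ico a b | g t < Function.rightLim g t}).ncard = m) :
    ∀ n : ℕ, m + 1 ≤ n → ∀ y ∈ Set.Icc x₀ x, gMon μ x₀ n y = 0 := by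
  set D : Set ℝ := {t ∈ Set.Ico a b | g t < Function.rightLim g t} with hD
  have ha₀ : a ≤ x₀ := hx₀.1
  have hxb : x ≤ b := hx.2
  -- finiteness of jump sets in subintervals
  have hsubfin : ∀ c d : ℝ, x₀ ≤ c → d ≤ x → (Set.Ico c d ∩ D).Finite := by
    intro c d hc hd
    refine hfin.subset ?_
    rintro s ⟨⟨h1, h2⟩, hsD⟩
    exact ⟨⟨le_trans hc h1, lt_of_lt_of_le h2 hd⟩, hsD⟩
  -- Lemma A : jump-free intervals are null
  have lemA : ∀ c d : ℝ, x₀ ≤ c → c ≤ d → d ≤ x → Set.Ico c d ∩ D = ∅ →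
      μ (Set.Ico c d) = 0 := by
    intro c d hc hcd hd hempty
    have hac : a ≤ c := le_trans ha₀ hc
    have hdb : d ≤ b := le_trans hd hxb
    have h1 := hpure d ⟨le_trans hac hcd, hdb⟩
    have h2 := hpure c ⟨hac, le_trans hcd hdb⟩
    have hset : D ∩ Set.Ico a d = D ∩ Set.Ico a c := by
      ext t
      constructor
      · rintro ⟨htD, hta, htd⟩
        refine ⟨htD, hta, ?_⟩
        by_contra h
        push_neg at h
        have hmem : t ∈ Set.Ico c d ∩ D := ⟨⟨h, htd⟩, htD⟩
        rw [hempty] at hmem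
        exact hmem
      · rintro ⟨htD, hta, htc⟩
        exact ⟨htD, hta, lt_of_lt_of_le htc hcd⟩
    rw [hset] at h1
    have hgd : g d = g c := by rw [h1, h2]
    rw [hμ c d hac hcd hdb, hgd]
    simp
  -- Lemma B : complements of the jump set are null
  have lemB : ∀ k : ℕ, ∀ c d : ℝ, x₀ ≤ c → d ≤ x → (Set.Ico c d ∩ D).ncard ≤ k →
      μ (Set.Ico c d \ D) = 0 := by
    intro k
    induction k with
    | zero =>
      intro c d hc hd hcard0
      by_cases hcd : c ≤ d
      · have hempty : Set.Ico c d ∩ D = ∅ := by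
          rw [← Set.ncard_eq_zero (hsubfin c d hc hd)]
          omega
        exact measure_mono_null Set.diff_subset (lemA c d hc hcd hd hempty)
      · rw [Set.Ico_eq_empty (fun h => hcd (le_of_lt h))]
        simp
    | succ k ih =>
      intro c d hc hd hcard1
      by_cases hcd : c ≤ d
      · rcases Set.eq_empty_or_nonempty (Set.Ico c d ∩ D) with hemp | ⟨t, ht⟩
        · exact measure_mono_null Set.diff_subset (lemA c d hc hcd hd hemp)
        · have hfin' := hsubfin c d hc hd
          have hdiffcard : ((Set.Ico c d ∩ D) \ {t}).ncard ≤ k := by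
            rw [Set.ncard_diff_singleton_of_mem ht]
            omega
          have hfindiff : ((Set.Ico c d ∩ D) \ {t}).Finite := hfin'.diff
          have cover : Set.Ico c d \ D ⊆ (Set.Ico c t \ D) ∪
              ⋃ (q : ℚ) (_ : t < (q : ℝ) ∧ (q : ℝ) < d), (Set.Ico (q : ℝ) d \ D) := by
            rintro s ⟨⟨hcs, hsd⟩, hsD⟩
            rcases lt_trichotomy s t with hst | rfl | hts
            · exact Or.inl ⟨⟨hcs, hst⟩, hsD⟩
            · exact absurd ht.2 hsD
            · obtain ⟨q, hq1, hq2⟩ := exists_rat_btwn hts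
              refine Or.inr ?_
              refine Set.mem_iUnion.2 ⟨q, Set.mem_iUnion.2 ⟨⟨hq1, lt_of_lt_of_le hq2 (le_of_lt hsd)⟩, ?_⟩⟩
              exact ⟨⟨le_of_lt hq2, hsd⟩, hsD⟩
          refine measure_mono_null cover (measure_union_null ?_ ?_)
          · refine ih c t hc (le_trans (le_of_lt ht.1.2) hd) ?_
            refine le_trans (le_trans (Set.ncard_le_ncard ?_ hfindiff) le_rfl) hdiffcard
            rintro s ⟨⟨h1, h2⟩, hsD⟩
            exact ⟨⟨⟨h1, lt_trans h2 ht.1.2⟩, hsD⟩, fun hs => absurd (hs ▸ h2) (lt_irrefl t)⟩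
          · refine measure_iUnion_null fun q => measure_iUnion_null fun hq => ?_
            refine ih q d (le_trans hc (le_trans ht.1.1 (le_of_lt hq.1))) hd ?_
            refine le_trans (Set.ncard_le_ncard ?_ hfindiff) hdiffcard
            rintro s ⟨⟨h1, h2⟩, hsD⟩
            refine ⟨⟨⟨le_trans (le_trans ht.1.1 (le_of_lt hq.1)) h1, h2⟩, hsD⟩, ?_⟩
            intro hs
            rw [Set.mem_singleton_iff] at hs
            subst hs
            exact absurd (lt_of_lt_of_le hq.1 h1) (lt_irrefl _)
      · rw [Set.Ico_eq_empty (fun h => hcd (le_of_lt h))]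
        simp
  -- Main induction
  have main : ∀ k : ℕ, ∀ y ∈ Set.Icc x₀ x, (Set.Ico x₀ y ∩ D).ncard ≤ k →
      ∀ n : ℕ, k + 1 ≤ n → gMon μ x₀ n y = 0 := by
    intro k
    induction k with
    | zero =>
      intro y hy hc0 n hn
      obtain ⟨n', rfl⟩ : ∃ n', n = n' + 1 := ⟨n - 1, by omega⟩
      simp only [gMon, if_pos hy.1]
      have hnull : μ ({t | gMon μ x₀ n' t ≠ 0} ∩ Set.Ico x₀ y) = 0 := by
        have hempty : Set.Ico x₀ y ∩ D = ∅ := by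
          rw [← Set.ncard_eq_zero (hsubfin x₀ y le_rfl hy.2)]
          omega
        refine measure_mono_null ?_ (lemB 0 x₀ y le_rfl hy.2 hc0)
        rintro t ⟨htne, htI⟩
        refine ⟨htI, fun htD => ?_⟩
        have hmem : t ∈ Set.Ico x₀ y ∩ D := ⟨htI, htD⟩
        rw [hempty] at hmem
        exact hmem
      have hae : ∀ᵐ t ∂(μ.restrict (Set.Ico x₀ y)), gMon μ x₀ n' t = 0 := by
        rw [ae_iff, Measure.restrict_apply' measurableSet_Ico]
        exact hnull
      have : ∫ t in Set.Ico x₀ y, gMon μ x₀ n' t ∂μ = 0 := by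
        rw [integral_congr_ae hae, integral_zero]
      rw [this, mul_zero]
    | succ k ih =>
      intro y hy hc1 n hn
      obtain ⟨n', rfl⟩ : ∃ n', n = n' + 1 := ⟨n - 1, by omega⟩
      simp only [gMon, if_pos hy.1]
      have hnull : μ ({t | gMon μ x₀ n' t ≠ 0} ∩ Set.Ico x₀ y) = 0 := by
        refine measure_mono_null ?_
          (lemB ((Set.Ico x₀ y ∩ D).ncard) x₀ y le_rfl hy.2 le_rfl)
        rintro t ⟨htne, htI⟩
        refine ⟨htI, fun htD => htne ?_⟩
        have hty : t ∈ Set.Icc x₀ x := ⟨htI.1, le_trans (le_of_lt htI.2) hy.2⟩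
        refine ih t hty ?_ n' (by omega)
        have hsub : Set.Ico x₀ t ∩ D ⊆ (Set.Ico x₀ y ∩ D) \ {t} := by
          rintro s ⟨⟨h1, h2⟩, hsD⟩
          exact ⟨⟨⟨h1, lt_trans h2 htI.2⟩, hsD⟩, fun hs => absurd (hs ▸ h2) (lt_irrefl t)⟩
        have hfin' := hsubfin x₀ y le_rfl hy.2
        calc (Set.Ico x₀ t ∩ D).ncard ≤ ((Set.Ico x₀ y ∩ D) \ {t}).ncard :=
              Set.ncard_le_ncard hsub (hfin'.diff)
          _ = (Set.Ico x₀ y ∩ D).ncard - 1 :=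
              Set.ncard_diff_singleton_of_mem (Set.mem_inter htI htD)
          _ ≤ k := by omega
      have hae : ∀ᵐ t ∂(μ.restrict (Set.Ico x₀ y)), gMon μ x₀ n' t = 0 := by
        rw [ae_iff, Measure.restrict_apply' measurableSet_Ico]
        exact hnull
      have : ∫ t in Set.Ico x₀ y, gMon μ x₀ n' t ∂μ = 0 := by
        rw [integral_congr_ae hae, integral_zero]
      rw [this, mul_zero]
  intro n hn y hy
  refine main m y hy ?_ n hn
  rw [← hcard]
  refine Set.ncard_le_ncard ?_ hfin
  rintro s ⟨⟨h1, h2⟩, hsD⟩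
  exact ⟨⟨h1, lt_of_lt_of_le h2 hy.2⟩, hsD⟩
end

section
/- Let g:[a,b]→ℝ be a derivator. The space UC_g([a,b]) of uniformly g-continuous functions is dense in L²_g([a,b]), the space of square-integrable functions with respect to the Lebesgue–Stieltjes measure μ_g. -/
open MeasureTheory Set Filter

/-- The space of uniformly `g`-continuous functions is dense in `L²_g([a,b])`. -/
theorem ucg_dense_in_L2
    (a b : ℝ) (hab : a ≤ b) (g : ℝ → ℝ)
    (hmono : MonotoneOn g (Set.Icc a b))
    (hlc : ∀ x ∈ Set.Ioc a b, ContinuousWithinAt g (Set.Iio x) x)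
    (μ : Measure ℝ)
    (hμ : ∀ c d, a ≤ c → c ≤ d → d ≤ b →
      μ (Set.Ico c d) = ENNReal.ofReal (g d - g c)) :
    ∀ f : ℝ → ℝ, MemLp f 2 (μ.restrict (Set.Ico a b)) → ∀ ε > 0,
      ∃ h : ℝ → ℝ, UnifGCont g a b h ∧
        eLpNorm (f - h) 2 (μ.restrict (Set.Ico a b)) < ENNReal.ofReal ε := by
  intro f hf ε hε
  set μ' := μ.restrict (Set.Ico a b) with hμ'def
  -- the monotone extension of g to ℝ
  set G : ℝ → ℝ := fun x => g (max a (min b x)) with hGdef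
  have hGmem : ∀ x : ℝ, max a (min b x) ∈ Set.Icc a b :=
    fun x => ⟨le_max_left _ _, max_le hab (min_le_left _ _)⟩
  have hGmono : Monotone G := by
    intro x y hxy
    exact hmono (hGmem x) (hGmem y)
      (max_le_max le_rfl (min_le_min le_rfl hxy))
  have hGeq : ∀ x ∈ Set.Icc a b, G x = g x := by
    intro x hx
    simp only [hGdef]
    rw [min_eq_right hx.2, max_eq_right hx.1]
  have hGm : Measurable G := hGmono.measurable
  -- the bad set B
  set B : Set ℝ := {x | a ≤ x ∧ x < b ∧ ∃ y, x < y ∧ y ≤ b ∧ g y = g x} with hBdef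
  -- each "flat level" piece is null
  have hSnull : ∀ q : ℚ,
      μ {x | a ≤ x ∧ x < (q : ℝ) ∧ (q : ℝ) ≤ b ∧ g x = g q} = 0 := by
    intro q
    set S : Set ℝ := {x | a ≤ x ∧ x < (q : ℝ) ∧ (q : ℝ) ≤ b ∧ g x = g q} with hSdef
    have hIco : ∀ x ∈ S, μ (Set.Ico x (q : ℝ)) = 0 := by
      intro x hx
      rw [hμ x q hx.1 hx.2.1.le hx.2.2.1, hx.2.2.2, sub_self, ENNReal.ofReal_zero]
    set M : Set ℝ := {x | x ∈ S ∧ ∀ y ∈ S, x ≤ y} with hMdef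
    set E : ℚ → Set ℝ := fun r => {x | (r : ℝ) ∈ S ∧ (r : ℝ) ≤ x ∧ x < (q : ℝ)}
      with hEdef
    have hcover : S ⊆ M ∪ ⋃ r : ℚ, E r := by
      intro x hx
      by_cases hxM : ∀ y ∈ S, x ≤ y
      · exact Or.inl ⟨hx, hxM⟩
      · push_neg at hxM
        obtain ⟨y, hyS, hyx⟩ := hxM
        obtain ⟨r, hyr, hrx⟩ := exists_rat_btwn hyx
        refine Or.inr (Set.mem_iUnion.2 ⟨r, ?_, hrx.le, hx.2.1⟩)
        have hrq : (r : ℝ) < q := hrx.trans hx.2.1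
        refine ⟨hyS.1.trans hyr.le, hrq, hx.2.2.1, ?_⟩
        have h1 : g y ≤ g r := hmono ⟨hyS.1, hyS.2.1.le.trans hx.2.2.1⟩
          ⟨hyS.1.trans hyr.le, hrq.le.trans hx.2.2.1⟩ hyr.le
        have h2 : g r ≤ g x := hmono ⟨hyS.1.trans hyr.le, hrq.le.trans hx.2.2.1⟩
          ⟨hx.1, hx.2.1.le.trans hx.2.2.1⟩ hrx.le
        rw [hyS.2.2.2] at h1
        rw [hx.2.2.2] at h2
        exact le_antisymm h2 h1
    refine measure_mono_null hcover (measure_union_null ?_ (measure_iUnion_null ?_))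
    · rcases Set.eq_empty_or_nonempty M with hM | ⟨m, hm⟩
      · simp [hM]
      · refine measure_mono_null (t := Set.Ico m (q : ℝ)) ?_ (hIco m hm.1)
        intro z hz
        exact ⟨hm.2 z hz.1, hz.1.2.1⟩
    · intro r
      by_cases hr : (r : ℝ) ∈ S
      · refine measure_mono_null (t := Set.Ico (r : ℝ) (q : ℝ)) ?_ (hIco _ hr)
        intro z hz; exact ⟨hz.2.1, hz.2.2⟩
      · have : E r = ∅ := by
          ext z; simp only [hEdef, Set.mem_setOf_eq, Set.mem_empty_iff_false,
            iff_false, not_and]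
          intro h; exact absurd h hr
        simp [this]
  have hBnull : μ B = 0 := by
    have hcov : B ⊆ ⋃ q : ℚ, {x | a ≤ x ∧ x < (q : ℝ) ∧ (q : ℝ) ≤ b ∧ g x = g q} := by
      intro x hx
      obtain ⟨hax, hxb, y, hxy, hyb, hgy⟩ := hx
      obtain ⟨q, hxq, hqy⟩ := exists_rat_btwn hxy
      have hqb : (q : ℝ) ≤ b := hqy.le.trans hyb
      refine Set.mem_iUnion.2 ⟨q, hax, hxq, hqb, ?_⟩
      have h1 : g x ≤ g q := hmono ⟨hax, hxb.le⟩ ⟨hax.trans hxq.le, hqb⟩ hxq.le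
      have h2 : g q ≤ g y := hmono ⟨hax.trans hxq.le, hqb⟩
        ⟨hax.trans hxy.le, hyb⟩ hqy.le
      rw [hgy] at h2
      exact le_antisymm h1 h2
    exact measure_mono_null hcov (measure_iUnion_null hSnull)
  -- generalized inverse of g
  set τ : ℝ → ℝ := fun t => sSup ({a} ∪ {x | x ∈ Set.Icc a b ∧ g x ≤ t}) with hτdef
  have hbdd : ∀ t : ℝ, BddAbove ({a} ∪ {x | x ∈ Set.Icc a b ∧ g x ≤ t}) := by
    intro t
    refine ⟨b, ?_⟩
    rintro z (hz | hz)
    · exact hz.le.trans hab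
    · exact hz.1.2
  have hτmono : Monotone τ := by
    intro s t hst
    refine csSup_le_csSup (hbdd t) ⟨a, Or.inl rfl⟩ ?_
    exact Set.union_subset_union_right _ (fun z hz => ⟨hz.1, hz.2.trans hst⟩)
  have hτm : Measurable τ := hτmono.measurable
  -- τ (G x) = x for good points
  have hτG : ∀ x, a ≤ x → x < b → x ∉ B → τ (G x) = x := by
    intro x hax hxb hxB
    have hGx : G x = g x := hGeq x ⟨hax, hxb.le⟩
    rw [hGx]
    refine IsGreatest.csSup_eq ⟨Or.inr ⟨⟨hax, hxb.le⟩, le_rfl⟩, ?_⟩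
    rintro z (hz | hz)
    · exact hz ▸ hax
    · by_contra hzx
      push_neg at hzx
      have h1 : g x ≤ g z := hmono ⟨hax, hxb.le⟩ hz.1 hzx.le
      have h2 : g z = g x := le_antisymm hz.2 h1
      exact hxB ⟨hax, hxb, z, hzx, hz.1.2, h2⟩
  -- measurable representative of f
  have hfm := hf.aestronglyMeasurable
  set f' : ℝ → ℝ := hfm.mk f with hf'def
  have hf'meas : Measurable f' := hfm.stronglyMeasurable_mk.measurable
  have hff' : f =ᵐ[μ'] f' := hfm.ae_eq_mk
  set φ : ℝ → ℝ := f' ∘ τ with hφdef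
  have hφmeas : Measurable φ := hf'meas.comp hτm
  -- f = φ ∘ G almost everywhere
  have hae : f =ᵐ[μ'] φ ∘ G := by
    have h1 : ∀ᵐ x ∂μ', x ∈ Set.Ico a b := ae_restrict_mem measurableSet_Ico
    have h2 : ∀ᵐ x ∂μ', x ∉ B := by
      rw [ae_iff]
      simp only [not_not]
      exact measure_mono_null (fun z hz => hz) (le_antisymm
        ((Measure.restrict_le_self B).trans_eq hBnull) zero_le)
    filter_upwards [h1, h2, hff'] with x hx hxB hfx
    show f x = f' (τ (G x))
    rw [hτG x hx.1 hx.2 hxB, hfx]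
  -- pushforward measure
  set ν : Measure ℝ := Measure.map G μ' with hνdef
  have hνfin : IsFiniteMeasure ν := by
    constructor
    rw [hνdef, Measure.map_apply hGm MeasurableSet.univ]
    simp only [Set.preimage_univ, hμ'def, Measure.restrict_apply_univ]
    rw [hμ a b le_rfl hab le_rfl]
    exact ENNReal.ofReal_lt_top
  have hφG : MemLp (φ ∘ G) 2 μ' := hf.ae_eq hae
  have hφν : MemLp φ 2 ν :=
    (memLp_map_measure_iff hφmeas.aestronglyMeasurable hGm.aemeasurable).2 hφG
  -- approximate φ by a bounded continuous function
  have hε2 : (ENNReal.ofReal ε) / 2 ≠ 0 := by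
    simp only [ne_eq, ENNReal.div_eq_zero_iff, ENNReal.ofReal_eq_zero, not_or]
    exact ⟨not_le.2 hε, ENNReal.ofNat_ne_top⟩
  obtain ⟨φ₀, hφ₀, -⟩ := hφν.exists_boundedContinuous_eLpNorm_sub_le
    (by norm_num : (2 : ENNReal) ≠ ⊤) hε2
  refine ⟨(φ₀ : ℝ → ℝ) ∘ G, ?_, ?_⟩
  · -- uniform g-continuity
    intro ε' hε'
    have hK : IsCompact (Set.Icc (g a - 1) (g b + 1)) := isCompact_Icc
    have hUC := hK.uniformContinuousOn_of_continuous φ₀.continuous.continuousOn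
    rw [Metric.uniformContinuousOn_iff] at hUC
    obtain ⟨δ, hδ, hδ'⟩ := hUC ε' hε'
    refine ⟨δ, hδ, ?_⟩
    intro x hx y hy hxy
    have hgx : g x ∈ Set.Icc (g a - 1) (g b + 1) := by
      constructor
      · have := hmono ⟨le_rfl, hab⟩ hx hx.1; linarith
      · have := hmono hx ⟨hab, le_rfl⟩ hx.2; linarith
    have hgy : g y ∈ Set.Icc (g a - 1) (g b + 1) := by
      constructor
      · have := hmono ⟨le_rfl, hab⟩ hy hy.1; linarith
      · have := hmono hy ⟨hab, le_rfl⟩ hy.2; linarith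
    have := hδ' (g x) hgx (g y) hgy (by rwa [Real.dist_eq])
    rw [Real.dist_eq] at this
    simpa [Function.comp, hGeq x hx, hGeq y hy] using this
  · -- the norm estimate
    have hcongr : (f - (φ₀ : ℝ → ℝ) ∘ G) =ᵐ[μ'] (φ - (φ₀ : ℝ → ℝ)) ∘ G := by
      filter_upwards [hae] with x hx
      simp only [Pi.sub_apply, Function.comp_apply, hx]
    have hsubm : AEStronglyMeasurable (φ - (φ₀ : ℝ → ℝ)) ν :=
      (hφmeas.sub φ₀.continuous.measurable).aestronglyMeasurable
    calc eLpNorm (f - (φ₀ : ℝ → ℝ) ∘ G) 2 μ'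
        = eLpNorm ((φ - (φ₀ : ℝ → ℝ)) ∘ G) 2 μ' := eLpNorm_congr_ae hcongr
      _ = eLpNorm (φ - (φ₀ : ℝ → ℝ)) 2 ν := (eLpNorm_map_measure hsubm hGm.aemeasurable).symm
      _ ≤ ENNReal.ofReal ε / 2 := hφ₀
      _ < ENNReal.ofReal ε := ENNReal.half_lt_self
          ((ENNReal.ofReal_pos.2 hε).ne') ENNReal.ofReal_ne_top
end

section
/- Let g:[a,b]→ℝ be a derivator and x₀∈[a,b] such that the set g⁻¹({g(x₀)}) has μ_g-measure zero. Then the subspace {f ∈ UC_g([a,b]) : f(x₀) = 0} is dense in L²_g([a,b]). -/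
open MeasureTheory Set Filter
open scoped ENNReal NNReal Topology

lemma levelTail_null (a b : ℝ) (hab : a ≤ b) (g : ℝ → ℝ)
    (hmono : MonotoneOn g (Set.Icc a b)) (μ : Measure ℝ)
    (hμ : ∀ c d, a ≤ c → c ≤ d → d ≤ b →
      μ (Set.Ico c d) = ENNReal.ofReal (g d - g c))
    (q : ℝ) (hqa : a ≤ q) (hqb : q ≤ b) :
    μ {x | x ∈ Set.Ico a b ∧ x < q ∧ g q = g x} = 0 := by
  set Nq := {x | x ∈ Set.Ico a b ∧ x < q ∧ g q = g x} with hNq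
  rcases Set.eq_empty_or_nonempty Nq with h | hne
  · simp [h]
  set c := sInf Nq with hc
  have hbdd : BddBelow Nq := ⟨a, fun x hx => hx.1.1⟩
  have hca : a ≤ c := le_csInf hne fun x hx => hx.1.1
  have hcq : c < q := by
    obtain ⟨x, hx⟩ := hne
    exact lt_of_le_of_lt (csInf_le hbdd hx) hx.2.1
  have hcover : Nq ⊆ (Nq ∩ {c}) ∪ ⋃ (n : ℕ), Set.Ico (c + 1/(n+1)) q := by
    intro x hx
    rcases eq_or_lt_of_le (csInf_le hbdd hx) with h | h
    · exact Or.inl ⟨hx, h.symm⟩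
    · obtain ⟨n, hn⟩ := exists_nat_one_div_lt (sub_pos.2 h)
      exact Or.inr (Set.mem_iUnion.2 ⟨n, ⟨by linarith, hx.2.1⟩⟩)
  refine measure_mono_null hcover (measure_union_null ?_ (measure_iUnion_null fun n => ?_))
  · by_cases hcm : c ∈ Nq
    · have h0 : μ (Set.Ico c q) = 0 := by
        rw [hμ c q hca hcq.le hqb, hcm.2.2, sub_self, ENNReal.ofReal_zero]
      refine measure_mono_null (fun x hx => ?_) h0
      rcases hx with ⟨hx1, hx2⟩
      exact ⟨(Set.mem_singleton_iff.1 hx2).ge, (Set.mem_singleton_iff.1 hx2).le.trans_lt hcq⟩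
    · have : Nq ∩ {c} = ∅ := by
        ext x; simp only [Set.mem_inter_iff, Set.mem_singleton_iff, Set.mem_empty_iff_false,
          iff_false, not_and]
        intro hx hxc; exact hcm (hxc ▸ hx)
      rw [this]
      exact measure_empty
  · have hpos : (0:ℝ) < 1/((n:ℝ)+1) := by positivity
    by_cases htq : c + 1/((n:ℝ)+1) < q
    · obtain ⟨x', hx', hx't⟩ := (csInf_lt_iff hbdd hne).1 (by linarith : c < c + 1/((n:ℝ)+1))
      have hta : a ≤ c + 1/((n:ℝ)+1) := le_trans hx'.1.1 hx't.le
      have hgt : g q = g (c + 1/((n:ℝ)+1)) := by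
        have h1 : g x' ≤ g (c + 1/((n:ℝ)+1)) :=
          hmono ⟨hx'.1.1, hx'.2.1.le.trans hqb⟩ ⟨hta, htq.le.trans hqb⟩ hx't.le
        have h2 : g (c + 1/((n:ℝ)+1)) ≤ g q := hmono ⟨hta, htq.le.trans hqb⟩ ⟨hqa, hqb⟩ htq.le
        have := hx'.2.2
        linarith
      rw [hμ _ q hta htq.le hqb, ← hgt, sub_self, ENNReal.ofReal_zero]
    · rw [Set.Ico_eq_empty htq]
      exact measure_empty

lemma rightLevel_null (a b : ℝ) (hab : a ≤ b) (g : ℝ → ℝ)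
    (hmono : MonotoneOn g (Set.Icc a b)) (μ : Measure ℝ)
    (hμ : ∀ c d, a ≤ c → c ≤ d → d ≤ b →
      μ (Set.Ico c d) = ENNReal.ofReal (g d - g c)) :
    μ {x | x ∈ Set.Ico a b ∧ ∃ y, x < y ∧ y ∈ Set.Icc a b ∧ g y = g x} = 0 := by
  have hsub : {x | x ∈ Set.Ico a b ∧ ∃ y, x < y ∧ y ∈ Set.Icc a b ∧ g y = g x} ⊆
      ⋃ (q : ℚ), {x | (q:ℝ) ≤ b ∧ x ∈ Set.Ico a b ∧ x < (q:ℝ) ∧ g (q:ℝ) = g x} := by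
    rintro x ⟨hx, y, hxy, hy, hgy⟩
    obtain ⟨q, hq1, hq2⟩ := exists_rat_btwn hxy
    have hqI : (q:ℝ) ∈ Set.Icc a b := ⟨hx.1.trans hq1.le, hq2.le.trans hy.2⟩
    have hxI : x ∈ Set.Icc a b := ⟨hx.1, hx.2.le⟩
    have h1 : g x ≤ g q := hmono hxI hqI hq1.le
    have h2 : g q ≤ g y := hmono hqI hy hq2.le
    exact Set.mem_iUnion.2 ⟨q, hqI.2, hx, hq1, by linarith⟩
  refine measure_mono_null hsub (measure_iUnion_null fun q => ?_)
  by_cases hq : a ≤ (q:ℝ) ∧ (q:ℝ) ≤ b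
  · refine measure_mono_null (fun x hx => ?_)
      (levelTail_null a b hab g hmono μ hμ q hq.1 hq.2)
    exact ⟨hx.2.1, hx.2.2⟩
  · have : {x | (q:ℝ) ≤ b ∧ x ∈ Set.Ico a b ∧ x < (q:ℝ) ∧ g (q:ℝ) = g x} = ∅ := by
      ext x
      simp only [Set.mem_setOf_eq, Set.mem_empty_iff_false, iff_false]
      rintro ⟨h1, h2, h3, -⟩
      exact hq ⟨h2.1.trans h3.le, h1⟩
    rw [this]
    exact measure_empty

/-- If the level set `g⁻¹({g x₀})` is `μ_g`-null, then the uniformly `g`-continuous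
functions vanishing at `x₀` are dense in `L²_g([a,b])`. -/
theorem ucg_vanishing_dense_in_L2
    (a b : ℝ) (hab : a ≤ b) (g : ℝ → ℝ)
    (hmono : MonotoneOn g (Set.Icc a b))
    (hlc : ∀ x ∈ Set.Ioc a b, ContinuousWithinAt g (Set.Iio x) x)
    (μ : Measure ℝ)
    (hμ : ∀ c d, a ≤ c → c ≤ d → d ≤ b →
      μ (Set.Ico c d) = ENNReal.ofReal (g d - g c))
    (x₀ : ℝ) (hx₀ : x₀ ∈ Set.Icc a b)
    (hnull : μ {x ∈ Set.Icc a b | g x = g x₀} = 0) :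
    ∀ f : ℝ → ℝ, MemLp f 2 (μ.restrict (Set.Ico a b)) → ∀ ε > 0,
      ∃ h : ℝ → ℝ, UnifGCont g a b h ∧ h x₀ = 0 ∧
        eLpNorm (f - h) 2 (μ.restrict (Set.Ico a b)) < ENNReal.ofReal ε := by
  intro f hf ε hε
  have hε4 : (0:ℝ) < ε/4 := by linarith
  -- the clamped version of `g`, monotone on all of ℝ
  set G : ℝ → ℝ := fun x => g (max a (min x b)) with hGdef
  have hclamp : ∀ x, max a (min x b) ∈ Set.Icc a b := fun x =>
    ⟨le_max_left _ _, max_le hab (min_le_right _ _)⟩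
  have hGmono : Monotone G := fun x y hxy =>
    hmono (hclamp x) (hclamp y) (max_le_max le_rfl (min_le_min_right _ hxy))
  have hGeq : ∀ x ∈ Set.Icc a b, G x = g x := by
    intro x hx
    simp only [hGdef]
    rw [min_eq_left hx.2, max_eq_right hx.1]
  have hGmeas : Measurable G := hGmono.measurable
  set ν := μ.restrict (Set.Ico a b) with hνdef
  haveI hνfin : IsFiniteMeasure ν := ⟨by
    rw [hνdef, Measure.restrict_apply_univ, hμ a b le_rfl hab le_rfl]
    exact ENNReal.ofReal_lt_top⟩
  set m := ν.map G with hmdef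
  haveI hmfin : IsFiniteMeasure m := ⟨by
    rw [hmdef, Measure.map_apply hGmeas MeasurableSet.univ]
    exact measure_lt_top ν _⟩
  -- the "right endpoint of the level set" map
  set S : ℝ → Set ℝ := fun t => {a} ∪ {y ∈ Set.Icc a b | g y ≤ t} with hSdef
  set ρ : ℝ → ℝ := fun t => sSup (S t) with hρdef
  have hSb : ∀ t, BddAbove (S t) := fun t =>
    ⟨b, by rintro y (rfl | hy); exacts [hab, hy.1.2]⟩
  have hSne : ∀ t, (S t).Nonempty := fun t => ⟨a, Or.inl rfl⟩
  have hρmono : Monotone ρ := fun s t hst =>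
    csSup_le_csSup (hSb t) (hSne s)
      (Set.union_subset_union_right _ (fun y hy => ⟨hy.1, hy.2.trans hst⟩))
  have hρmeas : Measurable ρ := hρmono.measurable
  -- a measurable representative of f
  obtain ⟨f', hf'm, hff'⟩ : ∃ f', StronglyMeasurable f' ∧ f =ᵐ[ν] f' :=
    ⟨hf.1.mk f, hf.1.stronglyMeasurable_mk, hf.1.ae_eq_mk⟩
  have hf'meas : Measurable f' := hf'm.measurable
  set φ : ℝ → ℝ := fun t => f' (ρ t) with hφdef
  have hφmeas : Measurable φ := hf'meas.comp hρmeas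
  -- the key a.e. identity : f = φ ∘ G  a.e.
  have hNnull : ν {x | x ∈ Set.Ico a b ∧ ∃ y, x < y ∧ y ∈ Set.Icc a b ∧ g y = g x} = 0 :=
    le_antisymm (le_trans (Measure.restrict_apply_le _ _)
      (le_of_eq (rightLevel_null a b hab g hmono μ hμ))) zero_le
  have hkey : ∀ᵐ x ∂ν, f x = φ (G x) := by
    have h1 : ∀ᵐ x ∂ν, x ∈ Set.Ico a b := ae_restrict_mem measurableSet_Ico
    have h2 : ∀ᵐ x ∂ν, x ∉ {x | x ∈ Set.Ico a b ∧ ∃ y, x < y ∧ y ∈ Set.Icc a b ∧ g y = g x} :=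
      measure_eq_zero_iff_ae_notMem.1 hNnull
    filter_upwards [h1, h2, hff'] with x hx hxN hfx
    have hxI : x ∈ Set.Icc a b := ⟨hx.1, hx.2.le⟩
    have hρx : ρ (g x) = x := by
      refine le_antisymm ?_ (le_csSup (hSb _) (Or.inr ⟨hxI, le_rfl⟩))
      by_contra hlt
      push_neg at hlt
      obtain ⟨y, hy, hxy⟩ := exists_lt_of_lt_csSup (hSne _) hlt
      rcases hy with rfl | hy
      · exact absurd hxy (not_lt.2 hx.1)
      · exact hxN ⟨hx, y, hxy, hy.1, le_antisymm hy.2 (hmono hxI hy.1 hxy.le)⟩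
    rw [hfx, hGeq x hxI, hφdef]
    simp only []
    rw [hρx]
  have hfφG : MemLp (φ ∘ G) 2 ν := hf.ae_eq hkey
  have hφm : MemLp φ 2 m := by
    rw [hmdef]
    exact (memLp_map_measure_iff hφmeas.aestronglyMeasurable hGmeas.aemeasurable).2 hfφG
  -- approximate φ by a continuous compactly supported ψ in L²(m)
  obtain ⟨ψ, ψsupp, hψclose, ψcont, -⟩ :=
    hφm.exists_hasCompactSupport_eLpNorm_sub_le (by norm_num : (2:ℝ≥0∞) ≠ ∞)
      (ε := ENNReal.ofReal (ε/4)) (ENNReal.ofReal_pos.2 hε4).ne'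
  -- a uniform bound for ψ
  obtain ⟨tC, htC⟩ := (ψcont.norm).exists_forall_ge_of_hasCompactSupport ψsupp.norm
  set C := ‖ψ tC‖ with hCdef
  have hC0 : (0:ℝ) ≤ C := norm_nonneg _
  have hCb : ∀ t, |ψ t| ≤ C := fun t => htC t
  -- the atom of m at g x₀ is null
  set c₀ := g x₀ with hc₀def
  have hGx₀ : G x₀ = c₀ := hGeq x₀ hx₀
  have hatom : m {c₀} = 0 := by
    rw [hmdef, Measure.map_apply hGmeas (measurableSet_singleton c₀), hνdef,
      Measure.restrict_apply (hGmeas (measurableSet_singleton c₀))]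
    refine measure_mono_null (fun x hx => ?_) hnull
    have hxI : x ∈ Set.Icc a b := ⟨hx.2.1, hx.2.2.le⟩
    have : G x = c₀ := hx.1
    exact ⟨hxI, by rw [← hGeq x hxI]; exact this⟩
  -- choose a small ball around c₀
  set d := ε/4/(C+1) with hddef
  have hd0 : (0:ℝ) < d := by positivity
  have htend : Tendsto (fun n : ℕ => m (Metric.closedBall c₀ (1/(n+1)))) atTop (𝓝 0) := by
    have hint : ⋂ n : ℕ, Metric.closedBall c₀ (1/((n:ℝ)+1)) = {c₀} := by
      ext t
      simp only [Set.mem_iInter, Metric.mem_closedBall, Set.mem_singleton_iff]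
      constructor
      · intro hhh
        by_contra hne
        obtain ⟨k, hk⟩ := exists_nat_one_div_lt (dist_pos.2 hne)
        exact absurd (hhh k) (not_le.2 hk)
      · rintro rfl n
        rw [dist_self]
        positivity
    have htd := tendsto_measure_iInter_atTop (μ := m)
      (s := fun n : ℕ => Metric.closedBall c₀ (1/((n:ℝ)+1)))
      (fun n => Metric.isClosed_closedBall.measurableSet.nullMeasurableSet)
      (fun i j hij => Metric.closedBall_subset_closedBall (by
        have : (i:ℝ) + 1 ≤ (j:ℝ) + 1 := by exact_mod_cast Nat.succ_le_succ hij
        exact one_div_le_one_div_of_le (by positivity) this))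
      ⟨0, measure_ne_top m _⟩
    rw [hint, hatom] at htd
    exact htd
  obtain ⟨n, hn⟩ := (htend.eventually_lt_const
    (show (0:ℝ≥0∞) < ENNReal.ofReal (d^2) from ENNReal.ofReal_pos.2 (by positivity))).exists
  -- the cutoff
  set χ : ℝ → ℝ := fun t => min 1 (((n:ℝ)+1) * |t - c₀|) with hχdef
  have χcont : Continuous χ :=
    continuous_const.min (continuous_const.mul ((continuous_id.sub continuous_const).abs))
  have χ0 : ∀ t, 0 ≤ χ t := fun t => le_min (by norm_num) (by positivity)
  have χle : ∀ t, χ t ≤ 1 := fun t => min_le_left _ _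
  have χ1 : ∀ t, t ∉ Metric.closedBall c₀ (1/((n:ℝ)+1)) → χ t = 1 := by
    intro t ht
    rw [Metric.mem_closedBall, not_le, Real.dist_eq] at ht
    have hn1 : (0:ℝ) < (n:ℝ)+1 := by positivity
    have h1 := (div_lt_iff₀ hn1).1 ht
    exact min_eq_left (by nlinarith)
  set ψχ : ℝ → ℝ := fun t => ψ t * χ t with hψχdef
  have hψχcont : Continuous ψχ := ψcont.mul χcont
  have hψχsupp : HasCompactSupport ψχ := ψsupp.mul_right
  have hψχuc : UniformContinuous ψχ := hψχsupp.uniformContinuous_of_continuous hψχcont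
  refine ⟨fun x => ψχ (G x), ?_, ?_, ?_⟩
  · -- uniform g-continuity
    intro ε' hε'
    obtain ⟨δ, hδ, hδ'⟩ := Metric.uniformContinuous_iff.1 hψχuc ε' hε'
    refine ⟨δ, hδ, fun x hx y hy hxy => ?_⟩
    have hd1 : dist (G x) (G y) < δ := by
      rw [Real.dist_eq, hGeq x hx, hGeq y hy]; exact hxy
    have := hδ' hd1
    rwa [Real.dist_eq] at this
  · -- vanishing at x₀
    show ψχ (G x₀) = 0
    rw [hGx₀]
    simp [hψχdef, hχdef]
  · -- the estimate
    have hae : (f - fun x => ψχ (G x)) =ᵐ[ν] ((fun t => φ t - ψχ t) ∘ G) := by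
      filter_upwards [hkey] with x hx
      simp only [Pi.sub_apply, Function.comp_apply, hx]
    rw [eLpNorm_congr_ae hae]
    have hmeasφψ : AEStronglyMeasurable (fun t => φ t - ψχ t) m :=
      (hφmeas.sub hψχcont.measurable).aestronglyMeasurable
    have hmap : eLpNorm ((fun t => φ t - ψχ t) ∘ G) 2 ν = eLpNorm (fun t => φ t - ψχ t) 2 m := by
      rw [hmdef]
      exact (eLpNorm_map_measure hmeasφψ hGmeas.aemeasurable).symm
    rw [hmap]
    have htail : eLpNorm (fun t => ψ t - ψχ t) 2 m ≤ ENNReal.ofReal (ε/4) := by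
      have hb : ∀ t, ‖ψ t - ψχ t‖ ≤
          ‖(Metric.closedBall c₀ (1/((n:ℝ)+1))).indicator (fun _ => C) t‖ := by
        intro t
        by_cases ht : t ∈ Metric.closedBall c₀ (1/((n:ℝ)+1))
        · rw [Set.indicator_of_mem ht]
          have h1 : ψ t - ψχ t = ψ t * (1 - χ t) := by
            simp only [hψχdef]; ring
          rw [h1, Real.norm_eq_abs, abs_mul, Real.norm_eq_abs, abs_of_nonneg hC0]
          have h2 : |1 - χ t| ≤ 1 := by
            rw [abs_of_nonneg (by linarith [χle t])]
            linarith [χ0 t]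
          calc |ψ t| * |1 - χ t| ≤ C * 1 :=
                mul_le_mul (hCb t) h2 (abs_nonneg _) hC0
            _ = C := mul_one C
        · rw [Set.indicator_of_notMem ht]
          have hψt : ψχ t = ψ t := by simp only [hψχdef, χ1 t ht, mul_one]
          simp [hψt]
      refine le_trans (eLpNorm_mono hb) ?_
      rw [eLpNorm_indicator_const Metric.isClosed_closedBall.measurableSet
        (by norm_num : (2:ℝ≥0∞) ≠ 0) (by norm_num : (2:ℝ≥0∞) ≠ ∞)]
      have h2r : (1 / (2:ℝ≥0∞).toReal) = ((1:ℝ)/2) := by norm_num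
      rw [h2r]
      have hCoe : ‖C‖ₑ = ENNReal.ofReal C := Real.enorm_eq_ofReal hC0
      rw [hCoe]
      have hball : m (Metric.closedBall c₀ (1/((n:ℝ)+1))) ^ ((1:ℝ)/2) ≤ ENNReal.ofReal d := by
        calc m (Metric.closedBall c₀ (1/((n:ℝ)+1))) ^ ((1:ℝ)/2)
            ≤ (ENNReal.ofReal (d^2)) ^ ((1:ℝ)/2) :=
              ENNReal.rpow_le_rpow hn.le (by norm_num)
          _ = ENNReal.ofReal ((d^2) ^ ((1:ℝ)/2)) :=
              ENNReal.ofReal_rpow_of_nonneg (sq_nonneg d) (by norm_num)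
          _ = ENNReal.ofReal d := by
              congr 1
              rw [← Real.rpow_natCast d 2, ← Real.rpow_mul hd0.le]
              norm_num
      calc ENNReal.ofReal C * m (Metric.closedBall c₀ (1/((n:ℝ)+1))) ^ ((1:ℝ)/2)
          ≤ ENNReal.ofReal C * ENNReal.ofReal d := mul_le_mul_right hball _
        _ = ENNReal.ofReal (C * d) := (ENNReal.ofReal_mul hC0).symm
        _ ≤ ENNReal.ofReal (ε/4) := ENNReal.ofReal_le_ofReal (by
            have hC1 : (0:ℝ) < C + 1 := by linarith
            calc C * d = (ε/4) * (C/(C+1)) := by rw [hddef]; ring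
              _ ≤ (ε/4) * 1 :=
                mul_le_mul_of_nonneg_left ((div_le_one hC1).2 (by linarith)) hε4.le
              _ = ε/4 := mul_one _)
    have hsplit : (fun t => φ t - ψχ t) = (fun t => φ t - ψ t) + (fun t => ψ t - ψχ t) := by
      funext t; simp only [Pi.add_apply]; ring
    have hψclose' : eLpNorm (fun t => φ t - ψ t) 2 m ≤ ENNReal.ofReal (ε/4) := hψclose
    calc eLpNorm (fun t => φ t - ψχ t) 2 m
        ≤ eLpNorm (fun t => φ t - ψ t) 2 m + eLpNorm (fun t => ψ t - ψχ t) 2 m := by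
          rw [hsplit]
          exact eLpNorm_add_le (hφmeas.sub ψcont.measurable).aestronglyMeasurable
            (ψcont.measurable.sub hψχcont.measurable).aestronglyMeasurable one_le_two
      _ ≤ ENNReal.ofReal (ε/4) + ENNReal.ofReal (ε/4) := add_le_add hψclose' htail
      _ = ENNReal.ofReal (ε/4 + ε/4) := (ENNReal.ofReal_add hε4.le hε4.le).symm
      _ < ENNReal.ofReal ε := (ENNReal.ofReal_lt_ofReal_iff hε).2 (by linarith)
end

section
/- Let g:[a,b]→ℝ be a derivator. The set M = {F ∈ AC_g([a,b]) : F'_g ∈ L²_g([a,b])} is dense in UC_g([a,b]) with respect to the supremum norm. -/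
open MeasureTheory Set Filter

lemma ucg_partition (a b : ℝ) (hab : a ≤ b) (g : ℝ → ℝ)
    (hmono : MonotoneOn g (Set.Icc a b))
    (hlc : ∀ x ∈ Set.Ioc a b, ContinuousWithinAt g (Set.Iio x) x)
    (δ : ℝ) (hδ : 0 < δ) :
    ∃ n : ℕ, ∃ T : ℕ → ℝ, T 0 = a ∧ T n = b ∧ (∀ k, T k ≤ T (k+1)) ∧
      (∀ k, T k ∈ Set.Icc a b) ∧
      (∀ k, ∀ x ∈ Set.Ioc (T k) (T (k+1)), ∀ y ∈ Set.Ioc (T k) (T (k+1)),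
        g y - g x ≤ δ) := by
  set I : ℝ → ℝ := fun t => sInf (g '' Set.Ioc t b) with hI
  set nxt : ℝ → ℝ := fun t => sSup {s | s ∈ Set.Icc t b ∧ g s ≤ I t + δ} with hnxt
  -- basic facts for t ∈ [a, b)
  have hne : ∀ t, t < b → (g '' Set.Ioc t b).Nonempty := fun t ht =>
    ⟨g b, mem_image_of_mem g ⟨ht, le_rfl⟩⟩
  have hbdd : ∀ t, a ≤ t → BddBelow (g '' Set.Ioc t b) := by
    intro t hta
    refine ⟨g t, ?_⟩
    rintro v ⟨s, hs, rfl⟩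
    exact hmono ⟨hta, hs.1.le.trans hs.2⟩ ⟨hta.trans hs.1.le, hs.2⟩ hs.1.le
  have hIlo : ∀ t, a ≤ t → ∀ x ∈ Set.Ioc t b, I t ≤ g x := by
    intro t ht x hx
    exact csInf_le (hbdd t ht) (mem_image_of_mem g hx)
  have hIle : ∀ t, a ≤ t → t < b → I t ≤ g b := fun t h1 h2 =>
    hIlo t h1 b ⟨h2, le_rfl⟩
  have hgI : ∀ t, a ≤ t → t < b → g t ≤ I t := by
    intro t h1 h2
    refine le_csInf (hne t h2) ?_
    rintro v ⟨s, hs, rfl⟩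
    exact hmono ⟨h1, h2.le⟩ ⟨h1.trans hs.1.le, hs.2⟩ hs.1.le
  -- nxt facts
  have hSbdd : ∀ t, BddAbove {s | s ∈ Set.Icc t b ∧ g s ≤ I t + δ} :=
    fun t => ⟨b, fun s hs => hs.1.2⟩
  have hnxt_gt : ∀ t, a ≤ t → t < b → t < nxt t := by
    intro t h1 h2
    obtain ⟨v, hv, hvlt⟩ := exists_lt_of_csInf_lt (hne t h2) (lt_add_of_pos_right (I t) hδ)
    obtain ⟨s, hs, rfl⟩ := hv
    have hsS : s ∈ {s | s ∈ Set.Icc t b ∧ g s ≤ I t + δ} := ⟨⟨hs.1.le, hs.2⟩, hvlt.le⟩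
    exact lt_of_lt_of_le hs.1 (le_csSup (hSbdd t) hsS)
  have hnxt_le : ∀ t, a ≤ t → t < b → nxt t ≤ b := by
    intro t h1 h2
    exact csSup_le ⟨t, ⟨⟨le_rfl, h2.le⟩, (hgI t h1 h2).trans (by linarith)⟩⟩ fun s hs => hs.1.2
  have hSne : ∀ t, a ≤ t → t < b → {s | s ∈ Set.Icc t b ∧ g s ≤ I t + δ}.Nonempty := by
    intro t h1 h2
    exact ⟨t, ⟨⟨le_rfl, h2.le⟩, (hgI t h1 h2).trans (by linarith)⟩⟩
  have hosc' : ∀ t, a ≤ t → t < b → ∀ x, t < x → x < nxt t → g x ≤ I t + δ := by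
    intro t h1 h2 x hx1 hx2
    obtain ⟨s, hsS, hxs⟩ := exists_lt_of_lt_csSup (hSne t h1 h2) hx2
    refine le_trans ?_ hsS.2
    exact hmono ⟨h1.trans hx1.le, (hx2.le.trans (hnxt_le t h1 h2))⟩
      ⟨h1.trans hsS.1.1, hsS.1.2⟩ hxs.le
  have hosc : ∀ t, a ≤ t → t < b → ∀ x ∈ Set.Ioc t (nxt t), g x ≤ I t + δ := by
    intro t h1 h2 x hx
    rcases lt_or_eq_of_le hx.2 with hlt | heq
    · exact hosc' t h1 h2 x hx.1 hlt
    · -- x = nxt t, use left continuity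
      have hmem : nxt t ∈ Set.Ioc a b := ⟨h1.trans_lt (hnxt_gt t h1 h2), hnxt_le t h1 h2⟩
      have hcont := hlc (nxt t) hmem
      have hev : ∀ᶠ y in nhdsWithin (nxt t) (Set.Iio (nxt t)), g y ≤ I t + δ := by
        filter_upwards [Ioo_mem_nhdsLT_of_mem
          (show nxt t ∈ Set.Ioc t (nxt t) from ⟨hnxt_gt t h1 h2, le_rfl⟩)] with y hy
        exact hosc' t h1 h2 y hy.1 hy.2
      haveI : (nhdsWithin (nxt t) (Set.Iio (nxt t))).NeBot :=
        nhdsWithin_Iio_self_neBot' ⟨t, hnxt_gt t h1 h2⟩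
      rw [heq]
      exact le_of_tendsto hcont hev
  -- progress
  have hprog : ∀ t, a ≤ t → t < b → nxt t < b → I t + δ ≤ I (nxt t) := by
    intro t h1 h2 h3
    refine le_csInf (hne (nxt t) h3) ?_
    rintro v ⟨s, hs, rfl⟩
    by_contra hlt
    push_neg at hlt
    have hsS : s ∈ {s | s ∈ Set.Icc t b ∧ g s ≤ I t + δ} :=
      ⟨⟨((hnxt_gt t h1 h2).trans hs.1).le, hs.2⟩, hlt.le⟩
    exact absurd (le_csSup (hSbdd t) hsS) (not_le.2 hs.1)
  -- the recursive sequence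
  set T : ℕ → ℝ := fun k => Nat.rec a (fun _ t => if t < b then nxt t else b) k with hT
  have hT0 : T 0 = a := rfl
  have hTsucc : ∀ k, T (k+1) = if T k < b then nxt (T k) else b := fun k => rfl
  have hTmem : ∀ k, T k ∈ Set.Icc a b := by
    intro k
    induction k with
    | zero => exact ⟨le_rfl, hab⟩
    | succ k ih =>
      rw [hTsucc]
      split_ifs with h
      · exact ⟨ih.1.trans (hnxt_gt _ ih.1 h).le, hnxt_le _ ih.1 h⟩
      · exact ⟨hab, le_rfl⟩
  have hTstep : ∀ k, T k ≤ T (k+1) := by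
    intro k
    rw [hTsucc]
    split_ifs with h
    · exact (hnxt_gt _ (hTmem k).1 h).le
    · exact (hTmem k).2
  -- termination
  have hterm : ∃ n, T n = b := by
    by_contra hc
    push_neg at hc
    have hlt : ∀ k, T k < b := fun k => lt_of_le_of_ne (hTmem k).2 (hc k)
    have hgrow : ∀ k, g a + k * δ ≤ I (T k) := by
      intro k
      induction k with
      | zero => simpa [hT0] using hgI a le_rfl (hT0 ▸ hlt 0)
      | succ k ih =>
        have hk1 : T (k+1) = nxt (T k) := by rw [hTsucc, if_pos (hlt k)]
        have h2 : nxt (T k) < b := hk1 ▸ hlt (k+1)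
        have h1 := hprog (T k) (hTmem k).1 (hlt k) h2
        rw [hk1]
        push_cast
        linarith
    obtain ⟨k, hk⟩ := exists_nat_gt ((g b - g a) / δ)
    have := hgrow k
    have h2 := hIle (T k) (hTmem k).1 (hlt k)
    have : g a + k * δ ≤ g b := this.trans h2
    have : (k : ℝ) ≤ (g b - g a) / δ := by
      rw [le_div_iff₀ hδ]; linarith
    linarith
  obtain ⟨n, hn⟩ := hterm
  refine ⟨n, T, hT0, hn, hTstep, hTmem, ?_⟩
  intro k x hx y hy
  by_cases hk : T k < b
  · have h1 := hosc (T k) (hTmem k).1 hk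
    rw [hTsucc k, if_pos hk] at hx hy
    have hgy := h1 y hy
    have hgx := hIlo (T k) (hTmem k).1 x ⟨hx.1, hx.2.trans (hnxt_le _ (hTmem k).1 hk)⟩
    linarith
  · have hkb : T k = b := le_antisymm (hTmem k).2 (not_lt.1 hk)
    rw [hTsucc k, if_neg hk, hkb] at hx
    exact absurd hx.2 (not_le.2 hx.1)

lemma ucg_locate (T : ℕ → ℝ) :
    ∀ n : ℕ, ∀ x : ℝ, T 0 < x → x ≤ T n → ∃ k < n, T k < x ∧ x ≤ T (k+1) := by
  intro n
  induction n with
  | zero => intro x h1 h2; exact absurd (h1.trans_le h2) (lt_irrefl _)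
  | succ n ih =>
    intro x h1 h2
    by_cases hx : x ≤ T n
    · obtain ⟨k, hk, h⟩ := ih x h1 hx
      exact ⟨k, hk.trans (Nat.lt_succ_self n), h⟩
    · exact ⟨n, Nat.lt_succ_self n, not_le.1 hx, h2⟩


/-- The set `M` of `g`-absolutely continuous functions (i.e. functions of the form
`F t = F a + ∫_{[a,t)} h dμ_g`) whose `g`-derivative `h` is in `L²_g` is dense in
`UC_g([a,b])` for the supremum norm. -/
theorem acg_with_L2_derivative_dense_in_ucg
    (a b : ℝ) (hab : a ≤ b) (g : ℝ → ℝ)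
    (hmono : MonotoneOn g (Set.Icc a b))
    (hlc : ∀ x ∈ Set.Ioc a b, ContinuousWithinAt g (Set.Iio x) x)
    (μ : Measure ℝ)
    (hμ : ∀ c d, a ≤ c → c ≤ d → d ≤ b →
      μ (Set.Ico c d) = ENNReal.ofReal (g d - g c)) :
    ∀ f : ℝ → ℝ, UnifGCont g a b f → ∀ ε > 0,
      ∃ F h : ℝ → ℝ,
        Integrable h (μ.restrict (Set.Ico a b)) ∧
        MemLp h 2 (μ.restrict (Set.Ico a b)) ∧
        (∀ t ∈ Set.Icc a b, F t = F a + ∫ s in Set.Ico a t, h s ∂μ) ∧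
        (∀ x ∈ Set.Icc a b, |f x - F x| ≤ ε) := by
  intro f hf ε hε
  -- f is constant on g-level sets
  have hconst : ∀ x ∈ Set.Icc a b, ∀ y ∈ Set.Icc a b, g x = g y → f x = f y := by
    intro x hx y hy hg
    by_contra hne
    have h1 : 0 < |f x - f y| := abs_pos.2 (sub_ne_zero.2 fun h => hne h)
    obtain ⟨δ, hδ, H⟩ := hf |f x - f y| h1
    exact lt_irrefl _ (H x hx y hy (by rw [hg]; simpa using hδ))
  -- boundedness of f
  obtain ⟨δ₁, hδ₁, H₁⟩ := hf 1 one_pos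
  obtain ⟨n₁, T₁, hT₁0, hT₁n, hT₁m, hT₁mem, hT₁osc⟩ :=
    ucg_partition a b hab g hmono hlc (δ₁/2) (by linarith)
  set M : ℝ := 1 + ∑ j ∈ Finset.range (n₁+1), |f (T₁ j)| with hM
  have hsum_nonneg : (0:ℝ) ≤ ∑ j ∈ Finset.range (n₁+1), |f (T₁ j)| :=
    Finset.sum_nonneg fun j _ => abs_nonneg _
  have hMpos : 0 < M := by positivity
  have hbound : ∀ x ∈ Set.Icc a b, |f x| ≤ M := by
    intro x hx
    have hsingle : ∀ j ∈ Finset.range (n₁+1),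
        |f (T₁ j)| ≤ ∑ i ∈ Finset.range (n₁+1), |f (T₁ i)| :=
      fun j hj => Finset.single_le_sum (f := fun i => |f (T₁ i)|) (fun i _ => abs_nonneg _) hj
    rcases eq_or_lt_of_le hx.1 with heq | hlt
    · have := hsingle 0 (Finset.mem_range.2 (Nat.succ_pos _))
      rw [← heq, ← hT₁0]
      linarith
    · obtain ⟨k, hk, hk1, hk2⟩ := ucg_locate T₁ n₁ x (hT₁0 ▸ hlt) (hT₁n ▸ hx.2)
      have hTin : T₁ (k+1) ∈ Set.Ioc (T₁ k) (T₁ (k+1)) := ⟨hk1.trans_le hk2, le_rfl⟩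
      have hxin : x ∈ Set.Ioc (T₁ k) (T₁ (k+1)) := ⟨hk1, hk2⟩
      have h1 := hT₁osc k x hxin (T₁ (k+1)) hTin
      have h2 := hT₁osc k (T₁ (k+1)) hTin x hxin
      have hgd : |g x - g (T₁ (k+1))| < δ₁ := by
        rw [abs_sub_lt_iff]; constructor <;> linarith
      have := H₁ x hx (T₁ (k+1)) (hT₁mem _) hgd
      have h3 := hsingle (k+1) (Finset.mem_range.2 (Nat.succ_lt_succ hk))
      have : |f x| ≤ |f (T₁ (k+1))| + 1 := by
        have := abs_sub_abs_le_abs_sub (f x) (f (T₁ (k+1)))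
        linarith [this, (H₁ x hx (T₁ (k+1)) (hT₁mem _) hgd)]
      linarith
  -- main construction
  obtain ⟨δ, hδpos, H⟩ := hf (ε/2) (by linarith)
  have hδ'pos : 0 < min (δ/2) (δ*ε/(4*M)) := by positivity
  set δ' : ℝ := min (δ/2) (δ*ε/(4*M)) with hδ'def
  have hδ'le1 : δ' ≤ δ/2 := min_le_left _ _
  have hδ'le2 : δ' ≤ δ*ε/(4*M) := min_le_right _ _
  obtain ⟨n, T, hT0, hTn, hTm, hTmem, hTosc⟩ :=
    ucg_partition a b hab g hmono hlc δ' hδ'pos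
  have hTmono : Monotone T := monotone_nat_of_le_succ hTm
  set c : ℕ → ℝ := fun k => if g (T (k+1)) = g (T k) then 0
    else (f (T (k+1)) - f (T k)) / (g (T (k+1)) - g (T k)) with hc
  have hkey : ∀ k, c k * (g (T (k+1)) - g (T k)) = f (T (k+1)) - f (T k) := by
    intro k
    by_cases hgk : g (T (k+1)) = g (T k)
    · have hc0 : c k = 0 := if_pos hgk
      rw [hc0, hconst (T (k+1)) (hTmem _) (T k) (hTmem _) hgk]
      simp
    · have hc1 : c k = (f (T (k+1)) - f (T k)) / (g (T (k+1)) - g (T k)) := if_neg hgk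
      rw [hc1, div_mul_cancel₀ _ (sub_ne_zero.2 hgk)]
  set m : ℕ → ℝ → ℝ := fun k x => max (T k) (min (T (k+1)) x) with hm
  have hmx : ∀ k x, m k x = max (T k) (min (T (k+1)) x) := fun _ _ => rfl
  set F : ℝ → ℝ := fun x => f a + ∑ k ∈ Finset.range n, c k * (g (m k x) - g (T k)) with hFdef
  have hFx : ∀ x, F x = f a + ∑ k ∈ Finset.range n, c k * (g (m k x) - g (T k)) :=
    fun _ => rfl
  set h : ℝ → ℝ := fun s => ∑ k ∈ Finset.range n,
    (Set.Ico (T k) (T (k+1))).indicator (fun _ => c k) s with hhdef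
  -- finiteness
  have hfinmeas : ∀ t, a ≤ t → t ≤ b → IsFiniteMeasure (μ.restrict (Set.Ico a t)) := by
    intro t h1 h2
    constructor
    rw [Measure.restrict_apply_univ, hμ a t le_rfl h1 h2]
    exact ENNReal.ofReal_lt_top
  have hint : ∀ t, a ≤ t → t ≤ b → Integrable h (μ.restrict (Set.Ico a t)) := by
    intro t h1 h2
    haveI := hfinmeas t h1 h2
    apply integrable_finset_sum
    intro k _
    exact (integrable_const (c k)).indicator measurableSet_Ico
  have hmem2 : MemLp h 2 (μ.restrict (Set.Ico a b)) := by
    haveI := hfinmeas b hab le_rfl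
    apply memLp_finset_sum
    intro k _
    exact MemLp.indicator measurableSet_Ico (memLp_const (c k))
  -- the integral of h over [a, t)
  have hFint : ∀ t, a ≤ t → t ≤ b →
      (∫ s in Set.Ico a t, h s ∂μ) = ∑ k ∈ Finset.range n, c k * (g (m k t) - g (T k)) := by
    intro t h1 h2
    haveI := hfinmeas t h1 h2
    rw [hhdef]
    rw [integral_finset_sum _ (fun k _ => (integrable_const (c k)).indicator measurableSet_Ico)]
    refine Finset.sum_congr rfl fun k _ => ?_
    rw [integral_indicator_const _ measurableSet_Ico, measureReal_def, Measure.restrict_apply measurableSet_Ico,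
      Set.Ico_inter_Ico, sup_eq_left.2 (hTmem k).1]
    by_cases hle : T k ≤ T (k+1) ⊓ t
    · have hmk : m k t = T (k+1) ⊓ t := max_eq_right hle
      rw [hμ (T k) (T (k+1) ⊓ t) (hTmem k).1 hle (le_trans inf_le_right h2), hmk]
      rw [ENNReal.toReal_ofReal (sub_nonneg.2 (hmono (hTmem k)
        ⟨(hTmem k).1.trans hle, le_trans inf_le_right h2⟩ hle))]
      rw [smul_eq_mul, mul_comm]
    · have hmk : m k t = T k := max_eq_left (le_of_not_ge hle)
      rw [Set.Ico_eq_empty (fun hcon => hle hcon.le), measure_empty, hmk]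
      simp
  have hFa : F a = f a := by
    rw [hFx]
    have hz : ∀ k ∈ Finset.range n, c k * (g (m k a) - g (T k)) = 0 := by
      intro k _
      have : m k a = T k := max_eq_left (inf_le_right.trans (hTmem k).1)
      rw [this, sub_self, mul_zero]
    rw [Finset.sum_eq_zero hz, add_zero]
  -- explicit formula for F on each subinterval
  have hform : ∀ k, k < n → ∀ x, T k < x → x ≤ T (k+1) →
      F x = f (T k) + c k * (g x - g (T k)) := by
    intro k hk x h1 h2
    have hsplit : ∑ j ∈ Finset.range n, c j * (g (m j x) - g (T j))
        = ∑ j ∈ Finset.range (k+1), c j * (g (m j x) - g (T j))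
          + ∑ j ∈ Finset.Ico (k+1) n, c j * (g (m j x) - g (T j)) := by
      rw [Finset.range_eq_Ico, ← Finset.sum_Ico_consecutive _ (Nat.zero_le (k+1)) hk,
        ← Finset.range_eq_Ico]
    have hzero : ∑ j ∈ Finset.Ico (k+1) n, c j * (g (m j x) - g (T j)) = 0 := by
      refine Finset.sum_eq_zero fun j hj => ?_
      have hjk : k+1 ≤ j := (Finset.mem_Ico.1 hj).1
      have hxle : x ≤ T j := h2.trans (hTmono hjk)
      have : m j x = T j := max_eq_left (inf_le_right.trans hxle)
      rw [this, sub_self, mul_zero]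
    have hlow : ∑ j ∈ Finset.range k, c j * (g (m j x) - g (T j))
        = ∑ j ∈ Finset.range k, (f (T (j+1)) - f (T j)) := by
      refine Finset.sum_congr rfl fun j hj => ?_
      have hjk : j + 1 ≤ k := Finset.mem_range.1 hj
      have hTx : T (j+1) ≤ x := (hTmono hjk).trans h1.le
      have hmj : m j x = T (j+1) := by
        rw [hmx, min_eq_left hTx, max_eq_right (hTm j)]
      rw [hmj, hkey j]
    have hmk : m k x = x := by
      rw [hmx, min_eq_right h2, max_eq_right h1.le]
    rw [hFx, hsplit, hzero, Finset.sum_range_succ, hlow,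
      Finset.sum_range_sub (fun j => f (T j)), hmk, hT0]
    ring
  refine ⟨F, h, hint b hab le_rfl, hmem2, ?_, ?_⟩
  · intro t ht
    rw [hFint t ht.1 ht.2, hFa, hFx t]
  · -- the approximation bound
    intro x hx
    rcases eq_or_lt_of_le hx.1 with heq | hlt
    · rw [← heq, hFa]
      simp only [sub_self, abs_zero]
      linarith
    · obtain ⟨k, hk, h1, h2⟩ := ucg_locate T n x (hT0 ▸ hlt) (hTn ▸ hx.2)
      have hxin : x ∈ Set.Ioc (T k) (T (k+1)) := ⟨h1, h2⟩
      have hTin : T (k+1) ∈ Set.Ioc (T k) (T (k+1)) := ⟨h1.trans_le h2, le_rfl⟩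
      have he1 : g (T (k+1)) - g x ≤ δ' := hTosc k x hxin (T (k+1)) hTin
      have he0 : 0 ≤ g (T (k+1)) - g x := sub_nonneg.2 (hmono hx (hTmem _) h2)
      have hfx : |f x - f (T (k+1))| < ε/2 := by
        refine H x hx (T (k+1)) (hTmem _) ?_
        rw [abs_sub_lt_iff]
        constructor <;> linarith
      have hgk0 : g (T k) ≤ g x := hmono (hTmem k) hx h1.le
      have hFxval := hform k hk x h1 h2
      have hdiff : F x - f (T (k+1)) = c k * (g x - g (T (k+1))) := by
        have e1 : c k * (g x - g (T (k+1)))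
            = c k * (g x - g (T k)) - c k * (g (T (k+1)) - g (T k)) := by ring
        rw [hFxval, e1, hkey k]
        ring
      have habs : |c k * (g x - g (T (k+1)))| ≤ ε/2 := by
        by_cases hgk : g (T (k+1)) = g (T k)
        · have hc0 : c k = 0 := if_pos hgk
          rw [hc0, zero_mul, abs_zero]
          linarith
        · have hD : 0 < g (T (k+1)) - g (T k) :=
            lt_of_le_of_ne (sub_nonneg.2 (hmono (hTmem k) (hTmem (k+1)) (hTm k)))
              (fun hcon => hgk (by linarith))
          have hck : c k = (f (T (k+1)) - f (T k)) / (g (T (k+1)) - g (T k)) := if_neg hgk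
          have habs2 : |c k * (g x - g (T (k+1)))|
              = |f (T (k+1)) - f (T k)| * (g (T (k+1)) - g x) / (g (T (k+1)) - g (T k)) := by
            rw [hck, abs_mul, abs_div, abs_of_pos hD, abs_sub_comm (g x), abs_of_nonneg he0]
            ring
          rw [habs2]
          by_cases hDδ : g (T (k+1)) - g (T k) < δ
          · have hfd : |f (T (k+1)) - f (T k)| < ε/2 := by
              refine H (T (k+1)) (hTmem _) (T k) (hTmem _) ?_
              rw [abs_of_nonneg (by linarith : (0:ℝ) ≤ g (T (k+1)) - g (T k))]
              exact hDδ
            have heD : g (T (k+1)) - g x ≤ g (T (k+1)) - g (T k) := by linarith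
            rw [div_le_iff₀ hD]
            exact mul_le_mul hfd.le heD he0 (by positivity)
          · have hD' : δ ≤ g (T (k+1)) - g (T k) := not_lt.1 hDδ
            have hfd : |f (T (k+1)) - f (T k)| ≤ 2*M := by
              have b1 := hbound (T (k+1)) (hTmem _)
              have b2 := hbound (T k) (hTmem _)
              have : |f (T (k+1)) - f (T k)| ≤ |f (T (k+1))| + |f (T k)| := abs_sub _ _
              linarith
            have he2 : g (T (k+1)) - g x ≤ δ*ε/(4*M) := he1.trans hδ'le2
            rw [div_le_iff₀ hD]
            have hq : 2*M*(δ*ε/(4*M)) = δ*ε/2 := by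
              field_simp
              ring
            have hstep : |f (T (k+1)) - f (T k)| * (g (T (k+1)) - g x) ≤ 2*M*(δ*ε/(4*M)) :=
              mul_le_mul hfd he2 he0 (by positivity)
            rw [hq] at hstep
            have h5 : 0 ≤ ε/2 * ((g (T (k+1)) - g (T k)) - δ) :=
              mul_nonneg (by linarith) (by linarith)
            nlinarith [hstep, h5]
      have htri : |f x - F x| ≤ |f x - f (T (k+1))| + |f (T (k+1)) - F x| :=
        abs_sub_le (f x) (f (T (k+1))) (F x)
      have h4 : |f (T (k+1)) - F x| ≤ ε/2 := by
        rw [abs_sub_comm, hdiff]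
        exact habs
      linarith
end

section
/- Let g:[a,b]→ℝ be a continuous derivator with g(a)=0. Then for all nonnegative integers i,j, the inner product in L²_g satisfies ∫_{[a,b)} g_{a,i} · g_{a,j} dμ_g = (g(b)−g(a))^{i+j+1}/(i+j+1), and consequently gram(1, g_{a,1},…,g_{a,k}) = (g(b)−g(a))^{(k+1)²} · H_{k+1}, where H_{k+1} is the determinant of the (k+1)×(k+1) Hilbert matrix with entries 1/(i+j−1). -/
open MeasureTheory Set Filter

lemma exists_tau (a b x : ℝ) (hax : a ≤ x) (hxb : x ≤ b) (g : ℝ → ℝ)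
    (hmono : MonotoneOn g (Set.Icc a b)) (hcont : ContinuousOn g (Set.Icc a b)) (y : ℝ) :
    ∃ τ, a ≤ τ ∧ τ ≤ x ∧ (g ⁻¹' (Set.Ici y) ∩ Set.Ico a x = Set.Ico τ x) ∧
      g τ = max (g a) (min y (g x)) := by
  have haIcc : a ∈ Set.Icc a b := ⟨le_rfl, hax.trans hxb⟩
  have hxIcc : x ∈ Set.Icc a b := ⟨hax, hxb⟩
  have hgax : g a ≤ g x := hmono haIcc hxIcc hax
  set S : Set ℝ := Set.Icc a x ∩ g ⁻¹' (Set.Ici y) with hS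
  by_cases hne : S.Nonempty
  · have hclosed : IsClosed S := by
      have : ContinuousOn g (Set.Icc a x) := hcont.mono (Set.Icc_subset_Icc le_rfl hxb)
      exact this.preimage_isClosed_of_isClosed isClosed_Icc isClosed_Ici
    have hbdd : BddBelow S := ⟨a, fun t ht => ht.1.1⟩
    set τ := sInf S with hτ
    have hmem : τ ∈ S := hclosed.csInf_mem hne hbdd
    have haτ : a ≤ τ := hmem.1.1
    have hτx : τ ≤ x := hmem.1.2
    have hyτ : y ≤ g τ := hmem.2
    have hτIcc : τ ∈ Set.Icc a b := ⟨haτ, hτx.trans hxb⟩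
    have hgaτ : g a ≤ g τ := hmono haIcc hτIcc haτ
    have hgτx : g τ ≤ g x := hmono hτIcc hxIcc hτx
    refine ⟨τ, haτ, hτx, ?_, ?_⟩
    · ext t
      constructor
      · rintro ⟨hgt, hat, htx⟩
        exact ⟨csInf_le hbdd ⟨⟨hat, htx.le⟩, hgt⟩, htx⟩
      · rintro ⟨hτt, htx⟩
        have htIcc : t ∈ Set.Icc a b := ⟨haτ.trans hτt, htx.le.trans hxb⟩
        exact ⟨le_trans hyτ (hmono hτIcc htIcc hτt), haτ.trans hτt, htx⟩
    · have hupper : g τ ≤ max (g a) y := by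
        rcases eq_or_lt_of_le haτ with h | h
        · rw [← h]; exact le_max_left _ _
        · have hne' : Filter.NeBot (nhdsWithin τ (Set.Ico a τ)) := by
            rw [nhdsWithin_Ico_eq_nhdsLT h]
            infer_instance
          have hcw : ContinuousWithinAt g (Set.Ico a τ) τ :=
            (hcont τ hτIcc).mono (fun t ht => ⟨ht.1, ht.2.le.trans hτIcc.2⟩)
          have hev : ∀ᶠ t in nhdsWithin τ (Set.Ico a τ), g t ≤ y := by
            refine eventually_of_mem self_mem_nhdsWithin (fun t ht => ?_)
            by_contra hgt
            push_neg at hgt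
            exact absurd (csInf_le hbdd ⟨⟨ht.1, ht.2.le.trans hτx⟩, hgt.le⟩) (not_le.mpr ht.2)
          exact le_trans (le_of_tendsto hcw hev) (le_max_right _ _)
      rcases le_total y (g a) with h | h
      · rw [min_eq_left (h.trans hgax), max_eq_left h]
        exact le_antisymm (by simpa [max_eq_left h] using hupper) hgaτ
      · rw [min_eq_left (hyτ.trans hgτx), max_eq_right h]
        exact le_antisymm (by simpa [max_eq_right h] using hupper) hyτ
  · refine ⟨x, hax, le_rfl, ?_, ?_⟩
    · rw [Set.Ico_self]
      ext t
      simp only [Set.mem_inter_iff, Set.mem_preimage, Set.mem_Ici, Set.mem_Ico,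
        Set.mem_empty_iff_false, iff_false]
      rintro ⟨hgt, hat, htx⟩
      exact hne ⟨t, ⟨hat, htx.le⟩, hgt⟩
    · have hgx : g x < y := by
        by_contra h
        exact hne ⟨x, ⟨hax, le_rfl⟩, not_lt.mp h⟩
      rw [min_eq_right hgx.le, max_eq_right hgax]

lemma map_restrict_eq (a b x : ℝ) (hax : a ≤ x) (hxb : x ≤ b) (g : ℝ → ℝ)
    (hmono : MonotoneOn g (Set.Icc a b)) (hcont : ContinuousOn g (Set.Icc a b))
    (μ : Measure ℝ)
    (hμ : ∀ c d, a ≤ c → c ≤ d → d ≤ b →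
      μ (Set.Ico c d) = ENNReal.ofReal (g d - g c)) :
    Measure.map g (μ.restrict (Set.Ico a x)) =
      MeasureTheory.volume.restrict (Set.Ico (g a) (g x)) := by
  have hgax : g a ≤ g x := hmono ⟨le_rfl, hax.trans hxb⟩ ⟨hax, hxb⟩ hax
  have hg : AEMeasurable g (μ.restrict (Set.Ico a x)) := by
    have : ContinuousOn g (Set.Ico a x) :=
      hcont.mono (fun t ht => ⟨ht.1, ht.2.le.trans hxb⟩)
    exact this.aemeasurable measurableSet_Ico
  have hfin : IsFiniteMeasure (Measure.map g (μ.restrict (Set.Ico a x))) := by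
    constructor
    rw [Measure.map_apply_of_aemeasurable hg MeasurableSet.univ, Set.preimage_univ,
      Measure.restrict_apply MeasurableSet.univ, Set.univ_inter, hμ a x le_rfl hax hxb]
    exact ENNReal.ofReal_lt_top
  refine Measure.ext_of_Ico _ _ (fun c d hcd => ?_)
  obtain ⟨τc, haτc, hτcx, hpreC, hgτc⟩ := exists_tau a b x hax hxb g hmono hcont c
  obtain ⟨τd, haτd, hτdx, hpreD, hgτd⟩ := exists_tau a b x hax hxb g hmono hcont d
  have hτcd : τc ≤ τd := by
    rcases eq_or_lt_of_le hτdx with h | h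
    · exact h ▸ hτcx
    · have hd' : τd ∈ g ⁻¹' (Set.Ici d) ∩ Set.Ico a x := by
        rw [hpreD]; exact ⟨le_rfl, h⟩
      have : τd ∈ Set.Ico τc x := by
        rw [← hpreC]
        exact ⟨Set.mem_preimage.mpr (le_trans hcd.le hd'.1), hd'.2⟩
      exact this.1
  have hpre : g ⁻¹' (Set.Ico c d) ∩ Set.Ico a x = Set.Ico τc τd := by
    have hsplit : g ⁻¹' (Set.Ico c d) = g ⁻¹' (Set.Ici c) \ g ⁻¹' (Set.Ici d) := by
      ext t; simp [Set.mem_Ico, not_le, and_comm]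
    rw [hsplit]
    ext t
    simp only [Set.mem_inter_iff, Set.mem_diff, Set.mem_Ico, Set.mem_preimage, Set.mem_Ici]
    constructor
    · rintro ⟨⟨hc, hd⟩, hat, htx⟩
      have h1 : t ∈ Set.Ico τc x := by rw [← hpreC]; exact ⟨hc, hat, htx⟩
      have h2 : t ∉ Set.Ico τd x := by
        rw [← hpreD]; rintro ⟨hd', -⟩; exact hd hd'
      exact ⟨h1.1, by_contra fun h => h2 ⟨not_lt.mp h, htx⟩⟩
    · rintro ⟨hτct, htτd⟩
      have htx : t < x := lt_of_lt_of_le htτd hτdx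
      have h1 : t ∈ g ⁻¹' (Set.Ici c) ∩ Set.Ico a x := by
        rw [hpreC]; exact ⟨hτct, htx⟩
      have h2 : t ∉ g ⁻¹' (Set.Ici d) ∩ Set.Ico a x := by
        rw [hpreD]; rintro ⟨hτdt, -⟩; exact absurd htτd (not_lt.mpr hτdt)
      exact ⟨⟨h1.1, fun hd => h2 ⟨hd, h1.2⟩⟩, h1.2⟩
  rw [Measure.map_apply_of_aemeasurable hg measurableSet_Ico,
    Measure.restrict_apply' measurableSet_Ico, Measure.restrict_apply measurableSet_Ico,
    hpre, hμ τc τd haτc hτcd (hτdx.trans hxb), Set.Ico_inter_Ico, Real.volume_Ico,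
    hgτc, hgτd]
  -- pure real/min/max computation now
  have hclampmono : max (g a) (min c (g x)) ≤ max (g a) (min d (g x)) :=
    max_le_max le_rfl (min_le_min hcd.le le_rfl)
  rcases le_total (min d (g x)) (max c (g a)) with h | h
  · have hle : max (g a) (min d (g x)) ≤ max (g a) (min c (g x)) := by
      rcases le_total c (g x) with hc | hc
      · rw [min_eq_left hc]
        refine max_le (le_max_left _ _) (h.trans ?_)
        rw [max_comm]
      · rw [min_eq_right hc, max_eq_right hgax]
        exact max_le hgax (min_le_right _ _)
    rw [le_antisymm hle hclampmono, sub_self, ENNReal.ofReal_zero]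
    symm
    rw [ENNReal.ofReal_eq_zero]
    linarith
  · have hcgx : c ≤ g x := le_trans (le_max_left _ _) (h.trans (min_le_right _ _))
    have hgad : g a ≤ min d (g x) := le_trans (le_max_right _ _) h
    rw [min_eq_left hcgx, max_eq_right hgad, max_comm (g a) c]

lemma integral_pow_g (a b x : ℝ) (hax : a ≤ x) (hxb : x ≤ b) (g : ℝ → ℝ)
    (hmono : MonotoneOn g (Set.Icc a b)) (hcont : ContinuousOn g (Set.Icc a b))
    (μ : Measure ℝ)
    (hμ : ∀ c d, a ≤ c → c ≤ d → d ≤ b →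
      μ (Set.Ico c d) = ENNReal.ofReal (g d - g c)) (n : ℕ) :
    ∫ t in Set.Ico a x, (g t) ^ n ∂μ =
      ((g x) ^ (n + 1) - (g a) ^ (n + 1)) / ((n : ℝ) + 1) := by
  have hgax : g a ≤ g x := hmono ⟨le_rfl, hax.trans hxb⟩ ⟨hax, hxb⟩ hax
  have hg : AEMeasurable g (μ.restrict (Set.Ico a x)) := by
    have : ContinuousOn g (Set.Ico a x) :=
      hcont.mono (fun t ht => ⟨ht.1, ht.2.le.trans hxb⟩)
    exact this.aemeasurable measurableSet_Ico
  have hf : AEStronglyMeasurable (fun s : ℝ => s ^ n)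
      (Measure.map g (μ.restrict (Set.Ico a x))) :=
    (continuous_pow n).aestronglyMeasurable
  have h1 : ∫ t in Set.Ico a x, (g t) ^ n ∂μ =
      ∫ s, s ^ n ∂(Measure.map g (μ.restrict (Set.Ico a x))) :=
    (integral_map hg hf).symm
  rw [h1, map_restrict_eq a b x hax hxb g hmono hcont μ hμ]
  rw [integral_Ico_eq_integral_Ioo, ← integral_Ioc_eq_integral_Ioo,
    ← intervalIntegral.integral_of_le hgax, integral_pow]

lemma gMon_eq_pow (a b : ℝ) (hab : a ≤ b) (g : ℝ → ℝ)
    (hmono : MonotoneOn g (Set.Icc a b)) (hcont : ContinuousOn g (Set.Icc a b))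
    (hga : g a = 0) (μ : Measure ℝ)
    (hμ : ∀ c d, a ≤ c → c ≤ d → d ≤ b →
      μ (Set.Ico c d) = ENNReal.ofReal (g d - g c)) (n : ℕ) :
    ∀ t ∈ Set.Icc a b, gMon μ a n t = (g t) ^ n := by
  induction n with
  | zero => intro t _; simp [gMon]
  | succ n ih =>
    intro t ht
    have hn1 : ((n : ℝ) + 1) ≠ 0 := by positivity
    simp only [gMon]
    rw [if_pos ht.1]
    have hcongr : ∫ s in Set.Ico a t, gMon μ a n s ∂μ = ∫ s in Set.Ico a t, (g s) ^ n ∂μ := by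
      refine setIntegral_congr_fun measurableSet_Ico (fun s hs => ?_)
      exact ih s ⟨hs.1, hs.2.le.trans ht.2⟩
    rw [hcongr, integral_pow_g a b t ht.1 ht.2 g hmono hcont μ hμ n, hga]
    rw [zero_pow (Nat.succ_ne_zero n)]
    field_simp
    simp

/-- For a continuous derivator `g` with `g a = 0`, the `L²_g` inner products of the
`g`-monomials centered at `a` are `(g b − g a)^{i+j+1}/(i+j+1)`, and the Gram
determinant of `(1, g_{a,1}, …, g_{a,k})` equals `(g b − g a)^{(k+1)²}` times the
determinant of the `(k+1) × (k+1)` Hilbert matrix. -/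
theorem gram_of_gMonomials_continuous
    (a b : ℝ) (hab : a ≤ b) (g : ℝ → ℝ)
    (hmono : MonotoneOn g (Set.Icc a b))
    (hcont : ContinuousOn g (Set.Icc a b))
    (hga : g a = 0)
    (μ : Measure ℝ)
    (hμ : ∀ c d, a ≤ c → c ≤ d → d ≤ b →
      μ (Set.Ico c d) = ENNReal.ofReal (g d - g c)) :
    (∀ i j : ℕ,
      ∫ t in Set.Ico a b, gMon μ a i t * gMon μ a j t ∂μ =
        (g b - g a) ^ (i + j + 1) / ((i : ℝ) + (j : ℝ) + 1)) ∧
    (∀ k : ℕ,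
      Matrix.det (Matrix.of fun i j : Fin (k + 1) =>
          ∫ t in Set.Ico a b, gMon μ a (i : ℕ) t * gMon μ a (j : ℕ) t ∂μ) =
        (g b - g a) ^ ((k + 1) ^ 2) *
          Matrix.det (Matrix.of fun i j : Fin (k + 1) =>
            (1 : ℝ) / ((i : ℝ) + (j : ℝ) + 1))) := by
  have key : ∀ i j : ℕ,
      ∫ t in Set.Ico a b, gMon μ a i t * gMon μ a j t ∂μ =
        (g b - g a) ^ (i + j + 1) / ((i : ℝ) + (j : ℝ) + 1) := by
    intro i j
    have hcongr : ∫ t in Set.Ico a b, gMon μ a i t * gMon μ a j t ∂μ =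
        ∫ t in Set.Ico a b, (g t) ^ (i + j) ∂μ := by
      refine setIntegral_congr_fun measurableSet_Ico (fun t ht => ?_)
      rw [gMon_eq_pow a b hab g hmono hcont hga μ hμ i t ⟨ht.1, ht.2.le⟩,
        gMon_eq_pow a b hab g hmono hcont hga μ hμ j t ⟨ht.1, ht.2.le⟩, ← pow_add]
    rw [hcongr, integral_pow_g a b b hab le_rfl g hmono hcont μ hμ (i + j), hga,
      zero_pow (Nat.succ_ne_zero (i + j)), sub_zero, sub_zero]
    push_cast
    ring
  refine ⟨key, fun k => ?_⟩
  set c : ℝ := g b - g a with hc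
  have hentry : (Matrix.of fun i j : Fin (k + 1) =>
        ∫ t in Set.Ico a b, gMon μ a (i : ℕ) t * gMon μ a (j : ℕ) t ∂μ) =
      Matrix.diagonal (fun i : Fin (k + 1) => c ^ (i : ℕ)) *
        (c • Matrix.of (fun i j : Fin (k + 1) => (1 : ℝ) / ((i : ℝ) + (j : ℝ) + 1))) *
        Matrix.diagonal (fun j : Fin (k + 1) => c ^ (j : ℕ)) := by
    ext i j
    rw [Matrix.mul_apply]
    simp only [Matrix.diagonal_mul, Matrix.mul_diagonal, Matrix.smul_apply, Matrix.of_apply,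
      smul_eq_mul]
    rw [Finset.sum_eq_single j]
    · simp only [Matrix.diagonal_apply_eq]
      rw [key i j, pow_add, pow_add, pow_one]
      ring
    · intro m _ hm
      simp [Matrix.diagonal_apply_ne _ hm]
    · intro h
      exact absurd (Finset.mem_univ j) h
  rw [hentry, Matrix.det_mul, Matrix.det_mul, Matrix.det_diagonal, Matrix.det_smul,
    Finset.prod_pow_eq_pow_sum, Fintype.card_fin]
  have hexp : (∑ i : Fin (k + 1), (i : ℕ)) + (k + 1) + (∑ i : Fin (k + 1), (i : ℕ)) =
      (k + 1) ^ 2 := by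
    have h2 : (∑ i ∈ Finset.range (k + 1), i) * 2 = (k + 1) * k := by
      rw [Finset.sum_range_id_mul_two]
      simp
    rw [Fin.sum_univ_eq_sum_range (fun i => i) (k + 1)]
    have : (k + 1) ^ 2 = (k + 1) * k + (k + 1) := by ring
    omega
  rw [← hexp]
  ring
end

section
/- Let [a,b] be a nondegenerate real interval, n∈ℕ, and v,w ∈ ℝⁿ. Let M = max{v₁,w₁} and m = min{v₁,w₁}, and fix ε>0. Then there exists an infinitely differentiable function F:[a,b]→(m−ε, M+ε) such that F^{(k−1)}(a) = v_k and F^{(k−1)}(b) = w_k for all k=1,…,n. -/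
open Polynomial Finset

private lemma polyEval_contDiff (p : ℝ[X]) : ContDiff ℝ (⊤ : ℕ∞) fun x => p.eval x := by
  induction p using Polynomial.induction_on' with
  | add p q hp hq => simpa using hp.add hq
  | monomial n c =>
      simpa [Polynomial.eval_monomial] using (contDiff_const (c := c)).mul (contDiff_id.pow n)

private lemma iteratedDeriv_polyEval (p : ℝ[X]) (k : ℕ) :
    iteratedDeriv k (fun x => p.eval x) = fun x => (derivative^[k] p).eval x := by
  induction k with
  | zero => simp
  | succ k ih =>
      rw [iteratedDeriv_succ, ih, Function.iterate_succ_apply']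
      ext x; exact Polynomial.deriv _

private lemma iterDeriv_taylor_eval (n j : ℕ) (hj : j < n) (c : ℕ → ℝ) (r : ℝ) :
    (derivative^[j] (∑ k ∈ Finset.range n, C (c k) * (X - C r) ^ k)).eval r
      = (j.factorial : ℝ) * c j := by
  rw [Polynomial.iterate_derivative_sum]
  simp only [Polynomial.iterate_derivative_C_mul, Polynomial.iterate_derivative_X_sub_pow]
  rw [Polynomial.eval_finset_sum]
  rw [Finset.sum_eq_single j]
  · simp [Nat.descFactorial_self, mul_comm]
  · intro k hk hne
    simp only [eval_mul, eval_C, eval_smul, eval_pow, eval_sub, eval_X, sub_self, smul_eq_mul]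
    rcases lt_or_gt_of_ne hne with h | h
    · simp [Nat.descFactorial_eq_zero_iff_lt.2 h]
    · rw [zero_pow (by omega)]; ring
  · intro h; exact absurd (Finset.mem_range.2 hj) h

private lemma eval_iterate_derivative_eq_zero (r : ℝ) (nn k : ℕ) (f : ℝ[X])
    (h : (X - C r) ^ nn ∣ f) (hk : k < nn) :
    (derivative^[k] f).eval r = 0 := by
  obtain ⟨u, rfl⟩ := h
  rw [Polynomial.iterate_derivative_mul, Polynomial.eval_finset_sum]
  apply Finset.sum_eq_zero
  intro i hi
  rw [eval_smul, eval_mul, Polynomial.iterate_derivative_X_sub_pow, eval_smul,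
    eval_pow, eval_sub, eval_X, eval_C, sub_self, zero_pow (by simp at hi; omega)]
  simp

set_option maxHeartbeats 1000000 in
/-- Smooth interpolation with prescribed derivatives at both endpoints and values
confined to `(m − ε, M + ε)`, where `M = max{v₁,w₁}` and `m = min{v₁,w₁}`. -/
theorem smooth_interpolation_with_bounds
    (a b : ℝ) (hab : a < b) (n : ℕ) (hn : 0 < n) (v w : Fin n → ℝ)
    (ε : ℝ) (hε : 0 < ε) :
    ∃ F : ℝ → ℝ, ContDiff ℝ (⊤ : ℕ∞) F ∧
      (∀ x ∈ Set.Icc a b,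
        F x ∈ Set.Ioo (min (v ⟨0, hn⟩) (w ⟨0, hn⟩) - ε)
                      (max (v ⟨0, hn⟩) (w ⟨0, hn⟩) + ε)) ∧
      (∀ k : Fin n, iteratedDeriv (k : ℕ) F a = v k ∧ iteratedDeriv (k : ℕ) F b = w k) := by
  set v0 := v ⟨0, hn⟩ with hv0def
  set w0 := w ⟨0, hn⟩ with hw0def
  set m := min v0 w0 with hmdef
  set M := max v0 w0 with hMdef
  have hmM : m ≤ M := min_le_max
  have hv0m : m ≤ v0 := min_le_left _ _
  have hv0M : v0 ≤ M := le_max_left _ _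
  have hw0m : m ≤ w0 := min_le_right _ _
  have hw0M : w0 ≤ M := le_max_right _ _
  clear_value v0 w0 m M
  obtain ⟨c, hcdef⟩ : ∃ c : ℝ, c = (m + M) / 2 := ⟨_, rfl⟩
  have hba : (0:ℝ) < b - a := by linarith
  -- the two Taylor polynomials
  obtain ⟨cv, hcv⟩ : ∃ f : ℕ → ℝ, f = fun k => if h : k < n then v ⟨k, h⟩ / k.factorial else 0 :=
    ⟨_, rfl⟩
  obtain ⟨cw, hcw⟩ : ∃ f : ℕ → ℝ, f = fun k => if h : k < n then w ⟨k, h⟩ / k.factorial else 0 :=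
    ⟨_, rfl⟩
  obtain ⟨p, hp⟩ : ∃ p : ℝ[X], p = ∑ k ∈ Finset.range n, C (cv k) * (X - C a) ^ k := ⟨_, rfl⟩
  obtain ⟨q, hq⟩ : ∃ q : ℝ[X], q = ∑ k ∈ Finset.range n, C (cw k) * (X - C b) ^ k := ⟨_, rfl⟩
  have hpder : ∀ k : Fin n, (derivative^[(k : ℕ)] p).eval a = v k := by
    intro k
    rw [hp, iterDeriv_taylor_eval n k k.isLt cv a]
    simp only [hcv, k.isLt, dif_pos, Fin.eta]
    field_simp
  have hqder : ∀ k : Fin n, (derivative^[(k : ℕ)] q).eval b = w k := by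
    intro k
    rw [hq, iterDeriv_taylor_eval n k k.isLt cw b]
    simp only [hcw, k.isLt, dif_pos, Fin.eta]
    field_simp
  have hpa : p.eval a = v0 := by
    have := hpder ⟨0, hn⟩; simpa [hv0def] using this
  have hqb : q.eval b = w0 := by
    have := hqder ⟨0, hn⟩; simpa [hw0def] using this
  -- continuity constants
  obtain ⟨δ1, hδ1pos, hδ1⟩ := Metric.continuousAt_iff.1
    ((polyEval_contDiff p).continuous.continuousAt (x := a)) (ε / 4) (by linarith)
  obtain ⟨δ2, hδ2pos, hδ2⟩ := Metric.continuousAt_iff.1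
    ((polyEval_contDiff q).continuous.continuousAt (x := b)) (ε / 4) (by linarith)
  obtain ⟨δ, hδdef⟩ : ∃ δ : ℝ, δ = min (min δ1 δ2) (b - a) / 4 := ⟨_, rfl⟩
  have hδpos : 0 < δ := by
    have : 0 < min (min δ1 δ2) (b - a) := lt_min (lt_min hδ1pos hδ2pos) (by linarith)
    rw [hδdef]; linarith
  have hδ1' : δ < δ1 := by
    have h1 : min (min δ1 δ2) (b - a) ≤ δ1 := le_trans (min_le_left _ _) (min_le_left _ _)
    rw [hδdef]; linarith
  have hδ2' : δ < δ2 := by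
    have h1 : min (min δ1 δ2) (b - a) ≤ δ2 := le_trans (min_le_left _ _) (min_le_right _ _)
    rw [hδdef]; linarith
  have hδab : 4 * δ ≤ b - a := by
    have h1 : min (min δ1 δ2) (b - a) ≤ b - a := min_le_right _ _
    rw [hδdef]; linarith
  -- global bound on the Taylor polynomials
  obtain ⟨B1, hB1⟩ := (isCompact_Icc (a := a) (b := b)).exists_bound_of_continuousOn
    (f := fun x => p.eval x - c) (((polyEval_contDiff p).continuous.sub continuous_const).continuousOn)
  obtain ⟨B2, hB2⟩ := (isCompact_Icc (a := a) (b := b)).exists_bound_of_continuousOn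
    (f := fun x => q.eval x - c) (((polyEval_contDiff q).continuous.sub continuous_const).continuousOn)
  obtain ⟨B, hBdef⟩ : ∃ B : ℝ, B = max B1 B2 := ⟨_, rfl⟩
  have hBp : ∀ x ∈ Set.Icc a b, |p.eval x - c| ≤ B := by
    intro x hx
    have := hB1 x hx
    rw [Real.norm_eq_abs] at this
    rw [hBdef]; exact le_trans this (le_max_left _ _)
  have hBq : ∀ x ∈ Set.Icc a b, |q.eval x - c| ≤ B := by
    intro x hx
    have := hB2 x hx
    rw [Real.norm_eq_abs] at this
    rw [hBdef]; exact le_trans this (le_max_right _ _)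
  have hB0 : 0 ≤ B := le_trans (abs_nonneg _) (hBp a (Set.left_mem_Icc.2 hab.le))
  have hB1pos : 0 < B + 1 := by linarith
  -- the exponent
  obtain ⟨η, hηdef⟩ : ∃ η : ℝ, η = (δ * (b - a)⁻¹) ^ (2 * n) := ⟨_, rfl⟩
  have hηpos : 0 < η := by
    rw [hηdef]; positivity
  have hfrac : ∀ t : ℝ, t ≤ b - a → t * (b - a)⁻¹ ≤ 1 := by
    intro t ht
    rw [← div_eq_mul_inv, div_le_one hba]; exact ht
  have hηle : η ≤ 1 := by
    rw [hηdef]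
    exact pow_le_one₀ (by positivity) (hfrac δ (by linarith))
  obtain ⟨N0, hN0⟩ := exists_pow_lt_of_lt_one (x := ε / (4 * (B + 1))) (y := 1 - η)
    (by positivity) (by linarith)
  obtain ⟨N, hNdef⟩ : ∃ N : ℕ, N = max n N0 := ⟨_, rfl⟩
  have hnN : n ≤ N := hNdef ▸ le_max_left _ _
  have hNtail : (1 - η) ^ N ≤ ε / (4 * (B + 1)) := by
    refine le_trans (pow_le_pow_of_le_one (by linarith) (by linarith) (hNdef ▸ le_max_right _ _)) hN0.le
  -- the cutoff polynomials
  obtain ⟨σa, hσa⟩ : ∃ σ : ℝ[X], σ = (X - C a) * C ((b - a)⁻¹) := ⟨_, rfl⟩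
  obtain ⟨σb, hσb⟩ : ∃ σ : ℝ[X], σ = (X - C b) * C ((b - a)⁻¹) := ⟨_, rfl⟩
  obtain ⟨Φa, hΦa⟩ : ∃ Φ : ℝ[X], Φ = (1 - σa ^ (2 * n)) ^ N := ⟨_, rfl⟩
  obtain ⟨Φb, hΦb⟩ : ∃ Φ : ℝ[X], Φ = (1 - σb ^ (2 * n)) ^ N := ⟨_, rfl⟩
  obtain ⟨R, hR⟩ : ∃ R : ℝ[X], R = C c + Φa * (p - C c) + Φb * (q - C c) := ⟨_, rfl⟩
  -- divisibility facts
  have hdvdA1 : (X - C a) ^ n ∣ (1 - Φa) := by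
    have h1 : σa ^ (2 * n) ∣ 1 - Φa := by
      have := sub_dvd_pow_sub_pow (1 : ℝ[X]) (1 - σa ^ (2 * n)) N
      simpa [hΦa] using this
    refine dvd_trans (dvd_trans ?_ (pow_dvd_pow _ (by omega : n ≤ 2 * n))) h1
    exact pow_dvd_pow_of_dvd (hσa ▸ dvd_mul_right _ _) n
  have hdvdB1 : (X - C b) ^ n ∣ (1 - Φb) := by
    have h1 : σb ^ (2 * n) ∣ 1 - Φb := by
      have := sub_dvd_pow_sub_pow (1 : ℝ[X]) (1 - σb ^ (2 * n)) N
      simpa [hΦb] using this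
    refine dvd_trans (dvd_trans ?_ (pow_dvd_pow _ (by omega : n ≤ 2 * n))) h1
    exact pow_dvd_pow_of_dvd (hσb ▸ dvd_mul_right _ _) n
  have hdvdA2 : (X - C a) ^ n ∣ Φb := by
    have h1 : (X - C a) ∣ (1 - σb ^ (2 * n)) := by
      rw [Polynomial.dvd_iff_isRoot]
      simp only [IsRoot, hσb, eval_sub, eval_one, eval_pow, eval_mul, eval_X, eval_C]
      rw [mul_pow, ← mul_pow]
      rw [show (a - b) * (b - a)⁻¹ = -((b - a) * (b - a)⁻¹) by ring, mul_inv_cancel₀ hba.ne']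
      rw [show (2 : ℕ) * n = 2 * n from rfl, pow_mul]
      norm_num
    exact hΦb ▸ dvd_trans (pow_dvd_pow_of_dvd h1 n) (pow_dvd_pow _ hnN)
  have hdvdB2 : (X - C b) ^ n ∣ Φa := by
    have h1 : (X - C b) ∣ (1 - σa ^ (2 * n)) := by
      rw [Polynomial.dvd_iff_isRoot]
      simp only [IsRoot, hσa, eval_sub, eval_one, eval_pow, eval_mul, eval_X, eval_C]
      rw [mul_pow, ← mul_pow, mul_inv_cancel₀ hba.ne']
      norm_num
    exact hΦa ▸ dvd_trans (pow_dvd_pow_of_dvd h1 n) (pow_dvd_pow _ hnN)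
  -- derivative transfer
  have hRp : ∀ k : Fin n, (derivative^[(k : ℕ)] R).eval a = (derivative^[(k : ℕ)] p).eval a := by
    intro k
    have hdvd : (X - C a) ^ n ∣ (R - p) := by
      have : R - p = -((1 - Φa) * (p - C c)) + Φb * (q - C c) := by rw [hR]; ring
      rw [this]
      exact dvd_add ((hdvdA1.mul_right _).neg_right) (hdvdA2.mul_right _)
    have h0 := eval_iterate_derivative_eq_zero a n k (R - p) hdvd k.isLt
    rw [Polynomial.iterate_derivative_sub, eval_sub] at h0
    linarith
  have hRq : ∀ k : Fin n, (derivative^[(k : ℕ)] R).eval b = (derivative^[(k : ℕ)] q).eval b := by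
    intro k
    have hdvd : (X - C b) ^ n ∣ (R - q) := by
      have : R - q = -((1 - Φb) * (q - C c)) + Φa * (p - C c) := by rw [hR]; ring
      rw [this]
      exact dvd_add ((hdvdB1.mul_right _).neg_right) (hdvdB2.mul_right _)
    have h0 := eval_iterate_derivative_eq_zero b n k (R - q) hdvd k.isLt
    rw [Polynomial.iterate_derivative_sub, eval_sub] at h0
    linarith
  -- bounds on the cutoffs
  have hΦaEval : ∀ x : ℝ, Φa.eval x = (1 - ((x - a) * (b - a)⁻¹) ^ (2 * n)) ^ N := by
    intro x; rw [hΦa, hσa]; simp [mul_pow]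
  have hΦbEval : ∀ x : ℝ, Φb.eval x = (1 - ((x - b) * (b - a)⁻¹) ^ (2 * n)) ^ N := by
    intro x; rw [hΦb, hσb]; simp [mul_pow]
  have hΦa01 : ∀ x ∈ Set.Icc a b, Φa.eval x ∈ Set.Icc (0:ℝ) 1 := by
    intro x hx
    obtain ⟨hx1, hx2⟩ := hx
    rw [hΦaEval]
    have h1 : (0:ℝ) ≤ (x - a) * (b - a)⁻¹ := mul_nonneg (by linarith) (by positivity)
    have h2 : (x - a) * (b - a)⁻¹ ≤ 1 := hfrac _ (by linarith)
    have h3 : ((x - a) * (b - a)⁻¹) ^ (2 * n) ≤ 1 := pow_le_one₀ h1 h2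
    have h4 : (0:ℝ) ≤ ((x - a) * (b - a)⁻¹) ^ (2 * n) := by positivity
    exact ⟨pow_nonneg (by linarith) _, pow_le_one₀ (by linarith) (by linarith)⟩
  have hΦb01 : ∀ x ∈ Set.Icc a b, Φb.eval x ∈ Set.Icc (0:ℝ) 1 := by
    intro x hx
    obtain ⟨hx1, hx2⟩ := hx
    rw [hΦbEval]
    have h1 : (0:ℝ) ≤ (b - x) * (b - a)⁻¹ := mul_nonneg (by linarith) (by positivity)
    have h2 : (b - x) * (b - a)⁻¹ ≤ 1 := hfrac _ (by linarith)
    have heq : ((x - b) * (b - a)⁻¹) ^ (2 * n) = ((b - x) * (b - a)⁻¹) ^ (2 * n) := by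
      rw [show (2:ℕ) * n = 2 * n from rfl, pow_mul, pow_mul]
      congr 1
      rw [show (x - b) * (b - a)⁻¹ = -((b - x) * (b - a)⁻¹) by ring, neg_pow]
      norm_num
    rw [heq]
    have h3 : ((b - x) * (b - a)⁻¹) ^ (2 * n) ≤ 1 := pow_le_one₀ h1 h2
    have h4 : (0:ℝ) ≤ ((b - x) * (b - a)⁻¹) ^ (2 * n) := by positivity
    exact ⟨pow_nonneg (by linarith) _, pow_le_one₀ (by linarith) (by linarith)⟩
  have hΦaFar : ∀ x ∈ Set.Icc a b, a + δ ≤ x → Φa.eval x ≤ (1 - η) ^ N := by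
    intro x hx hfar
    obtain ⟨hx1, hx2⟩ := hx
    rw [hΦaEval]
    have h1 : (0:ℝ) ≤ (x - a) * (b - a)⁻¹ := mul_nonneg (by linarith) (by positivity)
    have h2 : (x - a) * (b - a)⁻¹ ≤ 1 := hfrac _ (by linarith)
    have hge : η ≤ ((x - a) * (b - a)⁻¹) ^ (2 * n) := by
      rw [hηdef]
      apply pow_le_pow_left₀ (mul_nonneg hδpos.le (by positivity))
      apply mul_le_mul_of_nonneg_right (by linarith) (by positivity)
    have h3 : ((x - a) * (b - a)⁻¹) ^ (2 * n) ≤ 1 := pow_le_one₀ h1 h2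
    apply pow_le_pow_left₀ (by linarith) (by linarith)
  have hΦbFar : ∀ x ∈ Set.Icc a b, x ≤ b - δ → Φb.eval x ≤ (1 - η) ^ N := by
    intro x hx hfar
    obtain ⟨hx1, hx2⟩ := hx
    rw [hΦbEval]
    have h1 : (0:ℝ) ≤ (b - x) * (b - a)⁻¹ := mul_nonneg (by linarith) (by positivity)
    have h2 : (b - x) * (b - a)⁻¹ ≤ 1 := hfrac _ (by linarith)
    have heq : ((x - b) * (b - a)⁻¹) ^ (2 * n) = ((b - x) * (b - a)⁻¹) ^ (2 * n) := by
      rw [show (2:ℕ) * n = 2 * n from rfl, pow_mul, pow_mul]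
      congr 1
      rw [show (x - b) * (b - a)⁻¹ = -((b - x) * (b - a)⁻¹) by ring, neg_pow]
      norm_num
    rw [heq]
    have hge : η ≤ ((b - x) * (b - a)⁻¹) ^ (2 * n) := by
      rw [hηdef]
      apply pow_le_pow_left₀ (mul_nonneg hδpos.le (by positivity))
      apply mul_le_mul_of_nonneg_right (by linarith) (by positivity)
    have h3 : ((b - x) * (b - a)⁻¹) ^ (2 * n) ≤ 1 := pow_le_one₀ h1 h2
    apply pow_le_pow_left₀ (by linarith) (by linarith)
  -- closeness of v0, w0 to c
  have hv0c : |v0 - c| ≤ (M - m) / 2 := by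
    rw [abs_le, hcdef]
    constructor <;> linarith
  have hw0c : |w0 - c| ≤ (M - m) / 2 := by
    rw [abs_le, hcdef]
    constructor <;> linarith
  -- the two term bounds
  have bA : ∀ x ∈ Set.Icc a b, |Φa.eval x * (p.eval x - c)| ≤ (M - m) / 2 + ε / 4 := by
    intro x hx
    rcases le_or_gt x (a + δ) with h1 | h1
    · -- near a
      have hpe : |p.eval x - v0| < ε / 4 := by
        have hd : dist x a < δ1 := by
          rw [Real.dist_eq, abs_lt]
          obtain ⟨hx1, hx2⟩ := hx
          constructor <;> linarith
        have := hδ1 hd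
        rwa [Real.dist_eq, hpa] at this
      have h2 : |p.eval x - c| ≤ (M - m) / 2 + ε / 4 := by
        calc |p.eval x - c| ≤ |p.eval x - v0| + |v0 - c| := abs_sub_le _ _ _
          _ ≤ (M - m) / 2 + ε / 4 := by linarith
      rw [abs_mul]
      obtain ⟨hΦ0, hΦ1⟩ := hΦa01 x hx
      calc |Φa.eval x| * |p.eval x - c| ≤ 1 * |p.eval x - c| := by
            apply mul_le_mul_of_nonneg_right _ (abs_nonneg _)
            rw [abs_of_nonneg hΦ0]; exact hΦ1
        _ ≤ (M - m) / 2 + ε / 4 := by rw [one_mul]; exact h2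
    · -- far from a
      rw [abs_mul]
      obtain ⟨hΦ0, _⟩ := hΦa01 x hx
      have hfar := hΦaFar x hx h1.le
      have hB' := hBp x hx
      calc |Φa.eval x| * |p.eval x - c| ≤ (ε / (4 * (B + 1))) * (B + 1) := by
            apply mul_le_mul _ (by linarith) (abs_nonneg _) (by positivity)
            rw [abs_of_nonneg hΦ0]
            exact le_trans hfar hNtail
        _ = ε / 4 := by field_simp
        _ ≤ (M - m) / 2 + ε / 4 := by linarith
  have bB : ∀ x ∈ Set.Icc a b, |Φb.eval x * (q.eval x - c)| ≤ (M - m) / 2 + ε / 4 := by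
    intro x hx
    rcases le_or_gt (b - δ) x with h1 | h1
    · -- near b
      have hqe : |q.eval x - w0| < ε / 4 := by
        have hd : dist x b < δ2 := by
          rw [Real.dist_eq, abs_lt]
          obtain ⟨hx1, hx2⟩ := hx
          constructor <;> linarith
        have := hδ2 hd
        rwa [Real.dist_eq, hqb] at this
      have h2 : |q.eval x - c| ≤ (M - m) / 2 + ε / 4 := by
        calc |q.eval x - c| ≤ |q.eval x - w0| + |w0 - c| := abs_sub_le _ _ _
          _ ≤ (M - m) / 2 + ε / 4 := by linarith
      rw [abs_mul]
      obtain ⟨hΦ0, hΦ1⟩ := hΦb01 x hx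
      calc |Φb.eval x| * |q.eval x - c| ≤ 1 * |q.eval x - c| := by
            apply mul_le_mul_of_nonneg_right _ (abs_nonneg _)
            rw [abs_of_nonneg hΦ0]; exact hΦ1
        _ ≤ (M - m) / 2 + ε / 4 := by rw [one_mul]; exact h2
    · -- far from b
      rw [abs_mul]
      obtain ⟨hΦ0, _⟩ := hΦb01 x hx
      have hfar := hΦbFar x hx h1.le
      have hB' := hBq x hx
      calc |Φb.eval x| * |q.eval x - c| ≤ (ε / (4 * (B + 1))) * (B + 1) := by
            apply mul_le_mul _ (by linarith) (abs_nonneg _) (by positivity)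
            rw [abs_of_nonneg hΦ0]
            exact le_trans hfar hNtail
        _ = ε / 4 := by field_simp
        _ ≤ (M - m) / 2 + ε / 4 := by linarith
  have bA' : ∀ x ∈ Set.Icc a b, a + δ ≤ x → |Φa.eval x * (p.eval x - c)| ≤ ε / 4 := by
    intro x hx h1
    rw [abs_mul]
    obtain ⟨hΦ0, _⟩ := hΦa01 x hx
    have hfar := hΦaFar x hx h1
    have hB' := hBp x hx
    calc |Φa.eval x| * |p.eval x - c| ≤ (ε / (4 * (B + 1))) * (B + 1) := by
          apply mul_le_mul _ (by linarith) (abs_nonneg _) (by positivity)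
          rw [abs_of_nonneg hΦ0]
          exact le_trans hfar hNtail
      _ = ε / 4 := by field_simp
  have bB' : ∀ x ∈ Set.Icc a b, x ≤ b - δ → |Φb.eval x * (q.eval x - c)| ≤ ε / 4 := by
    intro x hx h1
    rw [abs_mul]
    obtain ⟨hΦ0, _⟩ := hΦb01 x hx
    have hfar := hΦbFar x hx h1
    have hB' := hBq x hx
    calc |Φb.eval x| * |q.eval x - c| ≤ (ε / (4 * (B + 1))) * (B + 1) := by
          apply mul_le_mul _ (by linarith) (abs_nonneg _) (by positivity)
          rw [abs_of_nonneg hΦ0]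
          exact le_trans hfar hNtail
      _ = ε / 4 := by field_simp
  refine ⟨fun x => R.eval x, polyEval_contDiff R, ?_, ?_⟩
  · intro x hx
    have hFx : R.eval x - c = Φa.eval x * (p.eval x - c) + Φb.eval x * (q.eval x - c) := by
      rw [hR]; simp; ring
    have key : |R.eval x - c| ≤ (M - m) / 2 + ε / 2 := by
      rw [hFx]
      rcases le_or_gt x (a + δ) with h1 | h1
      · have h2 : x ≤ b - δ := by
          obtain ⟨hx1, hx2⟩ := hx; linarith
        calc |Φa.eval x * (p.eval x - c) + Φb.eval x * (q.eval x - c)|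
            ≤ |Φa.eval x * (p.eval x - c)| + |Φb.eval x * (q.eval x - c)| := abs_add_le _ _
          _ ≤ ((M - m) / 2 + ε / 4) + ε / 4 := add_le_add (bA x hx) (bB' x hx h2)
          _ = (M - m) / 2 + ε / 2 := by ring
      · calc |Φa.eval x * (p.eval x - c) + Φb.eval x * (q.eval x - c)|
            ≤ |Φa.eval x * (p.eval x - c)| + |Φb.eval x * (q.eval x - c)| := abs_add_le _ _
          _ ≤ ε / 4 + ((M - m) / 2 + ε / 4) := add_le_add (bA' x hx h1.le) (bB x hx)
          _ = (M - m) / 2 + ε / 2 := by ring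
    obtain ⟨hk1, hk2⟩ := abs_le.1 key
    constructor
    · rw [hcdef] at hk1; linarith
    · rw [hcdef] at hk2; linarith
  · intro k
    constructor
    · rw [show iteratedDeriv (k : ℕ) (fun x => R.eval x) a
          = (derivative^[(k : ℕ)] R).eval a from congrFun (iteratedDeriv_polyEval R k) a,
        hRp k]
      exact hpder k
    · rw [show iteratedDeriv (k : ℕ) (fun x => R.eval x) b
          = (derivative^[(k : ℕ)] R).eval b from congrFun (iteratedDeriv_polyEval R k) b,
        hRq k]
      exact hqder k
end

section
/- Let α ≤ β < γ ≤ δ be real numbers and m a nonnegative integer. Let f₁ ∈ C^m([α,β]) and f₂ ∈ C^m([γ,δ]), and let M > max{‖f₁‖_∞, ‖f₂‖_∞}. Then there exists F ∈ C^m([α,δ]) such that F = f₁ on [α,β], F = f₂ on [γ,δ], and ‖F‖_∞ < M. -/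
open Set intervalIntegral

/-- Auxiliary: a `C^m` function on a nondegenerate closed interval extends to a `C^m`
function on all of `ℝ`. -/
lemma cm_extend_aux (m : ℕ) :
    ∀ (f : ℝ → ℝ) (a b : ℝ), a < b → ContDiffOn ℝ m f (Set.Icc a b) →
      ∃ g : ℝ → ℝ, ContDiff ℝ m g ∧ Set.EqOn g f (Set.Icc a b) := by
  induction m with
  | zero =>
    intro f a b hab hf
    refine ⟨fun x => f ((Set.projIcc a b hab.le x : Set.Icc a b) : ℝ), ?_, ?_⟩
    · rw [show ((0 : ℕ) : WithTop ℕ∞) = 0 from rfl, contDiff_zero]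
      exact hf.continuousOn.comp_continuous
        (continuous_subtype_val.comp (continuous_projIcc))
        (fun x => (Set.projIcc a b hab.le x).2)
    · intro x hx
      simp [Set.projIcc_of_mem hab.le hx]
  | succ m ih =>
    intro f a b hab hf
    have hud : UniqueDiffOn ℝ (Set.Icc a b) := uniqueDiffOn_Icc hab
    have hf' : ContDiffOn ℝ m (derivWithin f (Set.Icc a b)) (Set.Icc a b) :=
      hf.derivWithin hud (by exact_mod_cast le_refl (m + 1 : ℕ))
    obtain ⟨g', hg', hEq⟩ := ih (derivWithin f (Set.Icc a b)) a b hab hf'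
    have hg'c : Continuous g' := hg'.continuous
    set g : ℝ → ℝ := fun x => f a + ∫ t in a..x, g' t with hg_def
    have hderiv : ∀ x, HasDerivAt g (g' x) x := by
      intro x
      exact (intervalIntegral.integral_hasDerivAt_right
        (hg'c.intervalIntegrable a x)
        hg'c.aestronglyMeasurable.stronglyMeasurableAtFilter
        hg'c.continuousAt).const_add (f a)
    have hdg : deriv g = g' := funext fun x => (hderiv x).deriv
    have hcast : ((m + 1 : ℕ) : WithTop ℕ∞) = (m : WithTop ℕ∞) + 1 := by
      push_cast; rfl
    refine ⟨g, ?_, ?_⟩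
    · rw [hcast, contDiff_succ_iff_deriv]
      refine ⟨fun x => (hderiv x).differentiableAt, ?_, by rw [hdg]; exact hg'⟩
      intro h; simp at h
    · have hfd : DifferentiableOn ℝ f (Set.Icc a b) :=
        hf.differentiableOn (by simp)
      have derivf : ∀ x ∈ Set.Ico a b, HasDerivWithinAt g (g' x) (Set.Ici x) x :=
        fun x _ => (hderiv x).hasDerivWithinAt
      have derivg : ∀ x ∈ Set.Ico a b, HasDerivWithinAt f (g' x) (Set.Ici x) x := by
        intro x hx
        have h1 : HasDerivWithinAt f (derivWithin f (Set.Icc a b) x) (Set.Icc a b) x :=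
          (hfd x (Set.Ico_subset_Icc_self hx)).hasDerivWithinAt
        rw [← hEq (Set.Ico_subset_Icc_self hx)] at h1
        exact h1.mono_of_mem_nhdsWithin (Icc_mem_nhdsGE_of_mem hx)
      have hi : g a = f a := by simp [hg_def]
      have gcont : Continuous g :=
        continuous_iff_continuousAt.2 fun x => (hderiv x).differentiableAt.continuousAt
      exact fun x hx => eq_of_has_deriv_right_eq derivf derivg
        gcont.continuousOn hf.continuousOn hi x hx

/-- Auxiliary: a `C^m` function on a (possibly degenerate) closed interval extends to a
`C^m` function on all of `ℝ`. -/
lemma cm_extend (m : ℕ) (f : ℝ → ℝ) (a b : ℝ) (hab : a ≤ b)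
    (hf : ContDiffOn ℝ m f (Set.Icc a b)) :
    ∃ g : ℝ → ℝ, ContDiff ℝ m g ∧ Set.EqOn g f (Set.Icc a b) := by
  rcases lt_or_eq_of_le hab with h | h
  · exact cm_extend_aux m f a b h hf
  · subst h
    refine ⟨fun _ => f a, contDiff_const, ?_⟩
    intro x hx
    rw [Set.Icc_self, Set.mem_singleton_iff] at hx
    simp [hx]

/-- Two `C^m` functions on disjoint closed intervals `[α,β]` and `[γ,δ]`, both bounded
in absolute value by some `M`, extend to a single `C^m` function on `[α,δ]` that is
still bounded by `M`. -/
theorem cm_glue_with_bound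
    (α β γ δ : ℝ) (hαβ : α ≤ β) (hβγ : β < γ) (hγδ : γ ≤ δ) (m : ℕ)
    (f₁ f₂ : ℝ → ℝ)
    (h₁ : ContDiffOn ℝ m f₁ (Set.Icc α β))
    (h₂ : ContDiffOn ℝ m f₂ (Set.Icc γ δ))
    (M : ℝ)
    (hM₁ : ∀ x ∈ Set.Icc α β, |f₁ x| < M)
    (hM₂ : ∀ x ∈ Set.Icc γ δ, |f₂ x| < M) :
    ∃ F : ℝ → ℝ, ContDiffOn ℝ m F (Set.Icc α δ) ∧
      Set.EqOn F f₁ (Set.Icc α β) ∧ Set.EqOn F f₂ (Set.Icc γ δ) ∧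
      ∀ x ∈ Set.Icc α δ, |F x| < M := by
  obtain ⟨E₁, hE₁, hE₁eq⟩ := cm_extend m f₁ α β hαβ h₁
  obtain ⟨E₂, hE₂, hE₂eq⟩ := cm_extend m f₂ γ δ hγδ h₂
  have hM0 : 0 < M := lt_of_le_of_lt (abs_nonneg _) (hM₁ α ⟨le_rfl, hαβ⟩)
  -- small neighborhoods where the extensions stay bounded
  have hb : |E₁ β| < M := by rw [hE₁eq ⟨hαβ, le_rfl⟩]; exact hM₁ β ⟨hαβ, le_rfl⟩
  have hc : |E₂ γ| < M := by rw [hE₂eq ⟨le_rfl, hγδ⟩]; exact hM₂ γ ⟨le_rfl, hγδ⟩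
  have h1 : ∀ᶠ x in nhds β, |E₁ x| < M :=
    (hE₁.continuous.abs.continuousAt).eventually_lt continuousAt_const hb
  have h2 : ∀ᶠ x in nhds γ, |E₂ x| < M :=
    (hE₂.continuous.abs.continuousAt).eventually_lt continuousAt_const hc
  obtain ⟨ε₁, hε₁, hB₁⟩ := Metric.eventually_nhds_iff.mp h1
  obtain ⟨ε₂, hε₂, hB₂⟩ := Metric.eventually_nhds_iff.mp h2
  set e : ℝ := min ε₁ (min ε₂ (γ - β)) / 3 with he_def
  have he : 0 < e := by
    apply div_pos _ (by norm_num)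
    exact lt_min hε₁ (lt_min hε₂ (by linarith))
  have he1 : e < ε₁ := by
    have : min ε₁ (min ε₂ (γ - β)) ≤ ε₁ := min_le_left _ _
    rw [he_def]; linarith
  have he2 : e < ε₂ := by
    have : min ε₁ (min ε₂ (γ - β)) ≤ ε₂ := (min_le_right _ _).trans (min_le_left _ _)
    rw [he_def]; linarith
  have he3 : 3 * e ≤ γ - β := by
    have : min ε₁ (min ε₂ (γ - β)) ≤ γ - β := (min_le_right _ _).trans (min_le_right _ _)
    rw [he_def]; linarith
  set b' : ℝ := β + e with hb'_def
  set c' : ℝ := γ - e with hc'_def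
  have hb'c' : b' < c' := by rw [hb'_def, hc'_def]; linarith
  have hβc' : β < c' := by rw [hc'_def]; linarith
  have hb'γ : b' < γ := by rw [hb'_def]; linarith
  -- bounds on the extensions near the intervals
  have hBnd₁ : ∀ x ∈ Set.Icc α b', |E₁ x| < M := by
    intro x hx
    rcases le_or_gt x β with h | h
    · rw [hE₁eq ⟨hx.1, h⟩]; exact hM₁ x ⟨hx.1, h⟩
    · apply hB₁
      rw [Real.dist_eq, abs_of_pos (by linarith)]
      have := hx.2; rw [hb'_def] at this; linarith
  have hBnd₂ : ∀ x ∈ Set.Icc c' δ, |E₂ x| < M := by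
    intro x hx
    rcases le_or_gt γ x with h | h
    · rw [hE₂eq ⟨h, hx.2⟩]; exact hM₂ x ⟨h, hx.2⟩
    · apply hB₂
      rw [Real.dist_eq, abs_of_neg (by linarith), neg_sub]
      have := hx.1; rw [hc'_def] at this; linarith
  -- cutoff functions
  set ψ₁ : ℝ → ℝ := fun x => Real.smoothTransition ((b' - x) / e) with hψ₁_def
  set ψ₂ : ℝ → ℝ := fun x => Real.smoothTransition ((x - c') / e) with hψ₂_def
  have hψ₁smooth : ContDiff ℝ m ψ₁ := by
    apply Real.smoothTransition.contDiff.comp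
    exact (contDiff_const.sub contDiff_id).div_const e
  have hψ₂smooth : ContDiff ℝ m ψ₂ := by
    apply Real.smoothTransition.contDiff.comp
    exact (contDiff_id.sub contDiff_const).div_const e
  have hψ₁one : ∀ x, x ≤ β → ψ₁ x = 1 := by
    intro x hx
    apply Real.smoothTransition.one_of_one_le
    rw [le_div_iff₀ he]
    rw [hb'_def]; linarith
  have hψ₁zero : ∀ x, b' ≤ x → ψ₁ x = 0 := by
    intro x hx
    apply Real.smoothTransition.zero_of_nonpos
    apply div_nonpos_of_nonpos_of_nonneg (by linarith) he.le
  have hψ₂one : ∀ x, γ ≤ x → ψ₂ x = 1 := by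
    intro x hx
    apply Real.smoothTransition.one_of_one_le
    rw [le_div_iff₀ he]
    rw [hc'_def]; linarith
  have hψ₂zero : ∀ x, x ≤ c' → ψ₂ x = 0 := by
    intro x hx
    apply Real.smoothTransition.zero_of_nonpos
    apply div_nonpos_of_nonpos_of_nonneg (by linarith) he.le
  refine ⟨fun x => ψ₁ x * E₁ x + ψ₂ x * E₂ x, ?_, ?_, ?_, ?_⟩
  · exact ((hψ₁smooth.mul hE₁).add (hψ₂smooth.mul hE₂)).contDiffOn
  · intro x hx
    simp only
    rw [hψ₁one x hx.2, hψ₂zero x (le_of_lt (lt_of_le_of_lt hx.2 hβc')),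
      hE₁eq hx]
    ring
  · intro x hx
    simp only
    rw [hψ₂one x hx.1, hψ₁zero x (le_of_lt (lt_of_lt_of_le hb'γ hx.1)),
      hE₂eq hx]
    ring
  · intro x hx
    simp only
    rcases le_or_gt x b' with h | h
    · rw [hψ₂zero x (le_of_lt (lt_of_le_of_lt h hb'c'))]
      rw [zero_mul, add_zero, abs_mul,
        abs_of_nonneg (Real.smoothTransition.nonneg _)]
      calc ψ₁ x * |E₁ x| ≤ |E₁ x| :=
            mul_le_of_le_one_left (abs_nonneg _) (Real.smoothTransition.le_one _)
        _ < M := hBnd₁ x ⟨hx.1, h⟩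
    · rw [hψ₁zero x h.le, zero_mul, zero_add, abs_mul,
        abs_of_nonneg (Real.smoothTransition.nonneg _)]
      rcases le_or_gt c' x with h' | h'
      · calc ψ₂ x * |E₂ x| ≤ |E₂ x| :=
              mul_le_of_le_one_left (abs_nonneg _) (Real.smoothTransition.le_one _)
          _ < M := hBnd₂ x ⟨h', hx.2⟩
      · have h0 : ((x - c') / e).smoothTransition = 0 := hψ₂zero x h'.le
        rw [h0, zero_mul]; exact hM0
end

section
/- Let x₀ < x₁ < ⋯ < x_n be real numbers and f_j ∈ C^∞([x_{j−1},x_j]) for j=1,…,n, satisfying the compatibility conditions f_i^{(k)}(x_i) = f_{i+1}^{(k)}(x_i) for all k ≤ i−1 and i=1,…,n−1. Then for every δ>0 there exists F ∈ C^{n−1}([x₀,x_n]) such that |F^{(k)}(x) − f_j^{(k)}(x)| < δ for all k=0,…,n−1, all j ∈ {k+1,…,n}, and all x ∈ [x_{j−1},x_j]. -/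
open Set Filter Topology
open scoped ContDiff

namespace GlueApprox


lemma iteratedDeriv_zero_fun (k : ℕ) : iteratedDeriv k (fun _ : ℝ => (0:ℝ)) = fun _ => 0 := by
  induction k with
  | zero => simp
  | succ k ih => rw [iteratedDeriv_succ, ih]; funext y; simp

lemma iteratedDeriv_eq_zero_of_const_on_open {s : Set ℝ} (hs : IsOpen s) {f : ℝ → ℝ} {c : ℝ}
    (h : ∀ t ∈ s, f t = c) : ∀ (k : ℕ), ∀ y ∈ s, iteratedDeriv (k+1) f y = 0 := by
  intro k
  induction k with
  | zero =>
    intro y hy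
    have hev : f =ᶠ[𝓝 y] (fun _ => c) := eventually_of_mem (hs.mem_nhds hy) h
    rw [iteratedDeriv_one, hev.deriv_eq, deriv_const]
  | succ k ih =>
    intro y hy
    have hev : iteratedDeriv (k+1) f =ᶠ[𝓝 y] (fun _ => (0:ℝ)) :=
      eventually_of_mem (hs.mem_nhds hy) ih
    rw [iteratedDeriv_succ, hev.deriv_eq, deriv_const]

lemma iteratedDeriv_eq_zero_of_zero_on_Iic {r : ℝ} {g : ℝ → ℝ} (hg : ContDiff ℝ ∞ g)
    (h0 : ∀ t ≤ r, g t = 0) : ∀ (k : ℕ), ∀ y ≤ r, iteratedDeriv k g y = 0 := by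
  have hopen : ∀ (k : ℕ), ∀ y ∈ Iio r, iteratedDeriv (k+1) g y = 0 :=
    iteratedDeriv_eq_zero_of_const_on_open isOpen_Iio (fun t ht => h0 t ht.le)
  intro k y hy
  rcases k with _ | k
  · simpa using h0 y hy
  rcases lt_or_eq_of_le hy with hlt | rfl
  · exact hopen k y hlt
  · have hcont : Continuous (iteratedDeriv (k+1) g) := by
      rw [iteratedDeriv_eq_iterate]
      exact (hg.iterate_deriv (k+1)).continuous
    have h1 : Tendsto (iteratedDeriv (k+1) g) (𝓝[<] y) (𝓝 (iteratedDeriv (k+1) g y)) :=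
      (hcont.continuousAt).continuousWithinAt
    have h2 : Tendsto (iteratedDeriv (k+1) g) (𝓝[<] y) (𝓝 0) := by
      apply Tendsto.congr' _ tendsto_const_nhds
      filter_upwards [self_mem_nhdsWithin] with t ht
      exact (hopen k t ht).symm
    exact tendsto_nhds_unique h1 h2

lemma smoothTransition_iteratedDeriv_bound (k : ℕ) :
    ∃ M : ℝ, 1 ≤ M ∧ ∀ y : ℝ, |iteratedDeriv k Real.smoothTransition y| ≤ M := by
  have hsm : ContDiff ℝ ∞ Real.smoothTransition := Real.smoothTransition.contDiff
  have hcont : Continuous (iteratedDeriv k Real.smoothTransition) := by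
    rw [iteratedDeriv_eq_iterate]
    exact (hsm.iterate_deriv k).continuous
  obtain ⟨C, hC⟩ := (isCompact_Icc (a := (0:ℝ)) (b := 1)).exists_bound_of_continuousOn
    hcont.continuousOn
  refine ⟨max C 1, le_max_right _ _, fun y => ?_⟩
  by_cases hy : y ∈ Icc (0:ℝ) 1
  · exact le_trans (by simpa [Real.norm_eq_abs] using hC y hy) (le_max_left _ _)
  · rcases k with _ | k
    · have h1 : |Real.smoothTransition y| ≤ 1 := by
        rw [abs_le]
        exact ⟨by linarith [Real.smoothTransition.nonneg y], Real.smoothTransition.le_one y⟩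
      simpa using le_trans h1 (le_max_right _ _)
    · have : iteratedDeriv (k+1) Real.smoothTransition y = 0 := by
        rcases lt_or_ge y 0 with h | h0
        · exact iteratedDeriv_eq_zero_of_const_on_open isOpen_Iio
            (fun t ht => Real.smoothTransition.zero_of_nonpos ht.le) k y (by simpa using h)
        have h : 1 < y := by
          rcases lt_or_ge 1 y with h1 | h1
          · exact h1
          · exact absurd ⟨h0, h1⟩ hy
        exact iteratedDeriv_eq_zero_of_const_on_open isOpen_Ioi
            (fun t ht => Real.smoothTransition.one_of_one_le ht.le) k y (by simpa using h)
      rw [this]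
      simp only [abs_zero]
      exact le_trans zero_le_one (le_max_right _ _)



/-- Polynomial in powers of `(t - b)`. -/
def P (b : ℝ) (a : ℕ → ℝ) (M : ℕ) : ℝ → ℝ := fun t => ∑ m ∈ Finset.range M, a m * (t - b) ^ m

/-- Coefficient operation corresponding to differentiation. -/
def Dc (a : ℕ → ℝ) : ℕ → ℝ := fun m => (m + 1 : ℝ) * a (m + 1)

lemma P_contDiff (b : ℝ) (a : ℕ → ℝ) (M : ℕ) : ContDiff ℝ ∞ (P b a M) := by
  apply ContDiff.sum
  intro i _
  exact contDiff_const.mul ((contDiff_id.sub contDiff_const).pow i)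

lemma P_hasDerivAt (b : ℝ) (a : ℕ → ℝ) (M : ℕ) (t : ℝ) :
    HasDerivAt (P b a (M + 1)) (P b (Dc a) M t) t := by
  have h : ∀ m : ℕ, HasDerivAt (fun t : ℝ => a m * (t - b) ^ m)
      (a m * ((m : ℝ) * (t - b) ^ (m - 1))) t := by
    intro m
    have := (((hasDerivAt_id t).sub_const b).pow m).const_mul (a m)
    simpa using this
  have hsum := HasDerivAt.fun_sum (fun m (_ : m ∈ Finset.range (M + 1)) => h m)
  have : ∑ m ∈ Finset.range (M + 1), a m * ((m : ℝ) * (t - b) ^ (m - 1)) = P b (Dc a) M t := by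
    rw [Finset.sum_range_succ']
    simp only [Nat.cast_zero, zero_mul, mul_zero, add_zero, Nat.cast_ofNat]
    unfold P Dc
    apply Finset.sum_congr rfl
    intro m _
    push_cast
    ring
  rw [this] at hsum
  exact hsum

lemma P_iteratedDeriv (b : ℝ) (a : ℕ → ℝ) (M q : ℕ) :
    iteratedDeriv q (P b a M) = P b (Dc^[q] a) (M - q) := by
  induction q generalizing a with
  | zero => simp [iteratedDeriv_zero]
  | succ q ih =>
    rw [iteratedDeriv_succ, ih]
    rcases Nat.eq_zero_or_pos (M - q) with hMq | hMq
    · have h0 : P b (Dc^[q] a) (M - q) = fun _ => 0 := by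
        funext t; rw [hMq]; simp [P]
      have h1 : M - (q + 1) = 0 := by omega
      rw [h0, h1]
      funext t
      simp [P, deriv_const]
    · have hMq' : M - q = ((M - q) - 1) + 1 := by omega
      rw [hMq']
      funext t
      rw [(P_hasDerivAt b (Dc^[q] a) ((M - q) - 1) t).deriv]
      have h2 : M - (q + 1) = (M - q) - 1 := by omega
      rw [h2, ← Function.iterate_succ_apply' Dc q a]

lemma Dc_iterate (a : ℕ → ℝ) (q m : ℕ) :
    Dc^[q] a m = ((m + q).descFactorial q : ℝ) * a (m + q) := by
  induction q generalizing a with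
  | zero => simp
  | succ q ih =>
    rw [Function.iterate_succ_apply, ih]
    unfold Dc
    have h1 : m + q + 1 = m + (q + 1) := by omega
    have h2 : (m + (q + 1)).descFactorial (q + 1) = (m + q + 1) * ((m + q).descFactorial q) := by
      have := Nat.succ_descFactorial_succ (m + q) q
      simpa [Nat.succ_eq_add_one, Nat.add_assoc] using this
    rw [h1, h2]
    push_cast
    ring

lemma P_apply_self (b : ℝ) (a : ℕ → ℝ) (M : ℕ) (hM : 0 < M) : P b a M b = a 0 := by
  unfold P
  rw [Finset.sum_eq_single 0]
  · simp
  · intro m _ hm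
    simp [zero_pow hm]
  · intro h
    exact absurd (Finset.mem_range.mpr hM) h

lemma P_abs_le (b : ℝ) (a : ℕ → ℝ) (M : ℕ) (t : ℝ) :
    |P b a M t| ≤ ∑ m ∈ Finset.range M, |a m| * |t - b| ^ m := by
  refine le_trans (Finset.abs_sum_le_sum_abs _ _) (le_of_eq ?_)
  apply Finset.sum_congr rfl
  intro m _
  rw [abs_mul, abs_pow]


lemma correction_exists (N j : ℕ) (hjN : j ≤ N) (a b : ℝ) (hab : a < b) (c : ℕ → ℝ)
    (hc : ∀ k ≤ j, c k = 0) {ε : ℝ} (hε : 0 < ε) :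
    ∃ g : ℝ → ℝ, ContDiff ℝ ∞ g ∧
      (∀ k ≤ N, iteratedDeriv k g b = c k) ∧
      (∀ (k : ℕ), ∀ y ≤ a, iteratedDeriv k g y = 0) ∧
      (∀ k ≤ j, ∀ y ≤ b, |iteratedDeriv k g y| < ε) := by
  classical
  choose M hM1 hM2 using smoothTransition_iteratedDeriv_bound
  set K : ℝ := (((N+1)^(N+1) : ℕ) : ℝ) with hK
  have hK1 : (1:ℝ) ≤ K := by
    rw [hK]
    exact_mod_cast Nat.one_le_iff_ne_zero.mpr (by positivity)
  set ac : ℕ → ℝ := fun i => c i / (i.factorial : ℝ) with hac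
  set A : ℝ := (∑ i ∈ Finset.range (N+1), K * |ac i|) + 1 with hA
  have hAsum : (0:ℝ) ≤ ∑ i ∈ Finset.range (N+1), K * |ac i| :=
    Finset.sum_nonneg (fun i _ => by positivity)
  have hA1 : (1:ℝ) ≤ A := by rw [hA]; linarith
  set B : ℝ := (∑ l ∈ Finset.range (N+1), (2:ℝ)^N * M l * 2^l * A) + 1 with hB
  have hBsum : (0:ℝ) ≤ ∑ l ∈ Finset.range (N+1), (2:ℝ)^N * M l * 2^l * A :=
    Finset.sum_nonneg (fun l _ => by
      have := hM1 l
      positivity)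
  have hB1 : (1:ℝ) ≤ B := by rw [hB]; linarith
  set η : ℝ := min ((b-a)/2) (min 1 (ε/(2*B))) with hη
  have hη0 : 0 < η := lt_min (by linarith) (lt_min one_pos (div_pos hε (by linarith)))
  have hη1 : η ≤ 1 := le_trans (min_le_right _ _) (min_le_left _ _)
  have hηab : η ≤ (b-a)/2 := min_le_left _ _
  have hηe : η ≤ ε/(2*B) := le_trans (min_le_right _ _) (min_le_right _ _)
  set χ : ℝ → ℝ := fun t => Real.smoothTransition ((t - (b - η)) * (2/η)) with hχ
  set p : ℝ → ℝ := P b ac (N+1) with hp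
  have hsm : ContDiff ℝ ∞ Real.smoothTransition := Real.smoothTransition.contDiff
  have hχsm : ContDiff ℝ ∞ χ := by
    apply hsm.comp
    exact (contDiff_id.sub contDiff_const).mul contDiff_const
  have hgsm : ContDiff ℝ ∞ (fun t => χ t * p t) := hχsm.mul (P_contDiff b ac (N+1))
  have hχd : ∀ (l : ℕ) (y : ℝ), iteratedDeriv l χ y
      = (2/η)^l * iteratedDeriv l Real.smoothTransition ((y - (b - η)) * (2/η)) := by
    intro l y
    have h1 : χ = fun t : ℝ => (fun u : ℝ => Real.smoothTransition ((2/η) * u)) (t + -(b - η)) := by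
      funext t
      rw [hχ]
      congr 1
      ring
    have hsm' : ContDiff ℝ l Real.smoothTransition :=
      hsm.of_le (by exact_mod_cast le_top)
    rw [h1, iteratedDeriv_comp_add_const l (fun u : ℝ => Real.smoothTransition ((2/η) * u)),
      iteratedDeriv_comp_const_mul hsm' (2/η)]
    show (2/η)^l * iteratedDeriv l Real.smoothTransition ((2/η) * (y + -(b - η)))
      = (2/η)^l * iteratedDeriv l Real.smoothTransition ((y - (b - η)) * (2/η))
    have h2 : (2/η) * (y + -(b - η)) = (y - (b - η)) * (2/η) := by ring
    rw [h2]
  have hχb : ∀ (l : ℕ) (y : ℝ), |iteratedDeriv l χ y| ≤ (2/η)^l * M l := by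
    intro l y
    rw [hχd l y, abs_mul, abs_pow, abs_of_nonneg (by positivity : (0:ℝ) ≤ 2/η)]
    exact mul_le_mul_of_nonneg_left (hM2 l _) (by positivity)
  have hg0 : ∀ t ≤ b - η, χ t * p t = 0 := by
    intro t ht
    have : χ t = 0 := by
      rw [hχ]
      apply Real.smoothTransition.zero_of_nonpos
      apply mul_nonpos_of_nonpos_of_nonneg (by linarith) (by positivity)
    rw [this, zero_mul]
  have hzero : ∀ (k : ℕ), ∀ y ≤ b - η, iteratedDeriv k (fun t => χ t * p t) y = 0 :=
    iteratedDeriv_eq_zero_of_zero_on_Iic hgsm hg0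
  refine ⟨fun t => χ t * p t, hgsm, ?_, ?_, ?_⟩
  · -- jet at b
    intro k hk
    have hev : (fun t => χ t * p t) =ᶠ[𝓝 b] p := by
      have hmem : Ioi (b - η/2) ∈ 𝓝 b := isOpen_Ioi.mem_nhds (by simp only [mem_Ioi]; linarith)
      filter_upwards [hmem] with t ht
      have ht' : b - η/2 < t := ht
      have hχ1 : χ t = 1 := by
        rw [hχ]
        apply Real.smoothTransition.one_of_one_le
        have h4 : η/2 ≤ t - (b - η) := by linarith
        calc (1:ℝ) = (η/2) * (2/η) := by field_simp
          _ ≤ (t - (b - η)) * (2/η) := by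
              apply mul_le_mul_of_nonneg_right h4 (by positivity)
      rw [hχ1, one_mul]
    rw [hev.iteratedDeriv_eq k, hp, P_iteratedDeriv, P_apply_self _ _ _ (by omega), Dc_iterate]
    simp only [Nat.zero_add, hac]
    rw [Nat.descFactorial_self]
    have : (k.factorial : ℝ) ≠ 0 := by exact_mod_cast k.factorial_ne_zero
    field_simp
  · -- zero left of a
    intro k y hy
    exact hzero k y (by linarith)
  · -- smallness
    intro k hk y hy
    by_cases hyb : y ≤ b - η
    · rw [hzero k y hyb]; simpa using hε
    push_neg at hyb
    have hyd : |y - b| ≤ η := abs_le.mpr ⟨by linarith, by linarith⟩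
    have hpb : ∀ q ≤ j, |iteratedDeriv q p y| ≤ A * η^(j+1-q) := by
      intro q hq
      rw [hp, P_iteratedDeriv]
      refine le_trans (P_abs_le _ _ _ _) ?_
      have hterm : ∀ m ∈ Finset.range (N+1-q),
          |Dc^[q] ac m| * |y-b|^m ≤ (K * |ac (m+q)|) * η^(j+1-q) := by
        intro m hm
        rw [Dc_iterate, abs_mul]
        by_cases hmq : m + q ≤ j
        · have hz : ac (m+q) = 0 := by
            rw [hac]; simp [hc _ hmq]
          rw [hz]
          simp
        · push_neg at hmq
          have h5 : j + 1 - q ≤ m := by omega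
          have hmN : m + q ≤ N := by
            have := Finset.mem_range.mp hm
            omega
          have hdesc : |(((m+q).descFactorial q : ℕ) : ℝ)| ≤ K := by
            rw [abs_of_nonneg (by positivity), hK]
            have h6 : (m+q).descFactorial q ≤ (N+1)^(N+1) := by
              calc (m+q).descFactorial q ≤ (m+q)^q := Nat.descFactorial_le_pow _ _
                _ ≤ (N+1)^q := Nat.pow_le_pow_left (by omega) q
                _ ≤ (N+1)^(N+1) := Nat.pow_le_pow_right (by omega) (by omega)
            exact_mod_cast h6
          have hpow : |y-b|^m ≤ η^(j+1-q) := by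
            calc |y-b|^m ≤ η^m := pow_le_pow_left₀ (abs_nonneg _) hyd m
              _ ≤ η^(j+1-q) := pow_le_pow_of_le_one hη0.le hη1 h5
          exact mul_le_mul (mul_le_mul_of_nonneg_right hdesc (abs_nonneg _)) hpow
            (by positivity) (by positivity)
      refine le_trans (Finset.sum_le_sum hterm) ?_
      rw [← Finset.sum_mul]
      apply mul_le_mul_of_nonneg_right ?_ (by positivity)
      calc ∑ m ∈ Finset.range (N+1-q), K * |ac (m+q)|
          = ∑ i ∈ Finset.Ico q (N+1), K * |ac i| := by
            rw [Finset.sum_Ico_eq_sum_range]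
            apply Finset.sum_congr rfl
            intro m _
            rw [Nat.add_comm]
        _ ≤ ∑ i ∈ Finset.range (N+1), K * |ac i| := by
            apply Finset.sum_le_sum_of_subset_of_nonneg
            · intro i hi
              simp only [Finset.mem_Ico] at hi
              exact Finset.mem_range.mpr hi.2
            · intro i _ _
              positivity
        _ ≤ A := by rw [hA]; linarith
    have hLe : |iteratedDeriv k (fun t => χ t * p t) y| ≤ ∑ l ∈ Finset.range (k+1),
        (k.choose l : ℝ) * ‖iteratedFDeriv ℝ l χ y‖ * ‖iteratedFDeriv ℝ (k-l) p y‖ := by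
      rw [← Real.norm_eq_abs, ← norm_iteratedFDeriv_eq_norm_iteratedDeriv]
      exact norm_iteratedFDeriv_mul_le hχsm (P_contDiff b ac (N+1)) y (by exact_mod_cast le_top)
    have hterm2 : ∀ l ∈ Finset.range (k+1),
        (k.choose l : ℝ) * ‖iteratedFDeriv ℝ l χ y‖ * ‖iteratedFDeriv ℝ (k-l) p y‖
          ≤ ((2:ℝ)^N * M l * 2^l * A) * η := by
      intro l hl
      have hl' : l ≤ k := by
        have := Finset.mem_range.mp hl; omega
      have hq : k - l ≤ j := by omega
      rw [norm_iteratedFDeriv_eq_norm_iteratedDeriv, norm_iteratedFDeriv_eq_norm_iteratedDeriv,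
        Real.norm_eq_abs, Real.norm_eq_abs]
      have hb2 : |iteratedDeriv (k-l) p y| ≤ A * η^(l+1) := by
        refine le_trans (hpb (k-l) hq) ?_
        apply mul_le_mul_of_nonneg_left ?_ (by linarith)
        apply pow_le_pow_of_le_one hη0.le hη1 (by omega)
      have hch : (k.choose l : ℝ) ≤ (2:ℝ)^N := by
        have h8 : k.choose l ≤ 2^k := by
          calc k.choose l ≤ ∑ i ∈ Finset.range (k+1), k.choose i :=
                Finset.single_le_sum (fun i _ => Nat.zero_le _) hl
            _ = 2^k := Nat.sum_range_choose k
        calc (k.choose l : ℝ) ≤ (2:ℝ)^k := by exact_mod_cast h8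
          _ ≤ (2:ℝ)^N := pow_le_pow_right₀ one_le_two (by omega)
      have hMl0 : (0:ℝ) ≤ M l := le_trans zero_le_one (hM1 l)
      calc (k.choose l : ℝ) * |iteratedDeriv l χ y| * |iteratedDeriv (k-l) p y|
          ≤ ((2:ℝ)^N * ((2/η)^l * M l)) * (A * η^(l+1)) := by
            apply mul_le_mul (mul_le_mul hch (hχb l y) (abs_nonneg _) (by positivity))
              hb2 (abs_nonneg _) (by positivity)
        _ = ((2:ℝ)^N * M l * 2^l * A) * η := by
            have hηne : η ≠ 0 := ne_of_gt hη0
            field_simp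
            rw [div_pow, pow_succ, div_mul_eq_mul_div, div_mul_eq_mul_div, div_eq_iff (pow_ne_zero l hηne)]
            ring
    calc |iteratedDeriv k (fun t => χ t * p t) y|
        ≤ ∑ l ∈ Finset.range (k+1),
            (k.choose l : ℝ) * ‖iteratedFDeriv ℝ l χ y‖ * ‖iteratedFDeriv ℝ (k-l) p y‖ := hLe
      _ ≤ ∑ l ∈ Finset.range (k+1), ((2:ℝ)^N * M l * 2^l * A) * η :=
          Finset.sum_le_sum hterm2
      _ ≤ ∑ l ∈ Finset.range (N+1), ((2:ℝ)^N * M l * 2^l * A) * η := by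
          apply Finset.sum_le_sum_of_subset_of_nonneg
          · intro i hi
            simp only [Finset.mem_range] at *
            omega
          · intro l _ _
            have := hM1 l
            positivity
      _ = (∑ l ∈ Finset.range (N+1), (2:ℝ)^N * M l * 2^l * A) * η := by
          rw [Finset.sum_mul]
      _ ≤ B * η := mul_le_mul_of_nonneg_right (by rw [hB]; linarith) hη0.le
      _ ≤ B * (ε/(2*B)) := mul_le_mul_of_nonneg_left hηe (by linarith)
      _ = ε/2 := by
          field_simp
      _ < ε := by linarith


lemma iteratedDerivWithin_eq_iteratedDeriv' {g : ℝ → ℝ} (hg : ContDiff ℝ ∞ g) {s : Set ℝ}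
    (hs : UniqueDiffOn ℝ s) (k : ℕ) :
    ∀ y ∈ s, iteratedDerivWithin k g s y = iteratedDeriv k g y := by
  induction k with
  | zero => intro y hy; simp
  | succ k ih =>
    intro y hy
    rw [iteratedDerivWithin_succ, iteratedDeriv_succ]
    rw [derivWithin_congr (fun t ht => ih t ht) (ih y hy)]
    have hdiff : DifferentiableAt ℝ (iteratedDeriv k g) y := by
      rw [iteratedDeriv_eq_iterate]
      exact ((hg.iterate_deriv k).differentiable (by simp)).differentiableAt
    exact hdiff.derivWithin (hs.uniqueDiffWithinAt hy)

noncomputable def glue (x : ℕ → ℝ) (u : ℕ → ℝ → ℝ) : ℕ → ℝ → ℝ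
  | 0 => u 0
  | m+1 => fun t => if t ≤ x (m+1) then glue x u m t else u (m+1) t

lemma glue_eq (x : ℕ → ℝ) (u : ℕ → ℝ → ℝ) (m : ℕ)
    (hmono : ∀ i k : ℕ, i ≤ k → k ≤ m + 1 → x i ≤ x k) :
    ∀ j ≤ m, ∀ t : ℝ, (j = 0 ∨ x j < t) → t ≤ x (j+1) → glue x u m t = u j t := by
  induction m with
  | zero =>
    intro j hj t _ _
    have : j = 0 := by omega
    subst this
    rfl
  | succ m ih =>
    intro j hj t h1 h2
    show (if t ≤ x (m+1) then glue x u m t else u (m+1) t) = u j t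
    rcases Nat.lt_or_ge j (m+1) with hjm | hjm
    · have hle : t ≤ x (m+1) := le_trans h2 (hmono (j+1) (m+1) (by omega) (by omega))
      rw [if_pos hle]
      exact ih (fun i k hik hk => hmono i k hik (by omega)) j (by omega) t h1 h2
    · have hj1 : j = m+1 := by omega
      subst hj1
      have hlt : x (m+1) < t := by
        rcases h1 with h0 | h
        · omega
        · exact h
      rw [if_neg (not_le.mpr hlt)]


end GlueApprox

open GlueApprox

/-- A family of smooth pieces `f j` on `[x j, x (j+1)]` (for `j = 0,…,n−1`,
corresponding to `f_{j+1}` on `[x_j, x_{j+1}]`) which agree at the junction points up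
to suitable order can be approximated, together with the relevant derivatives, by a
single `C^{n−1}` function on `[x 0, x n]`. -/
theorem glue_approximation_Cn
    (n : ℕ) (hn : 0 < n) (x : ℕ → ℝ) (hx : ∀ i < n, x i < x (i + 1))
    (f : ℕ → ℝ → ℝ)
    (hf : ∀ j < n, ContDiffOn ℝ (⊤ : ℕ∞) (f j) (Set.Icc (x j) (x (j + 1))))
    (hcompat : ∀ i, 1 ≤ i → i ≤ n - 1 → ∀ k ≤ i - 1,
      iteratedDerivWithin k (f (i - 1)) (Set.Icc (x (i - 1)) (x i)) (x i) =
        iteratedDerivWithin k (f i) (Set.Icc (x i) (x (i + 1))) (x i))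
    (δ : ℝ) (hδ : 0 < δ) :
    ∃ F : ℝ → ℝ, ContDiffOn ℝ (n - 1 : ℕ) F (Set.Icc (x 0) (x n)) ∧
      ∀ k < n, ∀ j, k ≤ j → j < n → ∀ y ∈ Set.Icc (x j) (x (j + 1)),
        |iteratedDerivWithin k F (Set.Icc (x 0) (x n)) y -
          iteratedDerivWithin k (f j) (Set.Icc (x j) (x (j + 1))) y| < δ := by
  classical
  have xlt : ∀ k ≤ n, ∀ i < k, x i < x k := by
    intro k hk
    induction k with
    | zero => omega
    | succ k ihk =>
      intro i hi
      have h1 : x k < x (k+1) := hx k (by omega)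
      rcases Nat.lt_or_ge i k with h | h
      · exact lt_trans (ihk (by omega) i h) h1
      · have : i = k := by omega
        subst this; exact h1
  have xle : ∀ i k : ℕ, i ≤ k → k ≤ n → x i ≤ x k := by
    intro i k h hk
    rcases eq_or_lt_of_le h with rfl | h'
    · exact le_refl _
    · exact (xlt k hk i h').le
  have hx0n : x 0 < x n := xlt n (le_refl n) 0 hn
  set big := Set.Icc (x 0) (x n) with hbig
  have hud : UniqueDiffOn ℝ big := uniqueDiffOn_Icc hx0n
  have hudp : ∀ j < n, UniqueDiffOn ℝ (Icc (x j) (x (j+1))) :=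
    fun j hj => uniqueDiffOn_Icc (hx j hj)
  set N := n - 1 with hN
  set cj : ℕ → ℕ → ℝ := fun j k =>
    iteratedDerivWithin k (f (j+1)) (Icc (x (j+1)) (x (j+1+1))) (x (j+1)) -
      iteratedDerivWithin k (f j) (Icc (x j) (x (j+1))) (x (j+1)) with hcj
  have hcj0 : ∀ j, j + 1 < n → ∀ k ≤ j, cj j k = 0 := by
    intro j hj k hk
    have h := hcompat (j+1) (by omega) (by omega) k (by omega)
    simp only [Nat.add_sub_cancel] at h
    simp only [hcj]
    rw [sub_eq_zero]
    exact h.symm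
  have hgex : ∀ j : ℕ, ∃ g : ℝ → ℝ, ContDiff ℝ ∞ g ∧
      (j + 1 < n → ∀ k ≤ N, iteratedDeriv k g (x (j+1)) = cj j k) ∧
      (∀ (k:ℕ), ∀ y ≤ x j, iteratedDeriv k g y = 0) ∧
      (∀ k ≤ j, ∀ y ≤ x (j+1), |iteratedDeriv k g y| < δ) := by
    intro j
    by_cases hj : j + 1 < n
    · obtain ⟨g, h1, h2, h3, h4⟩ := correction_exists N j (by omega) (x j) (x (j+1))
        (hx j (by omega)) (cj j) (hcj0 j hj) hδ
      exact ⟨g, h1, fun _ => h2, h3, h4⟩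
    · refine ⟨fun _ => 0, contDiff_const, fun h => absurd h hj, ?_, ?_⟩
      · intro k y _
        rw [iteratedDeriv_zero_fun]
      · intro k _ y _
        rw [iteratedDeriv_zero_fun]
        simpa using hδ
  choose gc hgcsm hgcjet hgcleft hgcsmall using hgex
  set Fp : ℕ → ℝ → ℝ := fun j t => f j t + gc j t with hFp
  have hFpsm : ∀ j < n, ContDiffOn ℝ ∞ (Fp j) (Icc (x j) (x (j+1))) := by
    intro j hj
    exact ((hf j hj).of_le (by simp)).add (hgcsm j).contDiffOn
  set ψ : ℕ → ℕ → ℝ → ℝ := fun j k => iteratedDerivWithin k (Fp j) (Icc (x j) (x (j+1)))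
    with hψ
  have ψdiff : ∀ j < n, ∀ (k : ℕ), ∀ y ∈ Icc (x j) (x (j+1)),
      HasDerivWithinAt (ψ j k) (ψ j (k+1) y) (Icc (x j) (x (j+1))) y := by
    intro j hj k y hy
    have h1 : DifferentiableWithinAt ℝ (ψ j k) (Icc (x j) (x (j+1))) y := by
      simp only [hψ]
      exact ((hFpsm j hj).differentiableOn_iteratedDerivWithin
        (by exact_mod_cast WithTop.coe_lt_top k) (hudp j hj)) y hy
    have h2 := h1.hasDerivWithinAt
    have h3 : derivWithin (ψ j k) (Icc (x j) (x (j+1))) y = ψ j (k+1) y := by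
      simp only [hψ]
      rw [iteratedDerivWithin_succ]
    rwa [h3] at h2
  have ψcont : ∀ j < n, ∀ (k : ℕ), ContinuousOn (ψ j k) (Icc (x j) (x (j+1))) := by
    intro j hj k
    simp only [hψ]
    exact (hFpsm j hj).continuousOn_iteratedDerivWithin (by exact_mod_cast le_top) (hudp j hj)
  have ψadd : ∀ j < n, ∀ (k:ℕ), ∀ y ∈ Icc (x j) (x (j+1)),
      ψ j k y = iteratedDerivWithin k (f j) (Icc (x j) (x (j+1))) y
        + iteratedDeriv k (gc j) y := by
    intro j hj k y hy
    simp only [hψ, hFp]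
    have h1 : (fun t => f j t + gc j t) = f j + gc j := rfl
    rw [h1, iteratedDerivWithin_add hy (hudp j hj)
      ((hf j hj).of_le (by exact_mod_cast le_top) y hy) (((hgcsm j).of_le (m := (k : WithTop ℕ∞)) (by exact_mod_cast le_top)).contDiffOn y hy)]
    rw [iteratedDerivWithin_eq_iteratedDeriv' (hgcsm j) (hudp j hj) k y hy]
  have jetmatch : ∀ j, j + 1 < n → ∀ k ≤ N, ψ j k (x (j+1)) = ψ (j+1) k (x (j+1)) := by
    intro j hj k hk
    have hyL : x (j+1) ∈ Icc (x j) (x (j+1)) := ⟨(hx j (by omega)).le, le_refl _⟩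
    have hyR : x (j+1) ∈ Icc (x (j+1)) (x (j+1+1)) := ⟨le_refl _, (hx (j+1) hj).le⟩
    rw [ψadd j (by omega) k _ hyL, ψadd (j+1) hj k _ hyR]
    rw [hgcjet j hj k hk, hgcleft (j+1) k (x (j+1)) (le_refl _)]
    simp only [hcj]
    ring
  set D : ℕ → ℝ → ℝ := fun k => glue x (fun j => ψ j k) (n-1) with hD
  have hmono' : ∀ i k : ℕ, i ≤ k → k ≤ (n-1) + 1 → x i ≤ x k :=
    fun i k h1 h2 => xle i k h1 (by omega)
  have glue_eval : ∀ (k:ℕ), ∀ j ≤ n - 1, ∀ t : ℝ, (j = 0 ∨ x j < t) → t ≤ x (j+1) →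
      D k t = ψ j k t := by
    intro k j hj t h1 h2
    simp only [hD]
    exact glue_eq x (fun j => ψ j k) (n-1) hmono' j hj t h1 h2
  have DeqL : ∀ (k:ℕ), ∀ i : ℕ, 1 ≤ i → i ≤ n →
      EqOn (D k) (ψ (i-1) k) (Ioc (x (i-1)) (x i)) := by
    intro k i h1 h2 t ht
    have hi : i - 1 + 1 = i := by omega
    exact glue_eval k (i-1) (by omega) t (Or.inr ht.1) (by rw [hi]; exact ht.2)
  have DeqR : ∀ k ≤ N, ∀ i, i < n → EqOn (D k) (ψ i k) (Icc (x i) (x (i+1))) := by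
    intro k hk i hi t ht
    rcases eq_or_lt_of_le ht.1 with heq | hlt
    · subst heq
      rcases Nat.eq_zero_or_pos i with rfl | hpos
      · exact glue_eval k 0 (by omega) (x 0) (Or.inl rfl) (xle 0 1 (by omega) (by omega))
      · have hi1 : i - 1 + 1 = i := by omega
        have hL : D k (x i) = ψ (i-1) k (x i) :=
          glue_eval k (i-1) (by omega) (x i) (Or.inr (xlt i (by omega) (i-1) (by omega)))
            (by rw [hi1])
        have jm := jetmatch (i-1) (by omega) k hk
        rw [hi1] at jm
        exact hL.trans jm
    · exact glue_eval k i (by omega) t (Or.inr hlt) ht.2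
  have cover : ∀ y ∈ big, (∃ i ≤ n, y = x i) ∨ ∃ j, j < n ∧ x j < y ∧ y < x (j+1) := by
    intro y hy
    by_cases hex : ∃ i ≤ n, y = x i
    · exact Or.inl hex
    push_neg at hex
    right
    have h0 : x 0 < y := lt_of_le_of_ne hy.1 (fun h => hex 0 (by omega) h.symm)
    have hn' : ¬ x n < y := not_lt.mpr hy.2
    have hQ : ∃ i, ¬ x i < y := ⟨n, hn'⟩
    have hi0n : Nat.find hQ ≤ n := Nat.find_le hn'
    have hi0pos : 0 < Nat.find hQ := by
      rcases Nat.eq_zero_or_pos (Nat.find hQ) with h | h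
      · exfalso
        have := Nat.find_spec hQ
        rw [h] at this
        exact this h0
      · exact h
    refine ⟨Nat.find hQ - 1, by omega, ?_, ?_⟩
    · have := Nat.find_min hQ (show Nat.find hQ - 1 < Nat.find hQ by omega)
      exact not_not.mp this
    · have h2 : y ≤ x (Nat.find hQ) := not_lt.mp (Nat.find_spec hQ)
      have h3 : y ≠ x (Nat.find hQ) := fun h => hex (Nat.find hQ) hi0n h
      have hi1 : Nat.find hQ - 1 + 1 = Nat.find hQ := by omega
      rw [hi1]
      exact lt_of_le_of_ne h2 h3
  have memL : Icc (x 0) (x 1) ∈ 𝓝[big] (x 0) := by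
    apply mem_nhdsWithin.mpr
    refine ⟨Iio (x 1), isOpen_Iio, xlt 1 (by omega) 0 (by omega), ?_⟩
    rintro t ⟨ht1, ht2⟩
    exact ⟨ht2.1, ht1.le⟩
  have memR : Ioc (x (n-1)) (x n) ∈ 𝓝[big] (x n) := by
    apply mem_nhdsWithin.mpr
    refine ⟨Ioi (x (n-1)), isOpen_Ioi, xlt n (le_refl _) (n-1) (by omega), ?_⟩
    rintro t ⟨ht1, ht2⟩
    exact ⟨ht1, ht2.2⟩
  have memM : ∀ i, 0 < i → i < n →
      Ioc (x (i-1)) (x i) ∪ Icc (x i) (x (i+1)) ∈ 𝓝[big] (x i) := by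
    intro i h0 hi
    apply mem_nhdsWithin.mpr
    refine ⟨Ioo (x (i-1)) (x (i+1)), isOpen_Ioo,
      ⟨xlt i (by omega) (i-1) (by omega), hx i hi⟩, ?_⟩
    rintro t ⟨⟨ht1, ht2⟩, _⟩
    rcases le_or_gt t (x i) with h | h
    · exact Or.inl ⟨ht1, h⟩
    · exact Or.inr ⟨h.le, ht2.le⟩
  have hmem0 : x 0 ∈ Icc (x 0) (x 1) := ⟨le_refl _, (hx 0 hn).le⟩
  have hDderiv : ∀ (k:ℕ), k + 1 ≤ N → ∀ y ∈ big, HasDerivWithinAt (D k) (D (k+1) y) big y := by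
    intro k hk y hy
    rcases cover y hy with ⟨i, hin, rfl⟩ | ⟨j, hjn, hj1, hj2⟩
    · rcases Nat.eq_zero_or_pos i with rfl | hipos
      · have h1 : HasDerivWithinAt (D k) (ψ 0 (k+1) (x 0)) (Icc (x 0) (x 1)) (x 0) :=
          (ψdiff 0 hn k _ hmem0).congr (fun t ht => DeqR k (by omega) 0 hn ht)
            (DeqR k (by omega) 0 hn hmem0)
        have h4 : D (k+1) (x 0) = ψ 0 (k+1) (x 0) := DeqR (k+1) hk 0 hn hmem0
        rw [h4]
        exact h1.mono_of_mem_nhdsWithin memL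
      rcases eq_or_lt_of_le hin with rfl | hiltn
      · have hi1 : i - 1 + 1 = i := by omega
        have hmemn : x i ∈ Icc (x (i-1)) (x (i-1+1)) := by
          rw [hi1]
          exact ⟨(xlt i (by omega) (i-1) (by omega)).le, le_refl _⟩
        have hmemn' : x i ∈ Ioc (x (i-1)) (x i) :=
          ⟨xlt i (by omega) (i-1) (by omega), le_refl _⟩
        have hsub : Ioc (x (i-1)) (x i) ⊆ Icc (x (i-1)) (x (i-1+1)) := by
          rw [hi1]; exact Ioc_subset_Icc_self
        have h1 : HasDerivWithinAt (ψ (i-1) k) (ψ (i-1) (k+1) (x i))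
            (Ioc (x (i-1)) (x i)) (x i) :=
          (ψdiff (i-1) (by omega) k (x i) hmemn).mono hsub
        have h2 : HasDerivWithinAt (D k) (ψ (i-1) (k+1) (x i)) (Ioc (x (i-1)) (x i)) (x i) :=
          h1.congr (fun t ht => DeqL k i (by omega) (le_refl _) ht)
            (DeqL k i (by omega) (le_refl _) hmemn')
        have h4 : D (k+1) (x i) = ψ (i-1) (k+1) (x i) := DeqL (k+1) i (by omega) (le_refl _) hmemn'
        rw [h4]
        exact h2.mono_of_mem_nhdsWithin memR
      · -- 0 < i < n
        have hi1 : i - 1 + 1 = i := by omega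
        have hmemn : x i ∈ Icc (x (i-1)) (x (i-1+1)) := by
          rw [hi1]
          exact ⟨(xlt i (by omega) (i-1) (by omega)).le, le_refl _⟩
        have hmemn' : x i ∈ Ioc (x (i-1)) (x i) :=
          ⟨xlt i (by omega) (i-1) (by omega), le_refl _⟩
        have hmemr : x i ∈ Icc (x i) (x (i+1)) := ⟨le_refl _, (hx i hiltn).le⟩
        have hsub : Ioc (x (i-1)) (x i) ⊆ Icc (x (i-1)) (x (i-1+1)) := by
          rw [hi1]; exact Ioc_subset_Icc_self
        have hL : HasDerivWithinAt (D k) (ψ (i-1) (k+1) (x i)) (Ioc (x (i-1)) (x i)) (x i) := by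
          have h1 : HasDerivWithinAt (ψ (i-1) k) (ψ (i-1) (k+1) (x i))
              (Ioc (x (i-1)) (x i)) (x i) :=
            (ψdiff (i-1) (by omega) k (x i) hmemn).mono hsub
          exact h1.congr (fun t ht => DeqL k i (by omega) (by omega) ht)
            (DeqL k i (by omega) (by omega) hmemn')
        have jm := jetmatch (i-1) (by omega) (k+1) hk
        rw [hi1] at jm
        have hR : HasDerivWithinAt (D k) (ψ (i-1) (k+1) (x i)) (Icc (x i) (x (i+1))) (x i) := by
          have h1 : HasDerivWithinAt (ψ i k) (ψ i (k+1) (x i)) (Icc (x i) (x (i+1))) (x i) :=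
            ψdiff i hiltn k (x i) hmemr
          have h2 := h1.congr (fun t ht => DeqR k (by omega) i hiltn ht)
            (DeqR k (by omega) i hiltn hmemr)
          rwa [← jm] at h2
        have h4 : D (k+1) (x i) = ψ (i-1) (k+1) (x i) :=
          DeqL (k+1) i (by omega) (by omega) hmemn'
        rw [h4]
        exact (hL.union hR).mono_of_mem_nhdsWithin (memM i hipos hiltn)
    · have hymem : y ∈ Icc (x j) (x (j+1)) := ⟨hj1.le, hj2.le⟩
      have hnhds : Icc (x j) (x (j+1)) ∈ 𝓝 y := Icc_mem_nhds hj1 hj2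
      have h1 : HasDerivAt (ψ j k) (ψ j (k+1) y) y := (ψdiff j hjn k y hymem).hasDerivAt hnhds
      have hev : D k =ᶠ[𝓝 y] ψ j k := by
        filter_upwards [isOpen_Ioo.mem_nhds (⟨hj1, hj2⟩ : y ∈ Ioo (x j) (x (j+1)))] with t ht
        exact glue_eval k j (by omega) t (Or.inr ht.1) ht.2.le
      have h2 : HasDerivAt (D k) (ψ j (k+1) y) y := h1.congr_of_eventuallyEq hev
      have h3 : D (k+1) y = ψ j (k+1) y := glue_eval (k+1) j (by omega) y (Or.inr hj1) hj2.le
      rw [h3]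
      exact h2.hasDerivWithinAt
  have hDcont : ∀ k ≤ N, ContinuousOn (D k) big := by
    intro k hk y hy
    rcases cover y hy with ⟨i, hin, rfl⟩ | ⟨j, hjn, hj1, hj2⟩
    · rcases Nat.eq_zero_or_pos i with rfl | hipos
      · have h1 : ContinuousWithinAt (D k) (Icc (x 0) (x 1)) (x 0) :=
          ((ψcont 0 hn k) (x 0) hmem0).congr (fun t ht => DeqR k hk 0 hn ht)
            (DeqR k hk 0 hn hmem0)
        exact h1.mono_of_mem_nhdsWithin memL
      rcases eq_or_lt_of_le hin with rfl | hiltn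
      · have hi1 : i - 1 + 1 = i := by omega
        have hmemn : x i ∈ Icc (x (i-1)) (x (i-1+1)) := by
          rw [hi1]
          exact ⟨(xlt i (by omega) (i-1) (by omega)).le, le_refl _⟩
        have hmemn' : x i ∈ Ioc (x (i-1)) (x i) :=
          ⟨xlt i (by omega) (i-1) (by omega), le_refl _⟩
        have hsub : Ioc (x (i-1)) (x i) ⊆ Icc (x (i-1)) (x (i-1+1)) := by
          rw [hi1]; exact Ioc_subset_Icc_self
        have h1 : ContinuousWithinAt (ψ (i-1) k) (Ioc (x (i-1)) (x i)) (x i) :=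
          ((ψcont (i-1) (by omega) k) (x i) hmemn).mono hsub
        have h2 : ContinuousWithinAt (D k) (Ioc (x (i-1)) (x i)) (x i) :=
          h1.congr (fun t ht => DeqL k i (by omega) (le_refl _) ht)
            (DeqL k i (by omega) (le_refl _) hmemn')
        exact h2.mono_of_mem_nhdsWithin memR
      · have hi1 : i - 1 + 1 = i := by omega
        have hmemn : x i ∈ Icc (x (i-1)) (x (i-1+1)) := by
          rw [hi1]
          exact ⟨(xlt i (by omega) (i-1) (by omega)).le, le_refl _⟩
        have hmemn' : x i ∈ Ioc (x (i-1)) (x i) :=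
          ⟨xlt i (by omega) (i-1) (by omega), le_refl _⟩
        have hmemr : x i ∈ Icc (x i) (x (i+1)) := ⟨le_refl _, (hx i hiltn).le⟩
        have hsub : Ioc (x (i-1)) (x i) ⊆ Icc (x (i-1)) (x (i-1+1)) := by
          rw [hi1]; exact Ioc_subset_Icc_self
        have hL : ContinuousWithinAt (D k) (Ioc (x (i-1)) (x i)) (x i) := by
          have h1 : ContinuousWithinAt (ψ (i-1) k) (Ioc (x (i-1)) (x i)) (x i) :=
            ((ψcont (i-1) (by omega) k) (x i) hmemn).mono hsub
          exact h1.congr (fun t ht => DeqL k i (by omega) (by omega) ht)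
            (DeqL k i (by omega) (by omega) hmemn')
        have hR : ContinuousWithinAt (D k) (Icc (x i) (x (i+1))) (x i) :=
          ((ψcont i hiltn k) (x i) hmemr).congr (fun t ht => DeqR k hk i hiltn ht)
            (DeqR k hk i hiltn hmemr)
        exact (hL.union hR).mono_of_mem_nhdsWithin (memM i hipos hiltn)
    · have hymem : y ∈ Icc (x j) (x (j+1)) := ⟨hj1.le, hj2.le⟩
      have hnhds : Icc (x j) (x (j+1)) ∈ 𝓝 y := Icc_mem_nhds hj1 hj2
      have h1 : ContinuousAt (ψ j k) y := ((ψcont j hjn k) y hymem).continuousAt hnhds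
      have hev : D k =ᶠ[𝓝 y] ψ j k := by
        filter_upwards [isOpen_Ioo.mem_nhds (⟨hj1, hj2⟩ : y ∈ Ioo (x j) (x (j+1)))] with t ht
        exact glue_eval k j (by omega) t (Or.inr ht.1) ht.2.le
      exact (h1.congr_of_eventuallyEq hev).continuousWithinAt
  have hCDm : ∀ m : ℕ, ∀ k : ℕ, k + m ≤ N → ContDiffOn ℝ (m:ℕ) (D k) big := by
    intro m
    induction m with
    | zero =>
      intro k hk
      have := hDcont k (by omega)
      exact_mod_cast contDiffOn_zero.mpr this
    | succ m ih =>
      intro k hk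
      have hcast : ((m+1 : ℕ) : WithTop ℕ∞) = (m : ℕ) + 1 := by push_cast; rfl
      rw [hcast, contDiffOn_succ_iff_derivWithin hud]
      refine ⟨fun y hy => (hDderiv k (by omega) y hy).differentiableWithinAt, ?_, ?_⟩
      · intro hω
        exact absurd hω (by simp)
      · apply ContDiffOn.congr (ih (k+1) (by omega))
        intro y hy
        exact (hDderiv k (by omega) y hy).derivWithin (hud y hy)
  have hiter : ∀ k ≤ N, ∀ y ∈ big, iteratedDerivWithin k (D 0) big y = D k y := by
    intro k
    induction k with
    | zero => intro _ y _; simp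
    | succ k ih =>
      intro hk y hy
      rw [iteratedDerivWithin_succ]
      rw [derivWithin_congr (fun t ht => ih (by omega) t ht) (ih (by omega) y hy)]
      exact (hDderiv k hk y hy).derivWithin (hud y hy)
  refine ⟨D 0, hCDm N 0 (by omega), ?_⟩
  intro k hkn j hkj hjn y hy
  have hkN : k ≤ N := by omega
  have hybig : y ∈ big :=
    ⟨le_trans (xle 0 j (by omega) (by omega)) hy.1,
      le_trans hy.2 (xle (j+1) n (by omega) (le_refl _))⟩
  rw [hiter k hkN y hybig, DeqR k hkN j hjn hy, ψadd j hjn k y hy, add_sub_cancel_left]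
  exact hgcsmall j k hkj y hy.2
end
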